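/- arXiv:2212.11954 — 11 statements merged into one kernel-verified Lean document; each statement's English description precedes it below -/
import Mathlib

section
/- Let L be a finite distributive lattice and let α, β, γ, δ : L → ℝ≥0 be nonnegative functions satisfying α(x)·β(y) ≤ γ(x ∨ y)·δ(x ∧ y) for all x, y ∈ L. Then for all subsets X, Y ⊆ L, we have α(X)·β(Y) ≤ γ(X ∨ Y)·δ(X ∧ Y), where for a function ρ and subset S we write ρ(S) = Σ_{s∈S} ρ(s), and X ∨ Y = {x ∨ y : x ∈ X, y ∈ Y}, X ∧ Y = {x ∧ y : x ∈ X, y ∈ Y}. -/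
theorem ahlswede_daykin_general {L : Type*} [DistribLattice L] [DecidableEq L]
    (α β γ δ : L → NNReal)
    (h : ∀ x y : L, α x * β y ≤ γ (x ⊔ y) * δ (x ⊓ y))
    (X Y : Finset L) :
    (∑ x ∈ X, α x) * (∑ y ∈ Y, β y) ≤
      (∑ z ∈ Finset.image₂ (· ⊔ ·) X Y, γ z) *
        (∑ z ∈ Finset.image₂ (· ⊓ ·) X Y, δ z) := by
  rw [mul_comm (∑ z ∈ _, γ z)]
  exact four_functions_theorem α β δ γ (fun _ ↦ zero_le) (fun _ ↦ zero_le)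
    (fun _ ↦ zero_le) (fun _ ↦ zero_le)
    (fun x y ↦ (h x y).trans_eq (mul_comm _ _)) X Y

/-- **Ahlswede–Daykin (four functions) inequality.** -/
theorem ahlswede_daykin {L : Type*} [DistribLattice L] [Fintype L] [DecidableEq L]
    (α β γ δ : L → NNReal)
    (h : ∀ x y : L, α x * β y ≤ γ (x ⊔ y) * δ (x ⊓ y))
    (X Y : Finset L) :
    (∑ x ∈ X, α x) * (∑ y ∈ Y, β y) ≤
      (∑ z ∈ Finset.image₂ (· ⊔ ·) X Y, γ z) *
        (∑ z ∈ Finset.image₂ (· ⊓ ·) X Y, δ z) :=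
  ahlswede_daykin_general α β γ δ h X Y
end

section
/- Let L be a finite distributive lattice, let q₁,…,q_ℓ be variables and let r₁,…,r_ℓ : L → ℕ be modular functions, i.e., r_i(x) + r_i(y) = r_i(x∨y) + r_i(x∧y) for all x,y ∈ L. For ρ : L → ℝ≥0 and X ⊆ L, set ρ_{⟨q,r⟩}(X) := Σ_{x∈X} ρ(x)·q₁^{r₁(x)}⋯q_ℓ^{r_ℓ(x)}, a polynomial with nonnegative coefficients. If α(x)·β(y) ≤ γ(x∨y)·δ(x∧y) for all x,y ∈ L, then for all X, Y ⊆ L the polynomial γ_{⟨q,r⟩}(X ∨ Y)·δ_{⟨q,r⟩}(X ∧ Y) − α_{⟨q,r⟩}(X)·β_{⟨q,r⟩}(Y) has all nonnegative coefficients. -/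
/-! The coefficient of `q^d` in `ρ_{⟨q,r⟩}(U) · σ_{⟨q,r⟩}(V)` is the sum of `ρ(x) σ(y)` over the
pairs `(x, y) ∈ U × V` with `r(x) + r(y) = d`. By modularity `r(x) + r(y) = r(x ⊔ y) + r(x ⊓ y)`,
so these sums split into fibres of pairs with a fixed join `T` and meet `B`, and it suffices to
compare fibres. In a distributive lattice the pairs with join `T` and meet `B` form a sublattice of
`L × Lᵒᵈ`; the four functions theorem there, applied to the fibre of `X × Y` and the transposed
fibre of `Y × X`, gives `S² ≤ S'²` for the fibre sums `S` of `αβ` over `X × Y` and `S'` of `γδ`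
over `(X ∨ Y) × (X ∧ Y)`. -/

open MvPolynomial

/-- The weighted sum `ρ_{⟨q,r⟩}(X) = Σ_{x∈X} ρ(x)·q₁^{r₁(x)}⋯q_ℓ^{r_ℓ(x)}`. -/
noncomputable def wSum {L : Type*} {ℓ : ℕ} (r : Fin ℓ → L → ℕ) (ρ : L → NNReal)
    (X : Finset L) : MvPolynomial (Fin ℓ) ℝ :=
  ∑ x ∈ X, MvPolynomial.C (ρ x : ℝ) * ∏ i, MvPolynomial.X i ^ r i x

open Finset OrderDual
open scoped FinsetFamily

section Lattice

variable {L : Type*} [DistribLattice L]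

theorem sup_sup_inf_eq_and_sup_inf_inf_eq {x y u v T B : L}
    (hxy : x ⊔ y = T) (hxy' : x ⊓ y = B) (huv : u ⊔ v = T) (huv' : u ⊓ v = B) :
    (x ⊔ u) ⊔ (y ⊓ v) = T ∧ (x ⊔ u) ⊓ (y ⊓ v) = B := by
  have hxT : x ≤ T := hxy ▸ le_sup_left
  have huT : u ≤ T := huv ▸ le_sup_left
  have hBy : B ≤ y := hxy' ▸ inf_le_right
  have hBv : B ≤ v := huv' ▸ inf_le_right
  constructor
  · rw [sup_inf_left, sup_right_comm, hxy, sup_assoc, huv, sup_eq_left.2 huT,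
      sup_eq_right.2 hxT, inf_idem]
  · rw [inf_sup_right, ← inf_assoc, hxy', inf_left_comm, huv', inf_eq_left.2 hBv,
      inf_eq_right.2 hBy, sup_idem]

def complementaryPairs (q : L × L) : Sublattice (L × Lᵒᵈ) where
  carrier := {a | (a.1 ⊔ ofDual a.2, a.1 ⊓ ofDual a.2) = q}
  supClosed' := by
    rintro ⟨x, y⟩ hxy ⟨u, v⟩ huv
    subst hxy
    simp only [Set.mem_ofPred_eq, Prod.mk.injEq] at huv ⊢
    exact sup_sup_inf_eq_and_sup_inf_inf_eq rfl rfl huv.1 huv.2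
  infClosed' := by
    rintro ⟨x, y⟩ hxy ⟨u, v⟩ huv
    subst hxy
    simp only [Set.mem_ofPred_eq, Prod.mk.injEq] at huv ⊢
    exact (sup_sup_inf_eq_and_sup_inf_inf_eq (L := Lᵒᵈ) rfl rfl huv.2 huv.1).symm

theorem mem_complementaryPairs {q : L × L} {a : L × Lᵒᵈ} :
    a ∈ complementaryPairs q ↔ (a.1 ⊔ ofDual a.2, a.1 ⊓ ofDual a.2) = q :=
  Iff.rfl

end Lattice

section PairFiber

variable {L : Type*} [DistribLattice L] [DecidableEq L]

def pairFiber (U V : Finset L) (q : L × L) : Finset (L × L) :=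
  {p ∈ U ×ˢ V | (p.1 ⊔ p.2, p.1 ⊓ p.2) = q}

theorem sum_pairFiber_comm {M : Type*} [AddCommMonoid M] (U V : Finset L) (q : L × L)
    (f : L → L → M) :
    ∑ p ∈ pairFiber U V q, f p.1 p.2 = ∑ p ∈ pairFiber V U q, f p.2 p.1 :=
  sum_equiv (Equiv.prodComm L L) (by simp [pairFiber, sup_comm, inf_comm, and_comm])
    fun _ _ => rfl

theorem sum_pairFiber_eq_sum_filter {M : Type*} [AddCommMonoid M] (U V : Finset L)
    (t : Finset (L × L)) (f : L × L → M) :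
    ∑ q ∈ t, ∑ p ∈ pairFiber U V q, f p = ∑ p ∈ U ×ˢ V with (p.1 ⊔ p.2, p.1 ⊓ p.2) ∈ t, f p :=
  sum_fiberwise_eq_sum_filter _ _ _ _

def dualPairFiber (U V : Finset L) (q : L × L) : Finset (L × Lᵒᵈ) :=
  (pairFiber U V q).map ((Equiv.refl L).prodCongr toDual).toEmbedding

variable {U V U' V' : Finset L} {q : L × L} {a : L × Lᵒᵈ}

theorem mem_dualPairFiber :
    a ∈ dualPairFiber U V q ↔ a.1 ∈ U ∧ ofDual a.2 ∈ V ∧ a ∈ complementaryPairs q := by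
  simp [dualPairFiber, pairFiber, mem_map_equiv, mem_complementaryPairs, and_assoc]

theorem infs_dualPairFiber_subset :
    dualPairFiber U V q ⊼ dualPairFiber U' V' q ⊆ dualPairFiber (U ⊼ U') (V ⊻ V') q := by
  intro c hc
  obtain ⟨a, ha, b, hb, rfl⟩ := mem_infs.1 hc
  rw [mem_dualPairFiber] at *
  exact ⟨inf_mem_infs ha.1 hb.1, sup_mem_sups ha.2.1 hb.2.1, Sublattice.inf_mem ha.2.2 hb.2.2⟩

theorem sups_dualPairFiber_subset :
    dualPairFiber U V q ⊻ dualPairFiber U' V' q ⊆ dualPairFiber (U ⊻ U') (V ⊼ V') q := by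
  intro c hc
  obtain ⟨a, ha, b, hb, rfl⟩ := mem_sups.1 hc
  rw [mem_dualPairFiber] at *
  exact ⟨sup_mem_sups ha.1 hb.1, inf_mem_infs ha.2.1 hb.2.1, Sublattice.sup_mem ha.2.2 hb.2.2⟩

variable {𝕜 : Type*} [CommSemiring 𝕜] [LinearOrder 𝕜] [IsStrictOrderedRing 𝕜] [ExistsAddOfLE 𝕜]
  {α β γ δ : L → 𝕜}

theorem sum_pairFiber_le (hα : 0 ≤ α) (hβ : 0 ≤ β) (hγ : 0 ≤ γ) (hδ : 0 ≤ δ)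
    (h : ∀ x y, α x * β y ≤ γ (x ⊔ y) * δ (x ⊓ y)) (X Y : Finset L) (q : L × L) :
    ∑ p ∈ pairFiber X Y q, α p.1 * β p.2 ≤ ∑ p ∈ pairFiber (X ⊻ Y) (X ⊼ Y) q, γ p.1 * δ p.2 := by
  set S := ∑ p ∈ pairFiber X Y q, α p.1 * β p.2
  set S' := ∑ p ∈ pairFiber (X ⊻ Y) (X ⊼ Y) q, γ p.1 * δ p.2
  have hαβ : ∀ x y, 0 ≤ α x * β y := fun x y => mul_nonneg (hα x) (hβ y)
  have hγδ : ∀ x y, 0 ≤ γ x * δ y := fun x y => mul_nonneg (hγ x) (hδ y)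
  have hpair (a b : L × Lᵒᵈ) :
      α a.1 * β (ofDual a.2) * (α (ofDual b.2) * β b.1) ≤
        γ (ofDual (a ⊓ b).2) * δ (a ⊓ b).1 * (γ (a ⊔ b).1 * δ (ofDual (a ⊔ b).2)) := by
    calc _ = α a.1 * β b.1 * (α (ofDual b.2) * β (ofDual a.2)) := by ring
      _ ≤ γ (a.1 ⊔ b.1) * δ (a.1 ⊓ b.1) *
            (γ (ofDual b.2 ⊔ ofDual a.2) * δ (ofDual b.2 ⊓ ofDual a.2)) :=
          mul_le_mul (h _ _) (h _ _) (hαβ _ _) (hγδ _ _)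
      _ = _ := by
        simp only [Prod.fst_inf, Prod.snd_inf, Prod.fst_sup, Prod.snd_sup, _root_.ofDual_inf,
          _root_.ofDual_sup, sup_comm (ofDual b.2), inf_comm (ofDual b.2)]
        ring
  have key := four_functions_theorem (fun a : L × Lᵒᵈ => α a.1 * β (ofDual a.2))
    (fun a => α (ofDual a.2) * β a.1) (fun a => γ (ofDual a.2) * δ a.1)
    (fun a => γ a.1 * δ (ofDual a.2)) (fun _ => hαβ _ _) (fun _ => hαβ _ _)
    (fun _ => hγδ _ _) (fun _ => hγδ _ _) hpair (dualPairFiber X Y q) (dualPairFiber Y X q)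
  have h₁ : ∑ a ∈ dualPairFiber X Y q, α a.1 * β (ofDual a.2) = S := sum_map _ _ _
  have h₂ : ∑ a ∈ dualPairFiber Y X q, α (ofDual a.2) * β a.1 = S := by
    rw [dualPairFiber, sum_map]
    exact (sum_pairFiber_comm X Y q fun x y => α x * β y).symm
  have h₃ : ∑ a ∈ dualPairFiber X Y q ⊼ dualPairFiber Y X q, γ (ofDual a.2) * δ a.1 ≤ S' :=
    calc _ ≤ ∑ a ∈ dualPairFiber (X ⊼ Y) (Y ⊻ X) q, γ (ofDual a.2) * δ a.1 :=
          sum_le_sum_of_subset_of_nonneg infs_dualPairFiber_subset fun _ _ _ => hγδ _ _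
      _ = S' := by
          rw [dualPairFiber, sum_map, sups_comm]
          exact sum_pairFiber_comm _ _ q (fun x y => γ y * δ x)
  have h₄ : ∑ a ∈ dualPairFiber X Y q ⊻ dualPairFiber Y X q, γ a.1 * δ (ofDual a.2) ≤ S' :=
    calc _ ≤ ∑ a ∈ dualPairFiber (X ⊻ Y) (Y ⊼ X) q, γ a.1 * δ (ofDual a.2) :=
          sum_le_sum_of_subset_of_nonneg sups_dualPairFiber_subset fun _ _ _ => hγδ _ _
      _ = S' := by rw [dualPairFiber, sum_map, infs_comm]; rfl
  rw [h₁, h₂] at key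
  have hS' : 0 ≤ S' := sum_nonneg fun _ _ => hγδ _ _
  exact (mul_self_le_mul_self_iff (sum_nonneg fun _ _ => hαβ _ _) hS').2 <|
    key.trans (mul_le_mul h₃ h₄ (sum_nonneg fun _ _ => hγδ _ _) hS')

end PairFiber

section Polynomial

variable {L : Type*} {ℓ : ℕ}

noncomputable def multidegree (r : Fin ℓ → L → ℕ) (x : L) : Fin ℓ →₀ ℕ :=
  Finsupp.equivFunOnFinite.symm fun i => r i x

theorem wSum_eq_sum_monomial (r : Fin ℓ → L → ℕ) (ρ : L → NNReal) (X : Finset L) :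
    wSum r ρ X = ∑ x ∈ X, monomial (multidegree r x) (ρ x : ℝ) := by
  refine sum_congr rfl fun x _ => ?_
  rw [monomial_eq, Finsupp.prod_pow]
  rfl

theorem coeff_wSum_mul_wSum (r : Fin ℓ → L → ℕ) (ρ σ : L → NNReal) (U V : Finset L)
    (d : Fin ℓ →₀ ℕ) :
    coeff d (wSum r ρ U * wSum r σ V) =
      ↑(∑ p ∈ U ×ˢ V with multidegree r p.1 + multidegree r p.2 = d, ρ p.1 * σ p.2) := by
  simp only [wSum_eq_sum_monomial, sum_mul_sum, coeff_sum, monomial_mul, coeff_monomial,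
    NNReal.coe_sum, sum_filter, sum_product, apply_ite NNReal.toReal, NNReal.coe_mul,
    NNReal.coe_zero]

theorem multidegree_sup_add_inf [Lattice L] {r : Fin ℓ → L → ℕ}
    (hr : ∀ i, ∀ x y : L, r i x + r i y = r i (x ⊔ y) + r i (x ⊓ y)) (x y : L) :
    multidegree r (x ⊔ y) + multidegree r (x ⊓ y) = multidegree r x + multidegree r y := by
  ext i
  exact (hr i x y).symm

end Polynomial

theorem multivariate_ahlswede_daykin_general {L : Type*} [DistribLattice L] [DecidableEq L]
    {ℓ : ℕ} (r : Fin ℓ → L → ℕ)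
    (hr : ∀ i, ∀ x y : L, r i x + r i y = r i (x ⊔ y) + r i (x ⊓ y))
    (α β γ δ : L → NNReal)
    (h : ∀ x y : L, α x * β y ≤ γ (x ⊔ y) * δ (x ⊓ y))
    (X Y : Finset L) :
    ∀ d : Fin ℓ →₀ ℕ,
      0 ≤ MvPolynomial.coeff d
        (wSum r γ (Finset.image₂ (· ⊔ ·) X Y) * wSum r δ (Finset.image₂ (· ⊓ ·) X Y)
          - wSum r α X * wSum r β Y) := by
  intro d
  set deg := multidegree r
  set t := {q ∈ (X ⊻ Y) ×ˢ (X ⊼ Y) | deg q.1 + deg q.2 = d}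
  rw [coeff_sub, sub_nonneg, coeff_wSum_mul_wSum, coeff_wSum_mul_wSum, NNReal.coe_le_coe]
  calc ∑ p ∈ X ×ˢ Y with deg p.1 + deg p.2 = d, α p.1 * β p.2
      = ∑ q ∈ t, ∑ p ∈ pairFiber X Y q, α p.1 * β p.2 := by
        rw [sum_pairFiber_eq_sum_filter]
        refine sum_congr (filter_congr fun p hp => ?_) fun _ _ => rfl
        obtain ⟨hx, hy⟩ := mem_product.1 hp
        simp only [t, mem_filter, mem_product, sup_mem_sups hx hy, inf_mem_infs hx hy, true_and, deg,
          multidegree_sup_add_inf hr]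
    _ ≤ ∑ q ∈ t, ∑ p ∈ pairFiber (X ⊻ Y) (X ⊼ Y) q, γ p.1 * δ p.2 :=
        sum_le_sum fun q _ => sum_pairFiber_le (fun _ => zero_le) (fun _ => zero_le)
          (fun _ => zero_le) (fun _ => zero_le) h X Y q
    _ ≤ ∑ p ∈ (X ⊻ Y) ×ˢ (X ⊼ Y) with deg p.1 + deg p.2 = d, γ p.1 * δ p.2 := by
        rw [sum_pairFiber_eq_sum_filter]
        refine sum_le_sum_of_subset (monotone_filter_right _ fun p _ hp => ?_)
        simpa only [t, mem_filter, deg, multidegree_sup_add_inf hr] using (mem_filter.1 hp).2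

/-- **Multivariate Ahlswede–Daykin inequality.** -/
theorem multivariate_ahlswede_daykin {L : Type*} [DistribLattice L] [Fintype L] [DecidableEq L]
    {ℓ : ℕ} (r : Fin ℓ → L → ℕ)
    (hr : ∀ i, ∀ x y : L, r i x + r i y = r i (x ⊔ y) + r i (x ⊓ y))
    (α β γ δ : L → NNReal)
    (h : ∀ x y : L, α x * β y ≤ γ (x ⊔ y) * δ (x ⊓ y))
    (X Y : Finset L) :
    ∀ d : Fin ℓ →₀ ℕ,
      0 ≤ MvPolynomial.coeff d
        (wSum r γ (Finset.image₂ (· ⊔ ·) X Y) * wSum r δ (Finset.image₂ (· ⊓ ·) X Y)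
          - wSum r α X * wSum r β Y) :=
  multivariate_ahlswede_daykin_general r hr α β γ δ h X Y
end

section
/- Let P = (X, ≺) be a finite poset and let A, B ⊆ X be lower (order) ideals of P. Then e(A∪B)·e(A∩B) / (|A∪B|!·|A∩B|!) ≥ e(A)·e(B) / (|A|!·|B|!), where e(S) denotes the number of linear extensions of the subposet induced on S. -/
/-- The number of linear extensions of the subposet induced on the finset `A`:
order-preserving bijections from `A` to `{1,…,|A|}` (here `Fin A.card`). -/
noncomputable def linExtCount {α : Type*} [PartialOrder α] (A : Finset α) : ℕ :=
  Nat.card {f : {x // x ∈ A} ≃ Fin A.card //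
    ∀ a b : {x // x ∈ A}, (a : α) < (b : α) → f a < f b}

/-!
Let `T_S(N)` count the maps `α → Fin N` that are strictly monotone on `S`. For lower sets `A, B`
we have `T_A(N) T_B(N) ≤ T_{A∪B}(N) T_{A∩B}(N)`: after fibering over the values on `A ∩ B`,
the Ahlswede–Daykin four functions theorem reduces this to an injection `(y, y') ↦ (u, v)`,
where `u, v` are the pointwise min and max of `y, y'` on `A ∩ B` and `y, y'` are swapped on
`B \ A`. Lower sets make `A \ B` and `B \ A` incomparable, so `u` is strictly monotone on `A ∪ B`.

An injective strictly monotone map `S → Fin N` is a linear extension of `S` followed by one of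
the `choose N #S` order embeddings `Fin #S ↪o Fin N`, and non-injective maps are a vanishing
fraction, so `T_S(N) / N ^ card α → e(S) / #S!`. The inequality passes to the limit.
-/

open Finset Filter Topology Function

section StrictMonoOn

variable {α β : Type*} [Preorder α] [Preorder β] {f g : α → β} {s t : Set α}

theorem StrictMonoOn.union_of_isLowerSet (hs : IsLowerSet s) (ht : IsLowerSet t)
    (hfs : StrictMonoOn f s) (hft : StrictMonoOn f t) : StrictMonoOn f (s ∪ t) := by
  rintro a ha b (hb | hb) hab
  · exact hfs (hs hab.le hb) hb hab
  · exact hft (ht hab.le hb) hb hab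

theorem StrictMonoOn.of_le_of_eqOn_diff (ht : IsLowerSet t) (hf : StrictMonoOn f s)
    (hg : StrictMonoOn g t) (hle : ∀ x ∈ s, g x ≤ f x) (heq : Set.EqOn g f (s \ t)) :
    StrictMonoOn g s := by
  intro a ha b hb hab
  by_cases hbt : b ∈ t
  · exact hg (ht hab.le hbt) hbt hab
  · calc g a ≤ f a := hle a ha
      _ < f b := hf ha hb hab
      _ = g b := (heq ⟨hb, hbt⟩).symm

end StrictMonoOn

section LinearOrder

variable {α β : Type*} [Preorder α] [LinearOrder β] {f g : α → β} {s : Set α}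

theorem StrictMonoOn.min (hf : StrictMonoOn f s) (hg : StrictMonoOn g s) :
    StrictMonoOn (fun x => min (f x) (g x)) s :=
  fun _ ha _ hb hab => min_lt_min (hf ha hb hab) (hg ha hb hab)

theorem StrictMonoOn.max (hf : StrictMonoOn f s) (hg : StrictMonoOn g s) :
    StrictMonoOn (fun x => max (f x) (g x)) s :=
  fun _ ha _ hb hab => max_lt_max (hf ha hb hab) (hg ha hb hab)

end LinearOrder

namespace Fishburn

variable {α β : Type*} [DecidableEq α] [LinearOrder β] (A B : Finset α)

def glueInf (y y' : α → β) (x : α) : β :=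
  if x ∈ A ∩ B then min (y x) (y' x) else if x ∈ B then y' x else y x

def glueSup (y y' : α → β) (x : α) : β :=
  if x ∈ A ∩ B then max (y x) (y' x) else if x ∈ B then y x else y' x

variable {A B}

theorem eq_of_glue_eq {y₁ y₁' y₂ y₂' : α → β} (h : Set.EqOn y₁ y₂ ↑(A ∩ B))
    (h' : Set.EqOn y₁' y₂' ↑(A ∩ B)) (hinf : glueInf A B y₁ y₁' = glueInf A B y₂ y₂')
    (hsup : glueSup A B y₁ y₁' = glueSup A B y₂ y₂') : y₁ = y₂ ∧ y₁' = y₂' := by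
  constructor <;> funext x <;> by_cases hx : x ∈ A ∩ B
  · exact h hx
  · by_cases hxB : x ∈ B
    · simpa [glueSup, hx, hxB] using congrFun hsup x
    · simpa [glueInf, hx, hxB] using congrFun hinf x
  · exact h' hx
  · by_cases hxB : x ∈ B
    · simpa [glueInf, hx, hxB] using congrFun hinf x
    · simpa [glueSup, hx, hxB] using congrFun hsup x

variable [Preorder α] {y y' : α → β}

theorem strictMonoOn_glueSup (hy : StrictMonoOn y A) (hy' : StrictMonoOn y' B) :
    StrictMonoOn (glueSup A B y y') ↑(A ∩ B) := by
  refine ((hy.mono ?_).max (hy'.mono ?_)).congr fun x hx => ?_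
  · exact coe_subset.2 inter_subset_left
  · exact coe_subset.2 inter_subset_right
  · simp [glueSup, mem_coe.1 hx]

theorem strictMonoOn_glueInf (hA : IsLowerSet (A : Set α)) (hB : IsLowerSet (B : Set α))
    (hy : StrictMonoOn y A) (hy' : StrictMonoOn y' B) :
    StrictMonoOn (glueInf A B y y') ↑(A ∪ B) := by
  have hI : IsLowerSet (↑(A ∩ B) : Set α) := by rw [coe_inter]; exact hA.inter hB
  have hmin : StrictMonoOn (glueInf A B y y') ↑(A ∩ B) := by
    refine ((hy.mono ?_).min (hy'.mono ?_)).congr fun x hx => ?_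
    · exact coe_subset.2 inter_subset_left
    · exact coe_subset.2 inter_subset_right
    · simp [glueInf, mem_coe.1 hx]
  rw [coe_union]
  refine .union_of_isLowerSet hA hB (hy.of_le_of_eqOn_diff hI hmin ?_ ?_)
    (hy'.of_le_of_eqOn_diff hI hmin ?_ ?_)
  · intro x hx
    by_cases hxB : x ∈ B <;> simp [glueInf, mem_coe.1 hx, hxB]
  · rintro x ⟨hx, hxI⟩
    simp_all [glueInf]
  · intro x hx
    by_cases hxA : x ∈ A <;> simp [glueInf, mem_coe.1 hx, hxA]
  · rintro x ⟨hx, hxI⟩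
    simp_all [glueInf]

section Counting

variable [Fintype α]

noncomputable def fiberCard (S I : Finset α) (N : ℕ) (z : I → Fin N) : ℕ :=
  Nat.card {y : α → Fin N // StrictMonoOn y S ∧ I.restrict y = z}

theorem card_strictMonoOn_eq_sum_fiberCard (S I : Finset α) (N : ℕ) :
    Nat.card {y : α → Fin N // StrictMonoOn y S} = ∑ z, fiberCard S I N z := by
  let e : {y : α → Fin N // StrictMonoOn y S} ≃
      Σ z : I → Fin N, {y : α → Fin N // StrictMonoOn y S ∧ I.restrict y = z} :=
    { toFun := fun y => ⟨I.restrict y.1, y.1, y.2, rfl⟩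
      invFun := fun p => ⟨p.2.1, p.2.2.1⟩
      left_inv := fun _ => rfl
      right_inv := by rintro ⟨z, y, hy, rfl⟩; rfl }
  rw [Nat.card_congr e, Nat.card_sigma]
  rfl

theorem fiberCard_mul_le (hA : IsLowerSet (A : Set α)) (hB : IsLowerSet (B : Set α)) {N : ℕ}
    (z w : ↥(A ∩ B) → Fin N) :
    fiberCard A (A ∩ B) N z * fiberCard B (A ∩ B) N w ≤
      fiberCard (A ∪ B) (A ∩ B) N (z ⊓ w) * fiberCard (A ∩ B) (A ∩ B) N (z ⊔ w) := by
  simp only [fiberCard, ← Nat.card_prod]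
  refine Nat.card_le_card_of_injective
    (fun p => (⟨glueInf A B p.1.1 p.2.1, strictMonoOn_glueInf hA hB p.1.2.1 p.2.2.1, ?_⟩,
      ⟨glueSup A B p.1.1 p.2.1, strictMonoOn_glueSup p.1.2.1 p.2.2.1, ?_⟩)) ?_
  · funext i
    simp [glueInf, i.2, ← p.1.2.2, ← p.2.2.2]
  · funext i
    simp [glueSup, i.2, ← p.1.2.2, ← p.2.2.2]
  · rintro ⟨⟨y₁, _, hz₁⟩, ⟨y₁', _, hw₁⟩⟩ ⟨⟨y₂, _, hz₂⟩, ⟨y₂', _, hw₂⟩⟩ h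
    simp only [Prod.mk.injEq, Subtype.mk.injEq] at h
    have hy : Set.EqOn y₁ y₂ ↑(A ∩ B) := fun x hx => by
      simpa using congrFun (hz₁.trans hz₂.symm) ⟨x, hx⟩
    have hy' : Set.EqOn y₁' y₂' ↑(A ∩ B) := fun x hx => by
      simpa using congrFun (hw₁.trans hw₂.symm) ⟨x, hx⟩
    obtain ⟨rfl, rfl⟩ := eq_of_glue_eq hy hy' h.1 h.2
    rfl

theorem card_strictMonoOn_mul_le (hA : IsLowerSet (A : Set α)) (hB : IsLowerSet (B : Set α))
    (N : ℕ) :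
    Nat.card {y : α → Fin N // StrictMonoOn y A} * Nat.card {y : α → Fin N // StrictMonoOn y B} ≤
      Nat.card {y : α → Fin N // StrictMonoOn y ↑(A ∪ B)} *
        Nat.card {y : α → Fin N // StrictMonoOn y ↑(A ∩ B)} := by
  simp only [card_strictMonoOn_eq_sum_fiberCard _ (A ∩ B)]
  exact four_functions_theorem_univ _ _ _ _ (fun _ => Nat.zero_le _) (fun _ => Nat.zero_le _)
    (fun _ => Nat.zero_le _) (fun _ => Nat.zero_le _) (fiberCard_mul_le hA hB)

theorem card_strictMonoOn_eq (S : Finset α) (N : ℕ) :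
    Nat.card {y : α → Fin N // StrictMonoOn y S} =
      Nat.card {g : S → Fin N // StrictMono g} * N ^ (Fintype.card α - #S) := by
  have e : {y : α → Fin N // StrictMonoOn y S} ≃
      {g : S → Fin N // StrictMono g} × ({x // x ∉ S} → Fin N) :=
    (Equiv.subtypeEquiv (Equiv.piEquivPiSubtypeProd (· ∈ S) fun _ => Fin N)
      fun _ => Set.strictMonoOn_iff_strictMono).trans Equiv.prodSubtypeFstEquivSubtypeProd
  rw [Nat.card_congr e, Nat.card_prod, Nat.card_fun, Nat.card_eq_fintype_card (α := {x // x ∉ S}),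
    Fintype.card_subtype_compl, Fintype.card_coe, Nat.card_eq_fintype_card (α := Fin N),
    Fintype.card_fin]

end Counting

section InjectiveStrictMono

variable {ι : Type*} [Fintype ι] [Preorder ι] {k : ℕ}

theorem card_injective_strictMono (hk : Fintype.card ι = k) (N : ℕ) :
    Nat.card {g : ι → Fin N // Injective g ∧ StrictMono g} =
      N.choose k * Nat.card {f : ι ≃ Fin k // StrictMono f} := by
  classical
  let Φ : {T : Finset (Fin N) // #T = k} × {f : ι ≃ Fin k // StrictMono f} →
      {g : ι → Fin N // Injective g ∧ StrictMono g} := fun p =>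
    ⟨p.1.1.orderEmbOfFin p.1.2 ∘ p.2.1,
      (p.1.1.orderEmbOfFin p.1.2).injective.comp p.2.1.injective,
      (p.1.1.orderEmbOfFin p.1.2).strictMono.comp p.2.2⟩
  have hΦ : Bijective Φ := by
    constructor
    · rintro ⟨⟨T, hT⟩, f, hf⟩ ⟨⟨T', hT'⟩, f', hf'⟩ h
      have hg := congrArg Subtype.val h
      have hTT : T = T' := by
        have := congrArg Set.range hg
        simp only [Φ, Set.range_comp, f.surjective.range_eq, f'.surjective.range_eq,
          Set.image_univ, range_orderEmbOfFin] at this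
        exact_mod_cast this
      subst hTT
      obtain rfl : f = f' := Equiv.ext fun i => (T.orderEmbOfFin hT).injective (congrFun hg i)
      rfl
    · rintro ⟨g, hinj, hmono⟩
      have hT : #(univ.image g) = k := by rw [card_image_of_injective _ hinj, card_univ, hk]
      let f : ι → Fin k := fun i => ((univ.image g).orderIsoOfFin hT).symm
        ⟨g i, mem_image_of_mem g (mem_univ i)⟩
      have hf : Injective f := fun i j hij => hinj (by simpa [f] using hij)
      have hfbij : Bijective f :=
        (Fintype.bijective_iff_injective_and_card f).2 ⟨hf, by simp [hk]⟩
      refine ⟨(⟨_, hT⟩, ⟨Equiv.ofBijective f hfbij, fun i j hij => ?_⟩), ?_⟩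
      · exact ((univ.image g).orderIsoOfFin hT).symm.strictMono (hmono hij)
      · refine Subtype.ext (funext fun i => ?_)
        change (univ.image g).orderEmbOfFin hT (f i) = g i
        rw [← coe_orderIsoOfFin_apply, OrderIso.apply_symm_apply]
  rw [← Nat.card_eq_of_bijective Φ hΦ, Nat.card_prod, Nat.card_eq_fintype_card,
    Fintype.card_finset_len, Fintype.card_fin]

theorem card_strictMono_add_descFactorial_le (hk : Fintype.card ι = k) (N : ℕ) :
    Nat.card {g : ι → Fin N // StrictMono g} + N.descFactorial k ≤
      Nat.card {g : ι → Fin N // Injective g ∧ StrictMono g} + N ^ k := by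
  classical
  have hinj : Nat.card {g : ι → Fin N // Injective g} = N.descFactorial k := by
    rw [Nat.card_congr (Equiv.subtypeInjectiveEquivEmbedding _ _), Nat.card_eq_fintype_card,
      Fintype.card_embedding_eq, Fintype.card_fin, hk]
  have hall : #(univ : Finset (ι → Fin N)) = N ^ k := by simp [hk]
  rw [← hinj, ← hall]
  simp only [Nat.card_eq_fintype_card, Fintype.card_subtype]
  rw [← card_union_add_card_inter, add_comm, filter_and, inter_comm]
  exact Nat.add_le_add_left (card_le_univ _) _

theorem tendsto_card_strictMono_div_pow (hk : Fintype.card ι = k) :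
    Tendsto (fun N : ℕ => (Nat.card {g : ι → Fin N // StrictMono g} : ℝ) / N ^ k) atTop
      (𝓝 (Nat.card {f : ι ≃ Fin k // StrictMono f} / k.factorial)) := by
  set c : ℝ := Nat.card {f : ι ≃ Fin k // StrictMono f} / k.factorial
  set d : ℕ → ℝ := fun N => N.descFactorial k / N ^ k
  have hpos : ∀ᶠ N : ℕ in atTop, (0 : ℝ) < N ^ k :=
    (eventually_ge_atTop 1).mono fun N hN => by positivity
  have hd : Tendsto d atTop (𝓝 1) :=
    (Asymptotics.isEquivalent_iff_tendsto_one (hpos.mono fun _ h => h.ne'))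
      |>.1 (isEquivalent_descFactorial k)
  have hinj : ∀ N : ℕ,
      (Nat.card {g : ι → Fin N // Injective g ∧ StrictMono g} : ℝ) / N ^ k = d N * c := by
    intro N
    have hchoose : (N.descFactorial k : ℝ) = k.factorial * N.choose k := by
      exact_mod_cast N.descFactorial_eq_factorial_mul_choose k
    rw [card_injective_strictMono hk, Nat.cast_mul]
    simp only [d, c, hchoose]
    field_simp
  refine tendsto_of_tendsto_of_tendsto_of_le_of_le' (g := fun N => d N * c)
    (h := fun N => d N * c + (1 - d N)) ?_ ?_ ?_ ?_
  · simpa using hd.mul_const c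
  · simpa using (hd.mul_const c).add ((tendsto_const_nhds (x := (1 : ℝ))).sub hd)
  · refine Eventually.of_forall fun N => ?_
    rw [← hinj]
    gcongr
    exact Nat.card_mono (Set.toFinite _) fun g hg => hg.2
  · filter_upwards [hpos] with N hN
    have hle : (Nat.card {g : ι → Fin N // StrictMono g} : ℝ) + N.descFactorial k ≤
        Nat.card {g : ι → Fin N // Injective g ∧ StrictMono g} + N ^ k := by
      exact_mod_cast card_strictMono_add_descFactorial_le hk N
    rw [← hinj, div_le_iff₀ hN]
    simp only [d]
    field_simp
    linarith

end InjectiveStrictMono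

theorem tendsto_card_strictMonoOn_div_pow {α : Type*} [Fintype α] [PartialOrder α]
    (S : Finset α) :
    Tendsto (fun N : ℕ => (Nat.card {y : α → Fin N // StrictMonoOn y S} : ℝ) /
      N ^ Fintype.card α) atTop (𝓝 (linExtCount S / (#S).factorial)) := by
  classical
  refine (tendsto_card_strictMono_div_pow (ι := S) (Fintype.card_coe S)).congr' ?_
  filter_upwards [eventually_ge_atTop 1] with N hN
  have hsplit : (N : ℝ) ^ Fintype.card α = N ^ #S * N ^ (Fintype.card α - #S) := by
    rw [← pow_add, Nat.add_sub_cancel' (card_le_univ S)]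
  rw [card_strictMonoOn_eq, Nat.cast_mul, Nat.cast_pow, hsplit,
    mul_div_mul_right _ _ (by positivity)]

end Fishburn

open Fishburn in
/-- **Fishburn's correlation inequality.** -/
theorem fishburn_inequality {α : Type*} [Fintype α] [PartialOrder α] [DecidableEq α]
    (A B : Finset α)
    (hA : ∀ x ∈ A, ∀ y, y ≤ x → y ∈ A)
    (hB : ∀ x ∈ B, ∀ y, y ≤ x → y ∈ B) :
    (linExtCount (A ∪ B) * linExtCount (A ∩ B) : ℝ) /
        ((A ∪ B).card.factorial * (A ∩ B).card.factorial) ≥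
      (linExtCount A * linExtCount B : ℝ) / (A.card.factorial * B.card.factorial) := by
  have hA' : IsLowerSet (A : Set α) := fun x y hyx hx => hA x hx y hyx
  have hB' : IsLowerSet (B : Set α) := fun x y hyx hx => hB x hx y hyx
  rw [ge_iff_le, ← div_mul_div_comm, ← div_mul_div_comm]
  refine le_of_tendsto_of_tendsto'
    ((tendsto_card_strictMonoOn_div_pow A).mul (tendsto_card_strictMonoOn_div_pow B))
    ((tendsto_card_strictMonoOn_div_pow (A ∪ B)).mul (tendsto_card_strictMonoOn_div_pow (A ∩ B)))
    fun N => ?_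
  rw [div_mul_div_comm, div_mul_div_comm]
  gcongr ?_ / _
  exact_mod_cast card_strictMonoOn_mul_le hA' hB' N
end

section
/- Let P = (X, ≺) be a finite poset. Let A, B ⊆ X be lower ideals and let C, D ⊆ X be upper ideals such that A∩C = B∩D = ∅. Set V := (A∩B) ∪ (C∪D) and W := (A∪B) ∪ (C∩D). Then ê(X−V)·ê(X−W) ≥ ê(X−A−C)·ê(X−B−D), where for a subset S ⊆ X, ê(S) := e(S)/|S|! is the number of linear extensions of the induced subposet divided by the factorial of its size. -/
/-- `ê(S) := e(S)/|S|!`. -/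
noncomputable def eHat {α : Type*} [PartialOrder α] (A : Finset α) : ℝ :=
  (linExtCount A : ℝ) / A.card.factorial

/-!
Linear extensions of a disjoint union `S ⊔ T` are the shuffles of linear extensions of `S` and of
`T`, so `ê(S ⊔ T) = ê(S) ê(T)`. Placing the sets in two copies of `X`, the inequality becomes
`e((X − A − C) ⊔ (X − B − D)) ≤ e((X − V) ⊔ (X − W))` for two sets of the same size. Linear
extensions of the first are injected into those of the second by keeping every position and moving
some points to the other copy. Points of `A` and `D` always move. A free point (outside
`A ∪ B ∪ C ∪ D`) moves when staying would break monotonicity against a point of `A` below it or of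
`D` above it, and moves propagate along comparable free points whose position intervals overlap.
A moved free point has its left position below its right one, which keeps the new labelling
monotone; the set of moved free points can be read off the new labelling, which gives
injectivity.
-/

open Finset Function Sum

theorem OrderEmbedding.strictMono_comp_iff {α γ δ : Type*} [Preorder α] [Preorder γ]
    [Preorder δ] (e : γ ↪o δ) {f : α → γ} : StrictMono (e ∘ f) ↔ StrictMono f :=
  ⟨fun h _ _ hxy => e.lt_iff_lt.1 (h hxy), e.strictMono.comp⟩

theorem strictMono_sum_iff {σ τ β : Type*} [Preorder σ] [Preorder τ] [Preorder β]
    {h : σ ⊕ τ → β} : StrictMono h ↔ StrictMono (h ∘ inl) ∧ StrictMono (h ∘ inr) := by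
  refine ⟨fun hh => ⟨hh.comp fun _ _ => inl_lt_inl_iff.2, hh.comp fun _ _ => inr_lt_inr_iff.2⟩,
    fun ⟨hl, hr⟩ => ?_⟩
  rintro (x | x) (y | y) hxy
  · exact hl (inl_lt_inl_iff.1 hxy)
  · exact absurd hxy not_inl_lt_inr
  · exact absurd hxy not_inr_lt_inl
  · exact hr (inr_lt_inr_iff.1 hxy)

section Shuffle

variable {σ τ : Type*} {m n : ℕ}

theorem card_compl_of_card_eq {s : Finset (Fin (m + n))} (hs : s.card = m) : sᶜ.card = n := by
  simp [card_compl, hs]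

/-- The interleaving of `a` and `b` in which `a` occupies the positions in `s`. -/
def shuffle (a : σ ≃ Fin m) (b : τ ≃ Fin n) (s : {s : Finset (Fin (m + n)) // s.card = m}) :
    σ ⊕ τ ≃ Fin (m + n) :=
  (a.sumCongr b).trans <|
    ((s.1.orderIsoOfFin s.2).toEquiv.sumCongr
      ((s.1ᶜ.orderIsoOfFin (card_compl_of_card_eq s.2)).toEquiv.trans
        (Equiv.subtypeEquivRight fun _ => mem_compl))).trans (Equiv.sumCompl (· ∈ s.1))

section

variable (a : σ ≃ Fin m) (b : τ ≃ Fin n) (s : {s : Finset (Fin (m + n)) // s.card = m})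

theorem shuffle_inl (x : σ) : shuffle a b s (inl x) = s.1.orderEmbOfFin s.2 (a x) := by
  simp [shuffle]

theorem shuffle_inr (y : τ) :
    shuffle a b s (inr y) = s.1ᶜ.orderEmbOfFin (card_compl_of_card_eq s.2) (b y) := by
  simp [shuffle]

theorem isLeft_shuffle_symm (i : Fin (m + n)) : ((shuffle a b s).symm i).isLeft ↔ i ∈ s.1 := by
  by_cases hi : i ∈ s.1 <;> simp [shuffle, hi]

theorem strictMono_shuffle_iff [Preorder σ] [Preorder τ] :
    StrictMono (shuffle a b s) ↔ StrictMono a ∧ StrictMono b := by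
  have hl : shuffle a b s ∘ inl = s.1.orderEmbOfFin s.2 ∘ a := funext (shuffle_inl a b s)
  have hr : shuffle a b s ∘ inr = s.1ᶜ.orderEmbOfFin (card_compl_of_card_eq s.2) ∘ b :=
    funext (shuffle_inr a b s)
  rw [strictMono_sum_iff, hl, hr, OrderEmbedding.strictMono_comp_iff,
    OrderEmbedding.strictMono_comp_iff]

end

theorem shuffle_injective :
    Injective fun x : (σ ≃ Fin m) × (τ ≃ Fin n) × {s : Finset (Fin (m + n)) // s.card = m} =>
      shuffle x.1 x.2.1 x.2.2 := by
  rintro ⟨a, b, s⟩ ⟨a', b', s'⟩ h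
  dsimp only at h
  obtain rfl : s = s' := Subtype.ext <| Finset.ext fun i => by
    rw [← isLeft_shuffle_symm a b, ← isLeft_shuffle_symm a' b', h]
  have hl (x : σ) : a x = a' x := by simpa [shuffle_inl] using congr($h (inl x))
  have hr (y : τ) : b y = b' y := by simpa [shuffle_inr] using congr($h (inr y))
  simp [Equiv.ext hl, Equiv.ext hr]

theorem card_strictMono_sum_equiv [Fintype σ] [Fintype τ] [Preorder σ] [Preorder τ]
    (hm : Fintype.card σ = m) (hn : Fintype.card τ = n) :
    Nat.card {h : σ ⊕ τ ≃ Fin (m + n) // StrictMono h} =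
      Nat.card {a : σ ≃ Fin m // StrictMono a} * Nat.card {b : τ ≃ Fin n // StrictMono b} *
        (m + n).choose m := by
  classical
  -- `shuffle` is injective between sets of equal size `(m + n)! = m! n! (m + n).choose m`
  have hbij : Bijective fun x : (σ ≃ Fin m) × (τ ≃ Fin n) × {s : Finset (Fin (m + n)) //
      s.card = m} => shuffle x.1 x.2.1 x.2.2 := by
    refine (Fintype.bijective_iff_injective_and_card _).2 ⟨shuffle_injective, ?_⟩
    simp only [Fintype.card_prod, Fintype.card_equiv (Fintype.equivFinOfCardEq hm),
      Fintype.card_equiv (Fintype.equivFinOfCardEq hn), Fintype.card_equiv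
        (Fintype.equivFinOfCardEq (show Fintype.card (σ ⊕ τ) = m + n by simp [hm, hn])),
      Fintype.card_finset_len, Fintype.card_fin, hm, hn]
    rw [Fintype.card_sum, hm, hn, ← Nat.add_choose_mul_factorial_mul_factorial,
      Nat.choose_symm_add]
    ring
  calc Nat.card {h : σ ⊕ τ ≃ Fin (m + n) // StrictMono h}
      = Nat.card {x : (σ ≃ Fin m) × (τ ≃ Fin n) × {s : Finset (Fin (m + n)) // s.card = m} //
          StrictMono (shuffle x.1 x.2.1 x.2.2)} :=
        Nat.card_congr ((Equiv.ofBijective _ hbij).subtypeEquiv fun _ => Iff.rfl).symm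
    _ = Nat.card ({a : σ ≃ Fin m // StrictMono a} × {b : τ ≃ Fin n // StrictMono b} ×
          {s : Finset (Fin (m + n)) // s.card = m}) := Nat.card_congr
        { toFun x := (⟨x.1.1, ((strictMono_shuffle_iff ..).1 x.2).1⟩,
            ⟨x.1.2.1, ((strictMono_shuffle_iff ..).1 x.2).2⟩, x.1.2.2)
          invFun y := ⟨(y.1, y.2.1, y.2.2), (strictMono_shuffle_iff ..).2 ⟨y.1.2, y.2.1.2⟩⟩
          left_inv _ := rfl
          right_inv _ := rfl }
    _ = _ := by
      rw [Nat.card_prod, Nat.card_prod, Nat.card_eq_fintype_card (α := {s : Finset _ // _}),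
        Fintype.card_finset_len, Fintype.card_fin, mul_assoc]

end Shuffle

theorem card_strictMono_equiv_congr {σ σ' : Type*} [Preorder σ] [Preorder σ'] (e : σ ≃o σ')
    {n n' : ℕ} (h : n = n') :
    Nat.card {f : σ ≃ Fin n // StrictMono f} = Nat.card {f : σ' ≃ Fin n' // StrictMono f} := by
  subst h
  refine Nat.card_congr (Equiv.subtypeEquiv (e.toEquiv.equivCongr (Equiv.refl _)) fun f => ?_)
  exact ⟨fun hf _ _ hxy => hf (e.symm.lt_iff_lt.2 hxy),
    fun hf x y hxy => by simpa using hf (e.lt_iff_lt.2 hxy)⟩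

theorem linExtCount_eq_card {α : Type*} [PartialOrder α] (S : Finset α) :
    linExtCount S = Nat.card {f : S ≃ Fin S.card // StrictMono f} := rfl

def Finset.disjSumOrderIso {α γ : Type*} [Preorder α] [Preorder γ] (S : Finset α)
    (T : Finset γ) : S.disjSum T ≃o S ⊕ T where
  toEquiv := Equiv.subtypeSum.trans <| Equiv.sumCongr
    (Equiv.subtypeEquivRight fun _ => inl_mem_disjSum)
    (Equiv.subtypeEquivRight fun _ => inr_mem_disjSum)
  map_rel_iff' := by rintro ⟨a | a, ha⟩ ⟨b | b, hb⟩ <;> simp [Equiv.subtypeSum] <;> exact Iff.rfl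

theorem linExtCount_disjSum {α γ : Type*} [PartialOrder α] [PartialOrder γ] (S : Finset α)
    (T : Finset γ) :
    linExtCount (S.disjSum T) = linExtCount S * linExtCount T * (S.card + T.card).choose S.card := by
  rw [linExtCount_eq_card, card_strictMono_equiv_congr (S.disjSumOrderIso T) (card_disjSum S T),
    card_strictMono_sum_equiv (Fintype.card_coe S) (Fintype.card_coe T)]
  rfl

theorem eHat_disjSum {α γ : Type*} [PartialOrder α] [PartialOrder γ] (S : Finset α)
    (T : Finset γ) : eHat (S.disjSum T) = eHat S * eHat T := by
  have h := Nat.add_choose_mul_factorial_mul_factorial S.card T.card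
  rw [← Nat.choose_symm_add] at h
  have hc : ((S.card + T.card).choose S.card : ℝ) ≠ 0 :=
    Nat.cast_ne_zero.2 (Nat.choose_pos (Nat.le_add_right _ _)).ne'
  simp only [eHat, linExtCount_disjSum, card_disjSum, ← h]
  push_cast
  field_simp

section SideSwap

variable {α : Type*}

open Classical in
noncomputable def sideSwap (W : Set α) : Equiv.Perm (α ⊕ α) :=
  Involutive.toPerm
    (Sum.elim (fun x => if x ∈ W then inr x else inl x) (fun x => if x ∈ W then inl x else inr x))
    (by rintro (x | x) <;> by_cases hx : x ∈ W <;> simp [hx])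

variable {W : Set α} {x : α}

@[simp] theorem sideSwap_inl_of_mem (hx : x ∈ W) : sideSwap W (inl x) = inr x := by
  simp [sideSwap, Involutive.toPerm, hx]

@[simp] theorem sideSwap_inr_of_mem (hx : x ∈ W) : sideSwap W (inr x) = inl x := by
  simp [sideSwap, Involutive.toPerm, hx]

@[simp] theorem sideSwap_inl_of_notMem (hx : x ∉ W) : sideSwap W (inl x) = inl x := by
  simp [sideSwap, Involutive.toPerm, hx]

@[simp] theorem sideSwap_inr_of_notMem (hx : x ∉ W) : sideSwap W (inr x) = inr x := by
  simp [sideSwap, Involutive.toPerm, hx]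

@[simp] theorem sideSwap_sideSwap (u : α ⊕ α) : sideSwap W (sideSwap W u) = u :=
  Involutive.toPerm_involutive _ u

end SideSwap

section SideSwapBounds

variable {α β : Type*} [LinearOrder β] (W : Set α) (p : α ⊕ α → β) (x : α)

theorem min_le_comp_sideSwap_inl : min (p (inl x)) (p (inr x)) ≤ p (sideSwap W (inl x)) := by
  by_cases hx : x ∈ W <;> simp [hx]

theorem min_le_comp_sideSwap_inr : min (p (inl x)) (p (inr x)) ≤ p (sideSwap W (inr x)) := by
  by_cases hx : x ∈ W <;> simp [hx]

theorem comp_sideSwap_inl_le_max : p (sideSwap W (inl x)) ≤ max (p (inl x)) (p (inr x)) := by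
  by_cases hx : x ∈ W <;> simp [hx]

theorem comp_sideSwap_inr_le_max : p (sideSwap W (inr x)) ≤ max (p (inl x)) (p (inr x)) := by
  by_cases hx : x ∈ W <;> simp [hx]

end SideSwapBounds

section RankFun

variable {γ : Type*} [DecidableEq γ] {s : Finset γ} {n : ℕ}

def rankFun (f : s ≃ Fin n) (u : γ) : ℕ := if h : u ∈ s then f ⟨u, h⟩ else 0

theorem rankFun_of_mem (f : s ≃ Fin n) {u : γ} (h : u ∈ s) : rankFun f u = f ⟨u, h⟩ :=
  dif_pos h

theorem rankFun_of_notMem (f : s ≃ Fin n) {u : γ} (h : u ∉ s) : rankFun f u = 0 := dif_neg h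

theorem rankFun_injective : Injective (rankFun : (s ≃ Fin n) → γ → ℕ) := fun f g h =>
  Equiv.ext fun u => Fin.ext <| by simpa [rankFun_of_mem _ u.2] using congrFun h u

theorem strictMonoOn_rankFun [Preorder γ] {f : s ≃ Fin n} (hf : StrictMono f) :
    StrictMonoOn (rankFun f) s := fun u hu v hv huv => by
  simpa [rankFun_of_mem f hu, rankFun_of_mem f hv] using
    hf (show (⟨u, hu⟩ : s) < ⟨v, hv⟩ from huv)

end RankFun

namespace Fishburn

section Sets

variable {α : Type*} (A B C D : Finset α)

def freePoints : Set α := {x | x ∉ A ∧ x ∉ B ∧ x ∉ C ∧ x ∉ D}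

@[simp] theorem mem_freePoints {x : α} :
    x ∈ freePoints A B C D ↔ x ∉ A ∧ x ∉ B ∧ x ∉ C ∧ x ∉ D :=
  Iff.rfl

variable [Fintype α] [DecidableEq α]

def diffPair : Finset (α ⊕ α) := ((univ \ A) \ C).disjSum ((univ \ B) \ D)

def latticePair : Finset (α ⊕ α) :=
  (univ \ (A ∩ B ∪ (C ∪ D))).disjSum (univ \ (A ∪ B ∪ C ∩ D))

variable {A B C D} {x : α}

@[simp] theorem inl_mem_diffPair : inl x ∈ diffPair A B C D ↔ x ∉ A ∧ x ∉ C := by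
  simp [diffPair]

@[simp] theorem inr_mem_diffPair : inr x ∈ diffPair A B C D ↔ x ∉ B ∧ x ∉ D := by
  simp [diffPair]

@[simp] theorem inl_mem_latticePair :
    inl x ∈ latticePair A B C D ↔ ¬(x ∈ A ∧ x ∈ B) ∧ x ∉ C ∧ x ∉ D := by
  simp [latticePair, not_or]

@[simp] theorem inr_mem_latticePair :
    inr x ∈ latticePair A B C D ↔ x ∉ A ∧ x ∉ B ∧ ¬(x ∈ C ∧ x ∈ D) := by
  simp [latticePair, not_or]

theorem sideSwap_mem_diffPair_iff {G : Set α} (hG : G ⊆ freePoints A B C D) (u : α ⊕ α) :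
    sideSwap G u ∈ diffPair A B C D ↔ u ∈ diffPair A B C D := by
  rcases u with x | x <;> by_cases hx : x ∈ G
  all_goals have := @hG x; simp_all

theorem sideSwap_mem_diffPair_iff_mem_latticePair (hAC : Disjoint A C) (hBD : Disjoint B D)
    (u : α ⊕ α) : sideSwap (↑A ∪ ↑D) u ∈ diffPair A B C D ↔ u ∈ latticePair A B C D := by
  have hAC' := disjoint_left.1 hAC
  have hBD' := disjoint_left.1 hBD
  rcases u with x | x <;> by_cases hxA : x ∈ A <;> by_cases hxD : x ∈ D
  all_goals simp_all
  all_goals grind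

theorem card_latticePair (hAC : Disjoint A C) (hBD : Disjoint B D) :
    (latticePair A B C D).card = (diffPair A B C D).card :=
  Finset.card_eq_of_equiv <| (sideSwap (↑A ∪ ↑D)).subtypeEquiv fun u =>
    (sideSwap_mem_diffPair_iff_mem_latticePair hAC hBD u).symm

end Sets

section Overlaps

section

variable {α β : Type*} [LinearOrder β] (p : α ⊕ α → β)

def lo (z : α) : β := min (p (inl z)) (p (inr z))

def hi (z : α) : β := max (p (inl z)) (p (inr z))

end

variable {α β : Type*} [PartialOrder α] [LinearOrder β] (A B C D : Finset α) (p : α ⊕ α → β)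

def Overlaps (z z' : α) : Prop :=
  z ∈ freePoints A B C D ∧ z' ∈ freePoints A B C D ∧ (z < z' ∨ z' < z) ∧
    lo p z ≤ hi p z' ∧ lo p z' ≤ hi p z

variable {A B C D p}

theorem Overlaps.symm {z z' : α} (h : Overlaps A B C D p z z') : Overlaps A B C D p z' z :=
  ⟨h.2.1, h.1, h.2.2.1.symm, h.2.2.2.2, h.2.2.2.1⟩

end Overlaps

section FlipSet

variable {α β : Type*} [Fintype α] [PartialOrder α] [DecidableEq α] [LinearOrder β]
variable (A B C D : Finset α) (p : α ⊕ α → β)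

/-- Keeping both copies of `z` in place would break monotonicity against some `x ∈ A` below `z`,
which moves to the left copy, or some `y ∈ D` above `z`, which moves to the right copy. -/
def IsObstructed (z : α) : Prop :=
  (∃ x ∈ A, inr x ∈ diffPair A B C D ∧ x < z ∧ lo p z ≤ p (inr x)) ∨
    (∃ y ∈ D, inl y ∈ diffPair A B C D ∧ z < y ∧ p (inl y) ≤ hi p z)

/-- Comparable free points with overlapping position intervals must be flipped together. -/
def flipSet : Set α :=
  {z | ∃ z₀ ∈ freePoints A B C D, IsObstructed A B C D p z₀ ∧
    Relation.ReflTransGen (Overlaps A B C D p) z₀ z}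

noncomputable def transfer : Equiv.Perm (α ⊕ α) :=
  (sideSwap (↑A ∪ ↑D)).trans (sideSwap (flipSet A B C D p))

variable {A B C D p}

theorem Overlaps.mem_flipSet {z z' : α} (h : Overlaps A B C D p z z')
    (hz : z ∈ flipSet A B C D p) : z' ∈ flipSet A B C D p :=
  let ⟨z₀, hz₀, hobs, hchain⟩ := hz
  ⟨z₀, hz₀, hobs, hchain.tail h⟩

theorem Overlaps.mem_flipSet_iff {z z' : α} (h : Overlaps A B C D p z z') :
    z ∈ flipSet A B C D p ↔ z' ∈ flipSet A B C D p :=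
  ⟨h.mem_flipSet, h.symm.mem_flipSet⟩

theorem flipSet_subset_freePoints : flipSet A B C D p ⊆ freePoints A B C D := by
  rintro z ⟨z₀, hz₀, -, hchain⟩
  rcases hchain.cases_tail with rfl | ⟨_, -, hov⟩
  exacts [hz₀, hov.2.1]

theorem flipSet_comp_sideSwap {G : Set α} (hG : G ⊆ freePoints A B C D) :
    flipSet A B C D (p ∘ sideSwap G) = flipSet A B C D p := by
  have hlo : lo (p ∘ sideSwap G) = lo p := funext fun z => by
    by_cases hz : z ∈ G <;> simp [lo, hz, min_comm]
  have hhi : hi (p ∘ sideSwap G) = hi p := funext fun z => by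
    by_cases hz : z ∈ G <;> simp [hi, hz, max_comm]
  have hA {x} (hx : x ∈ A) : x ∉ G := fun h => (hG h).1 hx
  have hD {y} (hy : y ∈ D) : y ∉ G := fun h => (hG h).2.2.2 hy
  have hobs : IsObstructed A B C D (p ∘ sideSwap G) = IsObstructed A B C D p := by
    ext z
    simp only [IsObstructed, hlo, hhi]
    refine or_congr (exists_congr fun x => and_congr_right fun hx => ?_)
      (exists_congr fun y => and_congr_right fun hy => ?_)
    · simp [hA hx]
    · simp [hD hy]
  have hov : Overlaps A B C D (p ∘ sideSwap G) = Overlaps A B C D p := by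
    unfold Overlaps; rw [hlo, hhi]
  simp only [flipSet, hobs, hov]

theorem transfer_mem_diffPair_iff (hAC : Disjoint A C) (hBD : Disjoint B D) (u : α ⊕ α) :
    transfer A B C D p u ∈ diffPair A B C D ↔ u ∈ latticePair A B C D :=
  (sideSwap_mem_diffPair_iff flipSet_subset_freePoints _).trans
    (sideSwap_mem_diffPair_iff_mem_latticePair hAC hBD u)

/-- The flip set of `p` is that of `p ∘ transfer p` read back through `sideSwap (A ∪ D)`. -/
theorem comp_transfer_injective :
    Injective fun p : α ⊕ α → β => p ∘ transfer A B C D p := by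
  intro p₁ p₂ h
  dsimp only at h
  have key (p : α ⊕ α → β) :
      p ∘ sideSwap (flipSet A B C D p) = (p ∘ transfer A B C D p) ∘ sideSwap (↑A ∪ ↑D) := by
    funext u; simp [transfer]
  have hF : flipSet A B C D p₁ = flipSet A B C D p₂ := calc
    _ = flipSet A B C D (p₁ ∘ sideSwap (flipSet A B C D p₁)) :=
      (flipSet_comp_sideSwap flipSet_subset_freePoints).symm
    _ = flipSet A B C D (p₂ ∘ sideSwap (flipSet A B C D p₂)) := by rw [key, key, h]
    _ = _ := flipSet_comp_sideSwap flipSet_subset_freePoints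
  have hT : transfer A B C D p₁ = transfer A B C D p₂ := by simp only [transfer, hF]
  funext u
  simpa [hT] using congrFun h ((transfer A B C D p₂).symm u)

theorem lt_of_isObstructed (hp : StrictMonoOn p (diffPair A B C D)) {z : α}
    (hz : z ∈ freePoints A B C D) (hobs : IsObstructed A B C D p z) : p (inl z) < p (inr z) := by
  rcases hobs with ⟨x, -, hx, hxz, hle⟩ | ⟨y, -, hy, hzy, hle⟩
  · have := hp hx (by simp_all) (inr_lt_inr_iff.2 hxz)
    simp only [lo] at hle
    order
  · have := hp (by simp_all) hy (inl_lt_inl_iff.2 hzy)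
    simp only [hi] at hle
    order

theorem Overlaps.lt (hp : StrictMonoOn p (diffPair A B C D)) {z z' : α}
    (hov : Overlaps A B C D p z z') (hz : p (inl z) < p (inr z)) : p (inl z') < p (inr z') := by
  obtain ⟨hzf, hz'f, hlt | hlt, hle, hle'⟩ := hov
  · have := hp (by simp_all) (by simp_all) (inr_lt_inr_iff.2 hlt)
    simp only [lo, hi] at hle hle'
    order
  · have := hp (by simp_all) (by simp_all) (inl_lt_inl_iff.2 hlt)
    simp only [lo, hi] at hle hle'
    order

theorem lt_of_mem_flipSet (hp : StrictMonoOn p (diffPair A B C D)) {z : α}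
    (hz : z ∈ flipSet A B C D p) : p (inl z) < p (inr z) := by
  obtain ⟨z₀, hz₀, hobs, hchain⟩ := hz
  induction hchain with
  | refl => exact lt_of_isObstructed hp hz₀ hobs
  | tail _ hov ih => exact hov.lt hp ih

theorem lt_lo_of_notMem_flipSet {x y : α} (hy : y ∈ freePoints A B C D)
    (hyF : y ∉ flipSet A B C D p) (hxA : x ∈ A) (hx : inr x ∈ diffPair A B C D) (hxy : x < y) :
    p (inr x) < lo p y :=
  not_le.1 fun h => hyF ⟨y, hy, .inl ⟨x, hxA, hx, hxy, h⟩, .refl⟩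

theorem hi_lt_of_notMem_flipSet {x y : α} (hx : x ∈ freePoints A B C D)
    (hxF : x ∉ flipSet A B C D p) (hyD : y ∈ D) (hy : inl y ∈ diffPair A B C D) (hxy : x < y) :
    hi p x < p (inl y) :=
  not_le.1 fun h => hxF ⟨x, hx, .inr ⟨y, hyD, hy, hxy, h⟩, .refl⟩

theorem comp_sideSwap_flipSet_lt (hp : StrictMonoOn p (diffPair A B C D)) {x y : α}
    (hx : x ∈ freePoints A B C D) (hy : y ∈ freePoints A B C D) (hxy : x < y) :
    p (sideSwap (flipSet A B C D p) (inl x)) < p (sideSwap (flipSet A B C D p) (inl y)) ∧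
      p (sideSwap (flipSet A B C D p) (inr x)) < p (sideSwap (flipSet A B C D p) (inr y)) := by
  simp only [mem_freePoints] at hx hy
  have hl := hp (by simp [hx]) (by simp [hy]) (inl_lt_inl_iff.2 hxy)
  have hr := hp (by simp [hx]) (by simp [hy]) (inr_lt_inr_iff.2 hxy)
  by_cases hov : Overlaps A B C D p x y
  · by_cases hxF : x ∈ flipSet A B C D p
    · simp [hxF, hov.mem_flipSet_iff.1 hxF, hl, hr]
    · simp [hxF, mt hov.mem_flipSet_iff.2 hxF, hl, hr]
  · have hgap : hi p x < lo p y := not_le.1 fun h =>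
      hov ⟨hx, hy, Or.inl hxy, by simp only [lo, hi]; order, h⟩
    simp only [lo, hi] at hgap
    have := min_le_comp_sideSwap_inl (flipSet A B C D p) p y
    have := min_le_comp_sideSwap_inr (flipSet A B C D p) p y
    have := comp_sideSwap_inl_le_max (flipSet A B C D p) p x
    have := comp_sideSwap_inr_le_max (flipSet A B C D p) p x
    constructor <;> order

theorem notMem_flipSet {x : α} (hx : x ∈ A ∨ x ∈ B ∨ x ∈ C ∨ x ∈ D) :
    x ∉ flipSet A B C D p := fun h => by
  have := flipSet_subset_freePoints h
  simp only [mem_freePoints] at this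
  tauto

theorem comp_transfer_inl_lt_of_mem_freePoints (hp : StrictMonoOn p (diffPair A B C D))
    {x y : α} (hx : inl x ∈ latticePair A B C D) (hy : y ∈ freePoints A B C D) (hxy : x < y) :
    p (transfer A B C D p (inl x)) < p (transfer A B C D p (inl y)) := by
  obtain ⟨hxAB, hxC, hxD⟩ := inl_mem_latticePair.1 hx
  obtain ⟨hyA, hyB, hyC, hyD⟩ := hy
  simp only [transfer, Equiv.trans_apply]
  by_cases hxA : x ∈ A
  · have hxF : x ∉ flipSet A B C D p := notMem_flipSet (.inl hxA)
    by_cases hyF : y ∈ flipSet A B C D p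
    · simpa [hxA, hyA, hyD, hxF, hyF] using
        hp (by simp_all) (by simp_all) (inr_lt_inr_iff.2 hxy)
    · have := lt_lo_of_notMem_flipSet ⟨hyA, hyB, hyC, hyD⟩ hyF hxA (by simp_all) hxy
      simp only [lo] at this
      simp [hxA, hyA, hyD, hxF, hyF]
      order
  have hl := hp (by simp_all) (by simp_all) (inl_lt_inl_iff.2 hxy)
  by_cases hxB : x ∈ B
  · have hxF : x ∉ flipSet A B C D p := notMem_flipSet (.inr (.inl hxB))
    by_cases hyF : y ∈ flipSet A B C D p
    · have := lt_of_mem_flipSet hp hyF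
      simp [hxA, hyA, hxD, hyD, hxF, hyF]
      order
    · simpa [hxA, hyA, hxD, hyD, hxF, hyF] using hl
  simpa [hxA, hyA, hxD, hyD] using
    (comp_sideSwap_flipSet_lt hp ⟨hxA, hxB, hxC, hxD⟩ ⟨hyA, hyB, hyC, hyD⟩ hxy).1

theorem comp_transfer_inl_lt (hp : StrictMonoOn p (diffPair A B C D))
    (hA : IsLowerSet (A : Set α)) (hB : IsLowerSet (B : Set α)) {x y : α}
    (hx : inl x ∈ latticePair A B C D) (hy : inl y ∈ latticePair A B C D) (hxy : x < y) :
    p (transfer A B C D p (inl x)) < p (transfer A B C D p (inl y)) := by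
  obtain ⟨hxAB, -, hxD⟩ := inl_mem_latticePair.1 hx
  obtain ⟨-, hyC, hyD⟩ := inl_mem_latticePair.1 hy
  by_cases hyA : y ∈ A
  · have hxA : x ∈ A := hA hxy.le hyA
    simpa [transfer, hxA, hyA, notMem_flipSet (.inl hxA), notMem_flipSet (.inl hyA)] using
      hp (by simp_all) (by simp_all) (inr_lt_inr_iff.2 hxy)
  by_cases hyB : y ∈ B
  · have hxB : x ∈ B := hB hxy.le hyB
    have hxA : x ∉ A := fun h => hxAB ⟨h, hxB⟩
    simpa [transfer, hxA, hyA, hxD, hyD, notMem_flipSet (.inr (.inl hxB)),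
      notMem_flipSet (.inr (.inl hyB))] using
      hp (by simp_all) (by simp_all) (inl_lt_inl_iff.2 hxy)
  exact comp_transfer_inl_lt_of_mem_freePoints hp hx ⟨hyA, hyB, hyC, hyD⟩ hxy

theorem comp_transfer_inr_lt_of_mem_freePoints (hp : StrictMonoOn p (diffPair A B C D))
    {x y : α} (hx : x ∈ freePoints A B C D) (hy : inr y ∈ latticePair A B C D) (hxy : x < y) :
    p (transfer A B C D p (inr x)) < p (transfer A B C D p (inr y)) := by
  obtain ⟨hxA, hxB, hxC, hxD⟩ := hx
  obtain ⟨hyA, hyB, hyCD⟩ := inr_mem_latticePair.1 hy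
  simp only [transfer, Equiv.trans_apply]
  by_cases hyD : y ∈ D
  · have hyF : y ∉ flipSet A B C D p := notMem_flipSet (.inr (.inr (.inr hyD)))
    by_cases hxF : x ∈ flipSet A B C D p
    · simpa [hxA, hxD, hyD, hxF, hyF] using
        hp (by simp_all) (by simp_all) (inl_lt_inl_iff.2 hxy)
    · have := hi_lt_of_notMem_flipSet ⟨hxA, hxB, hxC, hxD⟩ hxF hyD (by simp_all) hxy
      simp only [hi] at this
      simp [hxA, hxD, hyD, hxF, hyF]
      order
  have hr := hp (by simp_all) (by simp_all) (inr_lt_inr_iff.2 hxy)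
  by_cases hyC : y ∈ C
  · have hyF : y ∉ flipSet A B C D p := notMem_flipSet (.inr (.inr (.inl hyC)))
    by_cases hxF : x ∈ flipSet A B C D p
    · have := lt_of_mem_flipSet hp hxF
      simp [hxA, hyA, hxD, hyD, hxF, hyF]
      order
    · simpa [hxA, hyA, hxD, hyD, hxF, hyF] using hr
  simpa [hxA, hyA, hxD, hyD] using
    (comp_sideSwap_flipSet_lt hp ⟨hxA, hxB, hxC, hxD⟩ ⟨hyA, hyB, hyC, hyD⟩ hxy).2

theorem comp_transfer_inr_lt (hp : StrictMonoOn p (diffPair A B C D))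
    (hC : IsUpperSet (C : Set α)) (hD : IsUpperSet (D : Set α)) {x y : α}
    (hx : inr x ∈ latticePair A B C D) (hy : inr y ∈ latticePair A B C D) (hxy : x < y) :
    p (transfer A B C D p (inr x)) < p (transfer A B C D p (inr y)) := by
  obtain ⟨hxA, hxB, hxCD⟩ := inr_mem_latticePair.1 hx
  obtain ⟨hyA, -, hyCD⟩ := inr_mem_latticePair.1 hy
  by_cases hxC : x ∈ C
  · have hyC : y ∈ C := hC hxy.le hxC
    have hxD : x ∉ D := fun h => hxCD ⟨hxC, h⟩
    have hyD : y ∉ D := fun h => hyCD ⟨hyC, h⟩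
    simpa [transfer, hxA, hyA, hxD, hyD, notMem_flipSet (.inr (.inr (.inl hxC))),
      notMem_flipSet (.inr (.inr (.inl hyC)))] using
      hp (by simp_all) (by simp_all) (inr_lt_inr_iff.2 hxy)
  by_cases hxD : x ∈ D
  · have hyD : y ∈ D := hD hxy.le hxD
    have hyC : y ∉ C := fun h => hyCD ⟨h, hyD⟩
    simpa [transfer, hxD, hyD, notMem_flipSet (.inr (.inr (.inr hxD))),
      notMem_flipSet (.inr (.inr (.inr hyD)))] using
      hp (by simp_all) (by simp_all) (inl_lt_inl_iff.2 hxy)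
  exact comp_transfer_inr_lt_of_mem_freePoints hp ⟨hxA, hxB, hxC, hxD⟩ hy hxy

theorem strictMonoOn_comp_transfer (hp : StrictMonoOn p (diffPair A B C D))
    (hA : IsLowerSet (A : Set α)) (hB : IsLowerSet (B : Set α))
    (hC : IsUpperSet (C : Set α)) (hD : IsUpperSet (D : Set α)) :
    StrictMonoOn (p ∘ transfer A B C D p) (latticePair A B C D) := by
  rintro (x | x) hx (y | y) hy hxy
  · exact comp_transfer_inl_lt hp hA hB hx hy (inl_lt_inl_iff.1 hxy)
  · exact absurd hxy not_inl_lt_inr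
  · exact absurd hxy not_inr_lt_inl
  · exact comp_transfer_inr_lt hp hC hD hx hy (inr_lt_inr_iff.1 hxy)

end FlipSet

section LinearExtensions

variable {α : Type*} [Fintype α] [PartialOrder α] [DecidableEq α] {A B C D : Finset α}

noncomputable def transferExt (hAC : Disjoint A C) (hBD : Disjoint B D) {n : ℕ}
    (f : diffPair A B C D ≃ Fin n) : latticePair A B C D ≃ Fin n :=
  ((transfer A B C D (rankFun f)).subtypeEquiv fun u =>
    (transfer_mem_diffPair_iff hAC hBD u).symm).trans f

theorem rankFun_transferExt (hAC : Disjoint A C) (hBD : Disjoint B D) {n : ℕ}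
    (f : diffPair A B C D ≃ Fin n) :
    rankFun (transferExt hAC hBD f) = rankFun f ∘ transfer A B C D (rankFun f) := by
  funext u
  by_cases hu : u ∈ latticePair A B C D
  · simp [rankFun_of_mem _ hu, rankFun_of_mem f ((transfer_mem_diffPair_iff hAC hBD u).2 hu),
      transferExt]
  · simp [rankFun_of_notMem _ hu,
      rankFun_of_notMem f (mt (transfer_mem_diffPair_iff hAC hBD u).1 hu)]

theorem linExtCount_diffPair_le (hA : IsLowerSet (A : Set α)) (hB : IsLowerSet (B : Set α))
    (hC : IsUpperSet (C : Set α)) (hD : IsUpperSet (D : Set α)) (hAC : Disjoint A C)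
    (hBD : Disjoint B D) :
    linExtCount (diffPair A B C D) ≤ linExtCount (latticePair A B C D) := by
  rw [linExtCount_eq_card, linExtCount_eq_card,
    card_strictMono_equiv_congr (OrderIso.refl _) (card_latticePair hAC hBD)]
  refine Nat.card_le_card_of_injective
    (fun f => ⟨transferExt hAC hBD f.1, fun u v huv => ?_⟩) fun f g hfg => ?_
  · have := strictMonoOn_comp_transfer (strictMonoOn_rankFun f.2) hA hB hC hD u.2 v.2 huv
    rwa [← rankFun_transferExt hAC hBD, rankFun_of_mem _ u.2, rankFun_of_mem _ v.2] at this
  · have h := congrArg (fun f => rankFun f.1) hfg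
    simp only [rankFun_transferExt] at h
    exact Subtype.ext (rankFun_injective (comp_transfer_injective h))

end LinearExtensions

end Fishburn

/-- **Generalized (self-dual) Fishburn inequality.** -/
theorem generalized_fishburn {α : Type*} [Fintype α] [PartialOrder α] [DecidableEq α]
    (A B C D : Finset α)
    (hA : ∀ x ∈ A, ∀ y, y ≤ x → y ∈ A)
    (hB : ∀ x ∈ B, ∀ y, y ≤ x → y ∈ B)
    (hC : ∀ x ∈ C, ∀ y, x ≤ y → y ∈ C)
    (hD : ∀ x ∈ D, ∀ y, x ≤ y → y ∈ D)
    (hAC : A ∩ C = ∅) (hBD : B ∩ D = ∅) :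
    eHat (Finset.univ \ ((A ∩ B) ∪ (C ∪ D))) * eHat (Finset.univ \ ((A ∪ B) ∪ (C ∩ D))) ≥
      eHat ((Finset.univ \ A) \ C) * eHat ((Finset.univ \ B) \ D) := by
  have hAC' : Disjoint A C := disjoint_iff_inter_eq_empty.2 hAC
  have hBD' : Disjoint B D := disjoint_iff_inter_eq_empty.2 hBD
  rw [ge_iff_le, ← eHat_disjSum, ← eHat_disjSum]
  change eHat (Fishburn.diffPair A B C D) ≤ eHat (Fishburn.latticePair A B C D)
  rw [eHat, eHat, Fishburn.card_latticePair hAC' hBD']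
  gcongr
  exact Fishburn.linExtCount_diffPair_le (fun _ _ h hx => hA _ hx _ h)
    (fun _ _ h hx => hB _ hx _ h) (fun _ _ h hx => hC _ hx _ h) (fun _ _ h hx => hD _ hx _ h)
    hAC' hBD'
end

section
/- Let P = (X, ≺) be a finite poset and t ∈ ℕ. Let A, B ⊆ X be lower ideals and C, D ⊆ X be upper ideals with A∩C = B∩D = ∅. Set V := (A∩B)∪(C∪D) and W := (A∪B)∪(C∩D). Then Ω(X−V, t)·Ω(X−W, t) ≥ Ω(X−A−C, t)·Ω(X−B−D, t), where Ω(S, t) is the number of order-preserving maps from the induced subposet on S to {0,1,…,t}. -/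
/-- `Ω(S,t)`: the number of order-preserving maps from the induced subposet on `S`
to `{0,…,t}`. -/
noncomputable def orderPoly {α : Type*} [PartialOrder α] (S : Finset α) (t : ℕ) : ℕ :=
  Nat.card {f : {x // x ∈ S} → Fin (t + 1) //
    ∀ a b : {x // x ∈ S}, (a : α) ≤ (b : α) → f a ≤ f b}

/-!
Extending a map on `X - A - C` by `0` on the lower set `A` and by `t` on the upper set `C`
identifies `Ω(X - A - C, t)` with the number of monotone maps `X → {0, …, t}` pinned to `0` on `A`
and to `t` on `C`. Inside the finite distributive lattice of all maps `X → {0, …, t}`, the pointwise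
sup of an `(A, C)`-pinned and a `(B, D)`-pinned monotone map is `(A ∩ B, C ∪ D)`-pinned and their
inf is `(A ∪ B, C ∩ D)`-pinned, so Daykin's inequality `|𝒜| |ℬ| ≤ |𝒜 ⊼ ℬ| |𝒜 ⊻ ℬ|` gives the
theorem.
-/

open Finset

section Daykin

variable {L : Type*} [DistribLattice L] [Fintype L]

theorem natCard_mul_natCard_le_of_sup_of_inf {p q r s : L → Prop}
    (hsup : ∀ x y, p x → q y → r (x ⊔ y)) (hinf : ∀ x y, p x → q y → s (x ⊓ y)) :
    Nat.card {x // p x} * Nat.card {x // q x} ≤ Nat.card {x // s x} * Nat.card {x // r x} := by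
  classical
  simp only [Nat.card_eq_fintype_card, Fintype.card_subtype]
  refine (le_card_infs_mul_card_sups _ _).trans (Nat.mul_le_mul (card_le_card ?_) (card_le_card ?_))
  · simp only [subset_iff, mem_infs, mem_filter, mem_univ, true_and]
    rintro _ ⟨x, hx, y, hy, rfl⟩
    exact hinf x y hx hy
  · simp only [subset_iff, mem_sups, mem_filter, mem_univ, true_and]
    rintro _ ⟨x, hx, y, hy, rfl⟩
    exact hsup x y hx hy

end Daykin

section Pinned

variable {α β : Type*} [Preorder α] [DecidableEq α]

def PinnedMonotone [Preorder β] [BoundedOrder β] (A C : Finset α) (F : α → β) : Prop :=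
  Monotone F ∧ (∀ x ∈ A, F x = ⊥) ∧ (∀ x ∈ C, F x = ⊤)

namespace PinnedMonotone

variable [Lattice β] [BoundedOrder β] {A B C D : Finset α} {F G : α → β}

theorem sup (hF : PinnedMonotone A C F) (hG : PinnedMonotone B D G) :
    PinnedMonotone (A ∩ B) (C ∪ D) (F ⊔ G) := by
  obtain ⟨hFm, hFA, hFC⟩ := hF
  obtain ⟨hGm, hGB, hGD⟩ := hG
  refine ⟨hFm.sup hGm, fun x hx => ?_, fun x hx => ?_⟩
  · rw [mem_inter] at hx
    simp [hFA x hx.1, hGB x hx.2]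
  · rcases mem_union.1 hx with hx | hx <;> simp [hFC, hGD, hx]

theorem inf (hF : PinnedMonotone A C F) (hG : PinnedMonotone B D G) :
    PinnedMonotone (A ∪ B) (C ∩ D) (F ⊓ G) := by
  obtain ⟨hFm, hFA, hFC⟩ := hF
  obtain ⟨hGm, hGB, hGD⟩ := hG
  refine ⟨hFm.inf hGm, fun x hx => ?_, fun x hx => ?_⟩
  · rcases mem_union.1 hx with hx | hx <;> simp [hFA, hGB, hx]
  · rw [mem_inter] at hx
    simp [hFC x hx.1, hGD x hx.2]

end PinnedMonotone

theorem natCard_pinnedMonotone_mul_le [Fintype α] [DistribLattice β] [BoundedOrder β] [Fintype β]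
    (A B C D : Finset α) :
    Nat.card {F : α → β // PinnedMonotone A C F} * Nat.card {F : α → β // PinnedMonotone B D F} ≤
      Nat.card {F : α → β // PinnedMonotone (A ∩ B) (C ∪ D) F} *
        Nat.card {F : α → β // PinnedMonotone (A ∪ B) (C ∩ D) F} :=
  (natCard_mul_natCard_le_of_sup_of_inf (fun _ _ => PinnedMonotone.sup)
    (fun _ _ => PinnedMonotone.inf)).trans_eq (mul_comm _ _)

section Extension

variable [Fintype α] [Preorder β] [BoundedOrder β] {A C : Finset α}

def pinnedExtension (A C : Finset α) (f : {x // x ∈ (univ \ A) \ C} → β) (x : α) : β :=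
  if hx : x ∈ (univ \ A) \ C then f ⟨x, hx⟩ else if x ∈ A then ⊥ else ⊤

theorem pinnedExtension_pinnedMonotone (hA : IsLowerSet (A : Set α)) (hC : IsUpperSet (C : Set α))
    (hAC : Disjoint A C) {f : {x // x ∈ (univ \ A) \ C} → β} (hf : Monotone f) :
    PinnedMonotone A C (pinnedExtension A C f) := by
  have hS : ∀ {x}, x ∈ (univ \ A) \ C ↔ x ∉ A ∧ x ∉ C := by simp
  refine ⟨fun x y hxy => ?_, fun x hx => ?_, fun x hx => ?_⟩
  · by_cases hxA : x ∈ A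
    · have hx : x ∉ (univ \ A) \ C := fun h => (hS.1 h).1 hxA
      simp [pinnedExtension, hx, hxA]
    by_cases hy : y ∈ (univ \ A) \ C
    · have hx : x ∈ (univ \ A) \ C := hS.2 ⟨hxA, fun hxC => (hS.1 hy).2 (hC hxy hxC)⟩
      simpa [pinnedExtension, hx, hy] using
        hf (show (⟨x, hx⟩ : {x // x ∈ (univ \ A) \ C}) ≤ ⟨y, hy⟩ from hxy)
    · have hyA : y ∉ A := fun hyA => hxA (hA hxy hyA)
      simp [pinnedExtension, hy, hyA]
  · have : x ∉ (univ \ A) \ C := fun h => (hS.1 h).1 hx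
    simp [pinnedExtension, this, hx]
  · have : x ∉ (univ \ A) \ C := fun h => (hS.1 h).2 hx
    simp [pinnedExtension, this, disjoint_right.1 hAC hx]

def pinnedMonotoneEquiv (hA : IsLowerSet (A : Set α)) (hC : IsUpperSet (C : Set α))
    (hAC : Disjoint A C) :
    {f : {x // x ∈ (univ \ A) \ C} → β // Monotone f} ≃ {F : α → β // PinnedMonotone A C F} where
  toFun f := ⟨pinnedExtension A C f, pinnedExtension_pinnedMonotone hA hC hAC f.2⟩
  invFun F := ⟨fun x => F.1 x, fun _ _ hxy => F.2.1 hxy⟩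
  left_inv f := by
    ext x
    simp [pinnedExtension, x.2]
  right_inv := by
    rintro ⟨F, -, hFA, hFC⟩
    ext x
    by_cases hx : x ∈ (univ \ A) \ C
    · simp [pinnedExtension, hx]
    · by_cases hxA : x ∈ A
      · simp [pinnedExtension, hx, hxA, hFA]
      · have hxC : x ∈ C := by simpa [hxA] using hx
        simp [pinnedExtension, hx, hxA, hFC x hxC]

end Extension

end Pinned

theorem orderPoly_sdiff_sdiff_eq_natCard {α : Type*} [Fintype α] [PartialOrder α] [DecidableEq α]
    {A C : Finset α} (hA : IsLowerSet (A : Set α)) (hC : IsUpperSet (C : Set α))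
    (hAC : Disjoint A C) (t : ℕ) :
    orderPoly ((univ \ A) \ C) t = Nat.card {F : α → Fin (t + 1) // PinnedMonotone A C F} :=
  Nat.card_congr (pinnedMonotoneEquiv hA hC hAC)

/-- **Order polynomial generalization of Fishburn's inequality.** -/
theorem fishburn_order_polynomial {α : Type*} [Fintype α] [PartialOrder α] [DecidableEq α]
    (t : ℕ) (A B C D : Finset α)
    (hA : ∀ x ∈ A, ∀ y, y ≤ x → y ∈ A)
    (hB : ∀ x ∈ B, ∀ y, y ≤ x → y ∈ B)
    (hC : ∀ x ∈ C, ∀ y, x ≤ y → y ∈ C)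
    (hD : ∀ x ∈ D, ∀ y, x ≤ y → y ∈ D)
    (hAC : A ∩ C = ∅) (hBD : B ∩ D = ∅) :
    orderPoly (Finset.univ \ ((A ∩ B) ∪ (C ∪ D))) t *
        orderPoly (Finset.univ \ ((A ∪ B) ∪ (C ∩ D))) t ≥
      orderPoly ((Finset.univ \ A) \ C) t * orderPoly ((Finset.univ \ B) \ D) t := by
  have hA' : IsLowerSet (A : Set α) := fun _ _ hyx hx => hA _ hx _ hyx
  have hB' : IsLowerSet (B : Set α) := fun _ _ hyx hx => hB _ hx _ hyx
  have hC' : IsUpperSet (C : Set α) := fun _ _ hxy hx => hC _ hx _ hxy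
  have hD' : IsUpperSet (D : Set α) := fun _ _ hxy hx => hD _ hx _ hxy
  rw [← disjoint_iff_inter_eq_empty] at hAC hBD
  have hsdiff (X Y : Finset α) : univ \ (X ∪ Y) = (univ \ X) \ Y := sdiff_sdiff_left.symm
  rw [hsdiff, hsdiff,
    orderPoly_sdiff_sdiff_eq_natCard hA' hC' hAC, orderPoly_sdiff_sdiff_eq_natCard hB' hD' hBD,
    orderPoly_sdiff_sdiff_eq_natCard (by simpa using hA'.inter hB') (by simpa using hC'.union hD')
      (disjoint_union_right.2 ⟨hAC.mono_left inter_subset_left, hBD.mono_left inter_subset_right⟩),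
    orderPoly_sdiff_sdiff_eq_natCard (by simpa using hA'.union hB') (by simpa using hC'.inter hD')
      (disjoint_union_left.2 ⟨hAC.mono_right inter_subset_left, hBD.mono_right inter_subset_right⟩)]
  exact natCard_pinnedMonotone_mul_le A B C D
end

section
/- Let P = (X, ≺) be a finite poset with X = {x₁,…,x_n}, and t ∈ ℕ. Let A, B be lower ideals and C, D be upper ideals of P with A∩C = B∩D = ∅; set V := (A∩B)∪(C∪D) and W := (A∪B)∪(C∩D). For S ⊆ X define the multivariate order polynomial Ω_q(S,t) := Σ_f Π_{x_i ∈ S} q_i^{f(x_i)}, the sum over order-preserving maps f : S → {0,…,t}. Then the polynomial Ω_q(X−V,t)·Ω_q(X−W,t) − Ω_q(X−A−C,t)·Ω_q(X−B−D,t) in the variables q₁,…,q_n has all nonnegative coefficients. -/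
open scoped Classical in
/-- The multivariate order polynomial `Ω_q(S,t) = Σ_f Π_{x ∈ S} q_x^{f(x)}`, summed over
order-preserving maps `f : S → {0,…,t}`, with one variable `q_x` for each element `x`. -/
noncomputable def multiOrderPoly {α : Type*} [Fintype α] [PartialOrder α]
    (S : Finset α) (t : ℕ) : MvPolynomial α ℤ :=
  ∑ f ∈ Finset.univ.filter
      (fun f : {x // x ∈ S} → Fin (t + 1) =>
        ∀ a b : {x // x ∈ S}, (a : α) ≤ (b : α) → f a ≤ f b),
    ∏ x : {x // x ∈ S}, MvPolynomial.X (x : α) ^ (f x : ℕ)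

/-!
Extending an order-preserving map on `X - L - U` by `0` on the lower ideal `L` and by `t` on
the upper ideal `U` turns `Ω_q(X - L - U, t) · ∏_{x ∈ U} q_x^t` into the generating function
of the monotone maps `X → {0,…,t}` pinned to `0` on `L` and to `t` on `U`. Multiplying both
products of the inequality by `∏_C q^t ∏_D q^t = ∏_{C ∪ D} q^t ∏_{C ∩ D} q^t`, it suffices to
inject the pairs `(f, g)` pinned by `(A, C)` and `(B, D)` into the pairs pinned by
`(A ∩ B, C ∪ D)` and `(A ∪ B, C ∩ D)`, preserving `f + g`.

The injection exchanges `f` and `g` on the set `W` of points connected to `(A - B) ∪ (D - C)`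
by comparable pairs `x ≤ y` with `min (f y) (g y) < max (f x) (g x)`. No such pair has exactly
one point in `W`, so both new maps stay monotone; `f ≤ g` propagates from the seeds to all of
`W`, which gives the new boundary values; and `W` only depends on `max f g` and `min f g`,
which the exchange preserves, so the exchange is an involution.
-/

open Finset MvPolynomial

section Uncross

variable {α β : Type*} [LinearOrder β] {f g : α → β} {W : Set α}

theorem max_piecewise_swap [DecidablePred (· ∈ W)] (x : α) :
    max (W.piecewise g f x) (W.piecewise f g x) = max (f x) (g x) := by
  by_cases hx : x ∈ W <;> simp [hx, max_comm]

theorem min_piecewise_swap [DecidablePred (· ∈ W)] (x : α) :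
    min (W.piecewise g f x) (W.piecewise f g x) = min (f x) (g x) := by
  by_cases hx : x ∈ W <;> simp [hx, min_comm]

variable [Preorder α] {Z : Set α}

def Conflict (f g : α → β) (x y : α) : Prop :=
  x ≤ y ∧ min (f y) (g y) < max (f x) (g x)

def conflictClosure (f g : α → β) (Z : Set α) : Set α :=
  {w | ∃ z ∈ Z, Relation.ReflTransGen (Relation.SymmGen (Conflict f g)) z w}

open scoped Classical in
noncomputable def uncross (Z : Set α) (p : (α → β) × (α → β)) : (α → β) × (α → β) :=
  ((conflictClosure p.1 p.2 Z).piecewise p.2 p.1, (conflictClosure p.1 p.2 Z).piecewise p.1 p.2)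

theorem conflictClosure_uncross (p : (α → β) × (α → β)) :
    conflictClosure (uncross Z p).1 (uncross Z p).2 Z = conflictClosure p.1 p.2 Z := by
  have : Conflict (uncross Z p).1 (uncross Z p).2 = Conflict p.1 p.2 := by
    ext x y
    simp only [Conflict, uncross, max_piecewise_swap, min_piecewise_swap]
  rw [conflictClosure, this, conflictClosure]

theorem uncross_involutive : Function.Involutive (uncross (β := β) Z) := by
  intro p
  ext x : 2 <;>
  · conv_lhs => rw [uncross, conflictClosure_uncross]
    by_cases hx : x ∈ conflictClosure p.1 p.2 Z <;> simp [uncross, hx]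

theorem mem_conflictClosure_of_symmGen {x y : α} (hx : x ∈ conflictClosure f g Z)
    (hxy : Relation.SymmGen (Conflict f g) x y) : y ∈ conflictClosure f g Z :=
  let ⟨z, hz, hzx⟩ := hx
  ⟨z, hz, hzx.tail hxy⟩

theorem max_le_min_of_mem_conflictClosure_iff {x y : α} (hxy : x ≤ y)
    (h : x ∈ conflictClosure f g Z ↔ y ∉ conflictClosure f g Z) :
    max (f x) (g x) ≤ min (f y) (g y) := by
  by_contra hlt
  have hc : Conflict f g x y := ⟨hxy, not_le.1 hlt⟩
  by_cases hx : x ∈ conflictClosure f g Z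
  · exact h.1 hx (mem_conflictClosure_of_symmGen hx (Or.inl hc))
  · exact hx (mem_conflictClosure_of_symmGen (not_not.1 (mt h.2 hx)) (Or.inr hc))

theorem Monotone.piecewise_swap [DecidablePred (· ∈ W)] (hf : Monotone f) (hg : Monotone g)
    (hW : ∀ x y, x ≤ y → (x ∈ W ↔ y ∉ W) → max (f x) (g x) ≤ min (f y) (g y)) :
    Monotone (W.piecewise g f) := by
  intro x y hxy
  by_cases hx : x ∈ W <;> by_cases hy : y ∈ W <;>
    simp only [hx, hy, Set.piecewise_eq_of_mem, Set.piecewise_eq_of_notMem, not_false_eq_true]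
  · exact hg hxy
  · exact le_max_right _ _ |>.trans <| (hW x y hxy (by simp [hx, hy])).trans (min_le_left _ _)
  · exact le_max_left _ _ |>.trans <| (hW x y hxy (by simp [hx, hy])).trans (min_le_right _ _)
  · exact hf hxy

theorem monotone_uncross {p : (α → β) × (α → β)} (h₁ : Monotone p.1) (h₂ : Monotone p.2) :
    Monotone (uncross Z p).1 ∧ Monotone (uncross Z p).2 := by
  classical
  have hW : ∀ x y, x ≤ y → (x ∈ conflictClosure p.1 p.2 Z ↔ y ∉ conflictClosure p.1 p.2 Z) →
      max (p.1 x) (p.2 x) ≤ min (p.1 y) (p.2 y) :=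
    fun x y hxy ↦ max_le_min_of_mem_conflictClosure_iff hxy
  refine ⟨h₁.piecewise_swap h₂ hW, h₂.piecewise_swap h₁ fun x y hxy hxy' ↦ ?_⟩
  rw [max_comm, min_comm]
  exact hW x y hxy hxy'

theorem le_of_mem_conflictClosure (hf : Monotone f) (hg : Monotone g)
    (hZ : ∀ z ∈ Z, f z ≤ g z) {w : α} (hw : w ∈ conflictClosure f g Z) : f w ≤ g w := by
  obtain ⟨z, hz, hzw⟩ := hw
  induction hzw with
  | refl => exact hZ z hz
  | @tail x y _ hxy ih =>
    by_contra! hlt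
    rcases hxy with ⟨hxy, hc⟩ | ⟨hyx, hc⟩
    · rw [max_eq_right ih, min_eq_right hlt.le] at hc
      exact (hg hxy).not_gt hc
    · rw [max_eq_left hlt.le, min_eq_left ih] at hc
      exact (hf hyx).not_gt hc

theorem uncross_apply_add {M : Type*} [AddCommMagma M] (φ : β → M) (p : (α → β) × (α → β))
    (x : α) : φ ((uncross Z p).1 x) + φ ((uncross Z p).2 x) = φ (p.1 x) + φ (p.2 x) := by
  by_cases hx : x ∈ conflictClosure p.1 p.2 Z <;> simp [uncross, hx, add_comm]

end Uncross

section Pinned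

variable {α β : Type*} [Preorder α] [LinearOrder β] [BoundedOrder β] {f g : α → β}
  {A B C D : Set α}

theorem uncross_eqOn (hf : Monotone f) (hg : Monotone g) (hfA : Set.EqOn f ⊥ A)
    (hfC : Set.EqOn f ⊤ C) (hgB : Set.EqOn g ⊥ B) (hgD : Set.EqOn g ⊤ D) :
    Set.EqOn (uncross (A \ B ∪ D \ C) (f, g)).1 ⊥ (A ∩ B) ∧
      Set.EqOn (uncross (A \ B ∪ D \ C) (f, g)).1 ⊤ (C ∪ D) ∧
      Set.EqOn (uncross (A \ B ∪ D \ C) (f, g)).2 ⊥ (A ∪ B) ∧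
      Set.EqOn (uncross (A \ B ∪ D \ C) (f, g)).2 ⊤ (C ∩ D) := by
  have hseed : ∀ z ∈ A \ B ∪ D \ C, f z ≤ g z := by
    rintro z (⟨hzA, -⟩ | ⟨hzD, -⟩)
    · simp [hfA hzA]
    · simp [hgD hzD]
  have hle : ∀ w ∈ conflictClosure f g (A \ B ∪ D \ C), f w ≤ g w :=
    fun w ↦ le_of_mem_conflictClosure hf hg hseed
  have hmem : ∀ z ∈ A \ B ∪ D \ C, z ∈ conflictClosure f g (A \ B ∪ D \ C) :=
    fun z hz ↦ ⟨z, hz, .refl⟩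
  refine ⟨fun x ⟨hxA, hxB⟩ ↦ ?_, fun x hx ↦ ?_, fun x hx ↦ ?_, fun x ⟨hxC, hxD⟩ ↦ ?_⟩
  all_goals by_cases hxW : x ∈ conflictClosure f g (A \ B ∪ D \ C) <;>
    simp only [uncross, Set.piecewise, hxW, if_true, if_false, Pi.bot_apply, Pi.top_apply]
  · exact hgB hxB
  · exact hfA hxA
  · by_cases hxC : x ∈ C
    · exact top_le_iff.1 ((hfC hxC).symm.trans_le (hle x hxW))
    · exact hgD (hx.resolve_left hxC)
  · by_cases hxC : x ∈ C
    · exact hfC hxC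
    · exact absurd (hmem x (.inr ⟨hx.resolve_left hxC, hxC⟩)) hxW
  · by_cases hxB : x ∈ B
    · exact le_bot_iff.1 ((hle x hxW).trans_eq (hgB hxB))
    · exact hfA (hx.resolve_right hxB)
  · by_cases hxB : x ∈ B
    · exact hgB hxB
    · exact absurd (hmem x (.inl ⟨hx.resolve_right hxB, hxB⟩)) hxW
  · exact hfC hxC
  · exact hgD hxD

end Pinned

theorem Finset.sum_le_sum_of_injOn {ι κ M : Type*} [AddCommMonoid M] [PartialOrder M]
    [IsOrderedAddMonoid M] {s : Finset ι} {t : Finset κ} (e : ι → κ) (hst : Set.MapsTo e s t)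
    (he : Set.InjOn e s) {f : ι → M} {g : κ → M} (hfg : ∀ i ∈ s, g (e i) = f i)
    (hg : ∀ k ∈ t, 0 ≤ g k) : ∑ i ∈ s, f i ≤ ∑ k ∈ t, g k := by
  classical
  calc ∑ i ∈ s, f i = ∑ k ∈ s.image e, g k := by
        rw [sum_image he]
        exact (sum_congr rfl hfg).symm
    _ ≤ ∑ k ∈ t, g k :=
      sum_le_sum_of_subset_of_nonneg (image_subset_iff.2 hst) fun k hk _ ↦ hg k hk

section OrderPolynomial

variable {α : Type*} [Fintype α] [DecidableEq α] {L U : Finset α}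

def extendByBounds {β : Type*} [Bot β] [Top β] (S U : Finset α) (f : S → β) : α → β :=
  fun x ↦ if hx : x ∈ S then f ⟨x, hx⟩ else if x ∈ U then ⊤ else ⊥

theorem prod_X_pow_extendByBounds {t : ℕ} (hLU : Disjoint L U)
    (f : {x // x ∈ univ \ (L ∪ U)} → Fin (t + 1)) :
    ∏ x, (X x : MvPolynomial α ℤ) ^ ((extendByBounds _ U f x : Fin (t + 1)) : ℕ) =
      (∏ x : {x // x ∈ univ \ (L ∪ U)}, X (x : α) ^ (f x : ℕ)) * ∏ x ∈ U, X x ^ t := by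
  have hcompl : (univ \ (L ∪ U))ᶜ = L ∪ U := by rw [← compl_eq_univ_sdiff, compl_compl]
  have hS : ∏ x ∈ univ \ (L ∪ U), (X x : MvPolynomial α ℤ) ^
      ((extendByBounds _ U f x : Fin (t + 1)) : ℕ) =
        ∏ x : {x // x ∈ univ \ (L ∪ U)}, X (x : α) ^ (f x : ℕ) := by
    rw [← prod_coe_sort]
    exact prod_congr rfl fun x _ ↦ by simp [extendByBounds, x.2]
  have hL : ∏ x ∈ L, (X x : MvPolynomial α ℤ) ^
      ((extendByBounds _ U f x : Fin (t + 1)) : ℕ) = 1 :=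
    prod_eq_one fun x hx ↦ by simp [extendByBounds, hx, disjoint_left.1 hLU hx, bot_eq_zero]
  have hU : ∏ x ∈ U, (X x : MvPolynomial α ℤ) ^
      ((extendByBounds _ U f x : Fin (t + 1)) : ℕ) = ∏ x ∈ U, X x ^ t :=
    prod_congr rfl fun x hx ↦ by simp [extendByBounds, hx]
  rw [← prod_mul_prod_compl (univ \ (L ∪ U)), hcompl, prod_union hLU, hS, hL, hU, one_mul]

variable [PartialOrder α]

open scoped Classical in
noncomputable def orderExtensions (t : ℕ) (L U : Finset α) : Finset (α → Fin (t + 1)) :=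
  {h | Monotone h ∧ Set.EqOn h ⊥ L ∧ Set.EqOn h ⊤ U}

theorem mem_orderExtensions {t : ℕ} {h : α → Fin (t + 1)} :
    h ∈ orderExtensions t L U ↔ Monotone h ∧ Set.EqOn h ⊥ L ∧ Set.EqOn h ⊤ U := by
  simp [orderExtensions]

theorem monotone_extendByBounds {β : Type*} [Preorder β] [BoundedOrder β]
    (hL : IsLowerSet (L : Set α)) (hU : IsUpperSet (U : Set α))
    {f : {x // x ∈ univ \ (L ∪ U)} → β}
    (hf : ∀ a b : {x // x ∈ univ \ (L ∪ U)}, (a : α) ≤ b → f a ≤ f b) :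
    Monotone (extendByBounds (univ \ (L ∪ U)) U f) := by
  intro a b hab
  have hLa : b ∈ L → a ∈ L := fun hb ↦ hL hab hb
  have hUb : a ∈ U → b ∈ U := fun ha ↦ hU hab ha
  unfold extendByBounds
  split_ifs <;> first | exact hf _ _ hab | exact le_top | exact bot_le | (exfalso; simp_all)

theorem multiOrderPoly_mul_prod_X_pow (t : ℕ) (hL : IsLowerSet (L : Set α))
    (hU : IsUpperSet (U : Set α)) (hLU : Disjoint L U) :
    multiOrderPoly (univ \ (L ∪ U)) t * ∏ x ∈ U, X x ^ t =
      ∑ h ∈ orderExtensions t L U, ∏ x, X x ^ (h x : ℕ) := by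
  rw [multiOrderPoly, sum_mul]
  refine sum_nbij' (extendByBounds _ U) (fun h x ↦ h x) (fun f hf ↦ ?_) (fun h hh ↦ ?_)
    (fun f _ ↦ ?_) (fun h hh ↦ ?_) (fun f _ ↦ (prod_X_pow_extendByBounds hLU f).symm)
  · simp only [mem_filter, mem_univ, true_and] at hf
    refine mem_orderExtensions.2 ⟨monotone_extendByBounds hL hU hf, fun x hx ↦ ?_, fun x hx ↦ ?_⟩
      <;> simp [extendByBounds, mem_coe.1 hx, disjoint_left.1 hLU, disjoint_right.1 hLU]
  · simp only [mem_filter, mem_univ, true_and]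
    exact fun a b hab ↦ (mem_orderExtensions.1 hh).1 hab
  · funext a
    simp [extendByBounds, a.2]
  · obtain ⟨-, hhL, hhU⟩ := mem_orderExtensions.1 hh
    funext x
    by_cases hxU : x ∈ U
    · simp [extendByBounds, hxU, hhU (mem_coe.2 hxU)]
    · by_cases hxL : x ∈ L
      · simp [extendByBounds, hxU, hxL, hhL (mem_coe.2 hxL)]
      · simp [extendByBounds, hxU, hxL]

theorem multiOrderPoly_mul_multiOrderPoly_mul_prod_X_pow (t : ℕ) {L₁ U₁ L₂ U₂ : Finset α}
    (hL₁ : IsLowerSet (L₁ : Set α)) (hU₁ : IsUpperSet (U₁ : Set α)) (hLU₁ : Disjoint L₁ U₁)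
    (hL₂ : IsLowerSet (L₂ : Set α)) (hU₂ : IsUpperSet (U₂ : Set α)) (hLU₂ : Disjoint L₂ U₂) :
    multiOrderPoly (univ \ (L₁ ∪ U₁)) t * multiOrderPoly (univ \ (L₂ ∪ U₂)) t *
        ((∏ x ∈ U₁, X x ^ t) * ∏ x ∈ U₂, X x ^ t) =
      ∑ p ∈ orderExtensions t L₁ U₁ ×ˢ orderExtensions t L₂ U₂,
        ∏ x, X x ^ ((p.1 x : ℕ) + p.2 x) := by
  rw [mul_mul_mul_comm, multiOrderPoly_mul_prod_X_pow t hL₁ hU₁ hLU₁,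
    multiOrderPoly_mul_prod_X_pow t hL₂ hU₂ hLU₂, sum_mul_sum, sum_product]
  simp_rw [pow_add, prod_mul_distrib]

theorem mapsTo_uncross_orderExtensions (t : ℕ) (A B C D : Finset α) :
    Set.MapsTo (uncross (α := α) (β := Fin (t + 1)) (↑A \ ↑B ∪ ↑D \ ↑C))
      ↑(orderExtensions t A C ×ˢ orderExtensions t B D)
      ↑(orderExtensions t (A ∩ B) (C ∪ D) ×ˢ orderExtensions t (A ∪ B) (C ∩ D)) := by
  rintro ⟨f, g⟩ hp
  simp only [coe_product, Set.mem_prod, mem_coe, mem_orderExtensions] at hp ⊢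
  obtain ⟨⟨hf, hfA, hfC⟩, hg, hgB, hgD⟩ := hp
  obtain ⟨h₁, h₂, h₃, h₄⟩ := uncross_eqOn hf hg hfA hfC hgB hgD
  push_cast
  exact ⟨⟨(monotone_uncross hf hg).1, h₁, h₂⟩, (monotone_uncross hf hg).2, h₃, h₄⟩

theorem coeff_multiOrderPoly_mul_le {A B C D : Finset α} (t : ℕ)
    (hA : IsLowerSet (A : Set α)) (hB : IsLowerSet (B : Set α))
    (hC : IsUpperSet (C : Set α)) (hD : IsUpperSet (D : Set α))
    (hAC : Disjoint A C) (hBD : Disjoint B D) (d : α →₀ ℕ) :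
    coeff d (multiOrderPoly (univ \ (A ∪ C)) t * multiOrderPoly (univ \ (B ∪ D)) t) ≤
      coeff d (multiOrderPoly (univ \ (A ∩ B ∪ (C ∪ D))) t *
        multiOrderPoly (univ \ (A ∪ B ∪ C ∩ D)) t) := by
  obtain ⟨m, hm⟩ : ∃ m, (∏ x ∈ C, X x ^ t) * ∏ x ∈ D, X x ^ t = monomial m (1 : ℤ) :=
    ⟨_, by rw [prod_X_pow, prod_X_pow, monomial_mul, one_mul]⟩
  have hQ := multiOrderPoly_mul_multiOrderPoly_mul_prod_X_pow t (L₁ := A ∩ B) (U₁ := C ∪ D)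
    (L₂ := A ∪ B) (U₂ := C ∩ D) (by simpa using hA.inter hB) (by simpa using hC.union hD)
    (disjoint_union_right.2 ⟨hAC.mono_left inter_subset_left, hBD.mono_left inter_subset_right⟩)
    (by simpa using hA.union hB) (by simpa using hC.inter hD)
    (disjoint_union_left.2 ⟨hAC.mono_right inter_subset_left, hBD.mono_right inter_subset_right⟩)
  rw [prod_union_inter, hm] at hQ
  have hshift (p : MvPolynomial α ℤ) : coeff d p = coeff (d + m) (p * monomial m 1) := by
    rw [coeff_mul_monomial, mul_one]
  rw [hshift, hshift, hQ, ← hm,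
    multiOrderPoly_mul_multiOrderPoly_mul_prod_X_pow t hA hC hAC hB hD hBD, coeff_sum, coeff_sum]
  refine sum_le_sum_of_injOn _ (mapsTo_uncross_orderExtensions t A B C D)
    uncross_involutive.injective.injOn (fun p _ ↦ ?_) fun p _ ↦ ?_
  · simp_rw [uncross_apply_add Fin.val]
  · rw [coeff_prod_X_pow]
    split_ifs <;> norm_num

end OrderPolynomial

/-- **Multivariate generalization of Fishburn's inequality.** -/
theorem fishburn_multivariate {α : Type*} [Fintype α] [PartialOrder α] [DecidableEq α]
    (t : ℕ) (A B C D : Finset α)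
    (hA : ∀ x ∈ A, ∀ y, y ≤ x → y ∈ A)
    (hB : ∀ x ∈ B, ∀ y, y ≤ x → y ∈ B)
    (hC : ∀ x ∈ C, ∀ y, x ≤ y → y ∈ C)
    (hD : ∀ x ∈ D, ∀ y, x ≤ y → y ∈ D)
    (hAC : A ∩ C = ∅) (hBD : B ∩ D = ∅) :
    ∀ d : α →₀ ℕ,
      0 ≤ MvPolynomial.coeff d
        (multiOrderPoly (Finset.univ \ ((A ∩ B) ∪ (C ∪ D))) t *
            multiOrderPoly (Finset.univ \ ((A ∪ B) ∪ (C ∩ D))) t -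
          multiOrderPoly ((Finset.univ \ A) \ C) t *
            multiOrderPoly ((Finset.univ \ B) \ D) t) := by
  intro d
  rw [coeff_sub, sub_nonneg, sdiff_sdiff_left, sdiff_sdiff_left, sup_eq_union, sup_eq_union]
  exact coeff_multiOrderPoly_mul_le t (fun x y hyx hx ↦ hA x hx y hyx)
    (fun x y hyx hx ↦ hB x hx y hyx) (fun x y hxy hx ↦ hC x hx y hxy)
    (fun x y hxy hx ↦ hD x hx y hxy) (disjoint_iff_inter_eq_empty.2 hAC)
    (disjoint_iff_inter_eq_empty.2 hBD) d
end

section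
/- Let P = (X, ≺) be a finite poset and N ∈ ℕ. Let A, B be lower ideals and C, D be upper ideals of P with A∩C = B∩D = ∅; set V := (A∩B)∪(C∪D) and W := (A∪B)∪(C∩D). For S ⊆ X define K_z(S,N) := Σ_f z₀^{m₀(f)}·z₁^{m₁(f)}⋯z_N^{m_N(f)}, the sum over order-preserving maps f : S → {0,…,N}, where m_i(f) = |f^{-1}(i)|. Then K_z(X−V,N)·K_z(X−W,N) − K_z(X−A−C,N)·K_z(X−B−D,N) has all nonnegative coefficients as a polynomial in z₀,…,z_N. -/
/-!
Extend an order-preserving `f` on `X - A - C` to a monotone `F : X → {0,…,N+2}` by shifting its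
values up by one and sending `A` to `0` and `C` to `N+2`; likewise `g` on `X - B - D` gives `G`.
Both products of `K_z` then become weighted counts of pairs `(F, G)` of monotone maps with
prescribed fibres over `0` and `N+2`, where the weight of a pair only depends on the multisets
`{F x, G x}`. The pointwise maximum and minimum of `F` and `G` have the fibres required for
`X - V` and `X - W`, but `(F, G) ↦ (max, min)` is not injective. Instead, swap `F` and `G` only on
the points connected to a point where the fibre conditions force a swap, through pairs `x ≤ y`
whose value intervals `[min, max]` overlap. On this set `F < G`, which keeps the swapped maps
monotone; and since the overlap relation only sees the intervals, the swap set is unchanged by the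
swap, which is therefore an involution.
-/

open scoped Classical in
/-- `K_z(S,N) = Σ_f z₀^{m₀(f)}⋯z_N^{m_N(f)}`, summed over order-preserving maps
`f : S → {0,…,N}`, where `m_i(f) = |f⁻¹(i)|`; equivalently the monomial is
`Π_{x ∈ S} z_{f(x)}`. -/
noncomputable def Kpoly {α : Type*} [Fintype α] [PartialOrder α]
    (S : Finset α) (N : ℕ) : MvPolynomial (Fin (N + 1)) ℤ :=
  ∑ f ∈ Finset.univ.filter
      (fun f : {x // x ∈ S} → Fin (N + 1) =>
        ∀ a b : {x // x ∈ S}, (a : α) ≤ (b : α) → f a ≤ f b),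
    ∏ x : {x // x ∈ S}, MvPolynomial.X (f x)

namespace Fishburn

open Relation
open scoped Classical

section Swap

variable {α β : Type*} [LinearOrder β]

section Preorder

variable [Preorder α] {F G : α → β} {M : Set α} {x y : α}

def Overlap (F G : α → β) (x y : α) : Prop :=
  x ≤ y ∧ min (F y) (G y) < max (F x) (G x)

def swapSet (M : Set α) (F G : α → β) : Set α :=
  {y | ∃ m ∈ M, EqvGen (Overlap F G) m y}

noncomputable def linkedSwap (M : Set α) (p : (α → β) × (α → β)) :
    (α → β) × (α → β) :=
  (fun x => if x ∈ swapSet M p.1 p.2 then p.2 x else p.1 x,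
   fun x => if x ∈ swapSet M p.1 p.2 then p.1 x else p.2 x)

lemma lt_iff_lt_of_overlap (hF : Monotone F) (hG : Monotone G) (h : Overlap F G x y) :
    F x < G x ↔ F y < G y := by
  obtain ⟨hxy, hlt⟩ := h
  have := hF hxy
  have := hG hxy
  simp only [min_lt_iff, lt_max_iff] at hlt
  constructor <;> intro h₁ <;> by_contra! h₂ <;> rcases hlt with (h | h) | (h | h) <;> order

lemma lt_iff_lt_of_eqvGen (hF : Monotone F) (hG : Monotone G)
    (h : EqvGen (Overlap F G) x y) :
    F x < G x ↔ F y < G y := by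
  induction h with
  | rel _ _ h => exact lt_iff_lt_of_overlap hF hG h
  | refl => rfl
  | symm _ _ _ ih => exact ih.symm
  | trans _ _ _ _ _ ih₁ ih₂ => exact ih₁.trans ih₂

lemma lt_of_mem_swapSet (hF : Monotone F) (hG : Monotone G) (hM : ∀ m ∈ M, F m < G m)
    (hx : x ∈ swapSet M F G) : F x < G x := by
  obtain ⟨m, hm, h⟩ := hx
  exact (lt_iff_lt_of_eqvGen hF hG h).1 (hM m hm)

lemma subset_swapSet : M ⊆ swapSet M F G :=
  fun x hx => ⟨x, hx, .refl x⟩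

lemma mem_swapSet_of_overlap (hx : x ∈ swapSet M F G)
    (h : Overlap F G x y ∨ Overlap F G y x) : y ∈ swapSet M F G := by
  obtain ⟨m, hm, hmx⟩ := hx
  refine ⟨m, hm, hmx.trans _ _ _ ?_⟩
  rcases h with h | h
  · exact .rel _ _ h
  · exact .symm _ _ (.rel _ _ h)

lemma monotone_linkedSwap_fst (hF : Monotone F) (hG : Monotone G)
    (hM : ∀ m ∈ M, F m < G m) :
    Monotone (linkedSwap M (F, G)).1 := by
  intro x y hxy
  simp only [linkedSwap]
  split_ifs with hx hy hy
  · exact hG hxy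
  · by_contra! hlt
    exact hy (mem_swapSet_of_overlap hx
      (.inl ⟨hxy, (min_le_left _ _).trans_lt (hlt.trans_le (le_max_right _ _))⟩))
  · exact (hF hxy).trans (lt_of_mem_swapSet hF hG hM hy).le
  · exact hF hxy

lemma monotone_linkedSwap_snd (hF : Monotone F) (hG : Monotone G)
    (hM : ∀ m ∈ M, F m < G m) :
    Monotone (linkedSwap M (F, G)).2 := by
  intro x y hxy
  simp only [linkedSwap]
  split_ifs with hx hy hy
  · exact hF hxy
  · exact (lt_of_mem_swapSet hF hG hM hx).le.trans (hG hxy)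
  · by_contra! hlt
    exact hx (mem_swapSet_of_overlap hy
      (.inr ⟨hxy, (min_le_left _ _).trans_lt (hlt.trans_le (le_max_right _ _))⟩))
  · exact hG hxy

lemma linkedSwap_apply_eq_or (p : (α → β) × (α → β)) (x : α) :
    ((linkedSwap M p).1 x = p.1 x ∧ (linkedSwap M p).2 x = p.2 x) ∨
      ((linkedSwap M p).1 x = p.2 x ∧ (linkedSwap M p).2 x = p.1 x) := by
  simp only [linkedSwap]
  split_ifs <;> simp

lemma swapSet_linkedSwap (p : (α → β) × (α → β)) :
    swapSet M (linkedSwap M p).1 (linkedSwap M p).2 = swapSet M p.1 p.2 := by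
  have : Overlap (linkedSwap M p).1 (linkedSwap M p).2 = Overlap p.1 p.2 := by
    ext x y
    rcases linkedSwap_apply_eq_or (M := M) p x with ⟨hx₁, hx₂⟩ | ⟨hx₁, hx₂⟩ <;>
    rcases linkedSwap_apply_eq_or (M := M) p y with ⟨hy₁, hy₂⟩ | ⟨hy₁, hy₂⟩ <;>
    simp only [Overlap, hx₁, hx₂, hy₁, hy₂, min_comm, max_comm]
  rw [swapSet, swapSet, this]

lemma linkedSwap_involutive (M : Set α) : Function.Involutive (linkedSwap (β := β) M) := by
  intro p
  rw [linkedSwap, swapSet_linkedSwap]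
  ext x <;> simp only [linkedSwap] <;> split_ifs <;> rfl

lemma prod_mul_prod_linkedSwap [Fintype α] {R : Type*} [CommMonoid R] (w : β → R)
    (p : (α → β) × (α → β)) :
    (∏ x, w ((linkedSwap M p).1 x)) * ∏ x, w ((linkedSwap M p).2 x) =
      (∏ x, w (p.1 x)) * ∏ x, w (p.2 x) := by
  rw [← Finset.prod_mul_distrib, ← Finset.prod_mul_distrib]
  refine Finset.prod_congr rfl fun x _ => ?_
  rcases linkedSwap_apply_eq_or (M := M) p x with ⟨h₁, h₂⟩ | ⟨h₁, h₂⟩ <;> rw [h₁, h₂]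
  exact mul_comm _ _

end Preorder

section Boundary

variable [BoundedOrder β] {F G : α → β} {x : α}

/-- The points where the first map must take the value of the second, if it is to have bottom
fibre `F⁻¹ ⊥ ∩ G⁻¹ ⊥` and top fibre `F⁻¹ ⊤ ∪ G⁻¹ ⊤`. -/
def mandatorySet (F G : α → β) : Set α :=
  {x | F x = ⊥ ∧ G x ≠ ⊥ ∨ G x = ⊤ ∧ F x ≠ ⊤}

lemma lt_of_mem_mandatorySet (hx : x ∈ mandatorySet F G) : F x < G x := by
  rcases hx with ⟨h₁, h₂⟩ | ⟨h₁, h₂⟩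
  · exact h₁ ▸ bot_lt_iff_ne_bot.2 h₂
  · exact h₁ ▸ lt_top_iff_ne_top.2 h₂

variable [Preorder α]

lemma linkedSwap_fst_eq_bot (hF : Monotone F) (hG : Monotone G) :
    (linkedSwap (mandatorySet F G) (F, G)).1 x = ⊥ ↔ F x = ⊥ ∧ G x = ⊥ := by
  simp only [linkedSwap]
  split_ifs with hx
  · have := lt_of_mem_swapSet hF hG (fun _ => lt_of_mem_mandatorySet) hx
    constructor <;> intro h <;> simp_all
  · have : x ∉ mandatorySet F G := fun h => hx (subset_swapSet h)
    simp only [mandatorySet, Set.mem_ofPred_eq] at this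
    tauto

lemma linkedSwap_fst_eq_top (hF : Monotone F) (hG : Monotone G) :
    (linkedSwap (mandatorySet F G) (F, G)).1 x = ⊤ ↔ F x = ⊤ ∨ G x = ⊤ := by
  simp only [linkedSwap]
  split_ifs with hx
  · have := lt_of_mem_swapSet hF hG (fun _ => lt_of_mem_mandatorySet) hx
    constructor <;> intro h <;> simp_all [this.ne_top]
  · have : x ∉ mandatorySet F G := fun h => hx (subset_swapSet h)
    simp only [mandatorySet, Set.mem_ofPred_eq] at this
    tauto

lemma linkedSwap_snd_eq_bot (hF : Monotone F) (hG : Monotone G) :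
    (linkedSwap (mandatorySet F G) (F, G)).2 x = ⊥ ↔ F x = ⊥ ∨ G x = ⊥ := by
  simp only [linkedSwap]
  split_ifs with hx
  · have := lt_of_mem_swapSet hF hG (fun _ => lt_of_mem_mandatorySet) hx
    constructor <;> intro h <;> simp_all [this.ne_bot]
  · have : x ∉ mandatorySet F G := fun h => hx (subset_swapSet h)
    simp only [mandatorySet, Set.mem_ofPred_eq] at this
    tauto

lemma linkedSwap_snd_eq_top (hF : Monotone F) (hG : Monotone G) :
    (linkedSwap (mandatorySet F G) (F, G)).2 x = ⊤ ↔ F x = ⊤ ∧ G x = ⊤ := by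
  simp only [linkedSwap]
  split_ifs with hx
  · have := lt_of_mem_swapSet hF hG (fun _ => lt_of_mem_mandatorySet) hx
    constructor <;> intro h <;> simp_all
  · have : x ∉ mandatorySet F G := fun h => hx (subset_swapSet h)
    simp only [mandatorySet, Set.mem_ofPred_eq] at this
    tauto

end Boundary

end Swap

lemma _root_.Finset.sum_le_sum_of_injOn_s6 {ι κ R : Type*} [AddCommMonoid R] [PartialOrder R]
    [IsOrderedAddMonoid R] {s : Finset ι} {t : Finset κ} {f : ι → R} {g : κ → R} (e : ι → κ)
    (he : Set.InjOn e s) (hst : Set.MapsTo e s t) (hg : ∀ k ∈ t, 0 ≤ g k)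
    (hfg : ∀ i ∈ s, f i = g (e i)) : ∑ i ∈ s, f i ≤ ∑ k ∈ t, g k := by
  classical
  calc ∑ i ∈ s, f i = ∑ k ∈ s.image e, g k := by
        rw [Finset.sum_image he]; exact Finset.sum_congr rfl hfg
    _ ≤ ∑ k ∈ t, g k :=
        Finset.sum_le_sum_of_subset_of_nonneg (Finset.image_subset_iff.2 hst)
          fun k hk _ => hg k hk

lemma _root_.MvPolynomial.coeff_mul_nonneg {σ : Type*} {p q : MvPolynomial σ ℤ}
    (hp : ∀ d, 0 ≤ p.coeff d) (hq : ∀ d, 0 ≤ q.coeff d) (d : σ →₀ ℕ) : 0 ≤ (p * q).coeff d := by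
  rw [MvPolynomial.coeff_mul]
  exact Finset.sum_nonneg fun _ _ => mul_nonneg (hp _) (hq _)

section Kpoly

open Finset MvPolynomial

variable {α : Type*} [Fintype α] {N : ℕ}

/-- `z_{i-1}` at an interior value `i`, and `1` at the end values `0` and `N+2`, which encode the
removed lower and upper ideal. -/
noncomputable def weight (N : ℕ) : Fin (N + 3) → MvPolynomial (Fin (N + 1)) ℤ :=
  Fin.cases 1 (Fin.lastCases 1 X)

@[simp] lemma weight_bot : weight N ⊥ = 1 := rfl

@[simp] lemma weight_top : weight N ⊤ = 1 := by
  rw [Fin.top_eq_last, ← Fin.succ_last, weight, Fin.cases_succ, Fin.lastCases_last]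

@[simp] lemma weight_castSucc_succ (k : Fin (N + 1)) : weight N k.castSucc.succ = X k := by
  simp [weight]

lemma castSucc_succ_ne_bot (k : Fin (N + 1)) : (k.castSucc.succ : Fin (N + 3)) ≠ ⊥ :=
  Fin.succ_ne_zero _

lemma castSucc_succ_ne_top (k : Fin (N + 1)) : (k.castSucc.succ : Fin (N + 3)) ≠ ⊤ := by
  simpa [Fin.ext_iff, Fin.top_eq_last] using k.isLt.ne

lemma exists_castSucc_succ_eq {i : Fin (N + 3)} (h₀ : i ≠ ⊥) (h₁ : i ≠ ⊤) :
    ∃ k : Fin (N + 1), k.castSucc.succ = i := by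
  obtain rfl | ⟨j, rfl⟩ := Fin.eq_zero_or_eq_succ i
  · exact absurd rfl h₀
  obtain ⟨k, rfl⟩ | rfl := Fin.eq_castSucc_or_eq_last j
  · exact ⟨k, rfl⟩
  · exact absurd rfl h₁

lemma coeff_weight_nonneg (i : Fin (N + 3)) (d : Fin (N + 1) →₀ ℕ) :
    0 ≤ (weight N i).coeff d := by
  by_cases h₀ : i = ⊥
  · simp only [h₀, weight_bot, coeff_one]; split_ifs <;> simp
  by_cases h₁ : i = ⊤
  · simp only [h₁, weight_top, coeff_one]; split_ifs <;> simp
  obtain ⟨k, rfl⟩ := exists_castSucc_succ_eq h₀ h₁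
  simp only [weight_castSucc_succ, coeff_X]
  split_ifs <;> simp

lemma coeff_prod_weight_mul_prod_weight_nonneg (F G : α → Fin (N + 3))
    (d : Fin (N + 1) →₀ ℕ) : 0 ≤ ((∏ x, weight N (F x)) * ∏ x, weight N (G x)).coeff d := by
  have hprod (H : α → Fin (N + 3)) : ∀ d, 0 ≤ (∏ x, weight N (H x)).coeff d :=
    prod_induction _ (fun q : MvPolynomial (Fin (N + 1)) ℤ => ∀ d, 0 ≤ q.coeff d)
      (fun _ _ => coeff_mul_nonneg) (fun d => by rw [coeff_one]; split_ifs <;> simp)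
      fun x _ => coeff_weight_nonneg (H x)
  exact coeff_mul_nonneg (hprod F) (hprod G) d

noncomputable def extend {S : Finset α} (U : Finset α) (f : S → Fin (N + 1)) (x : α) :
    Fin (N + 3) :=
  if hx : x ∈ S then (f ⟨x, hx⟩).castSucc.succ else if x ∈ U then ⊥ else ⊤

section Extend

variable [DecidableEq α] {U V : Finset α} {f : ↥(univ \ (U ∪ V)) → Fin (N + 1)}

lemma extend_eq_bot_iff (x : α) : extend U f x = ⊥ ↔ x ∈ U := by
  simp only [extend, mem_sdiff, mem_univ, mem_union, true_and, not_or]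
  split_ifs <;> simp_all [castSucc_succ_ne_bot]

lemma extend_eq_top_iff (hUV : Disjoint U V) (x : α) : extend U f x = ⊤ ↔ x ∈ V := by
  have hVU : x ∈ V → x ∉ U := fun h h' => disjoint_left.1 hUV h' h
  simp only [extend, mem_sdiff, mem_univ, mem_union, true_and, not_or]
  split_ifs <;> simp_all [castSucc_succ_ne_top]

lemma prod_weight_extend : ∏ x, weight N (extend U f x) = ∏ x, X (f x) := by
  rw [← prod_subset (subset_univ (univ \ (U ∪ V))), ← prod_coe_sort]
  · exact prod_congr rfl fun x _ => by simp [extend, x.2]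
  · intro x _ hx
    simp only [extend, dif_neg hx]
    split_ifs <;> simp

variable [PartialOrder α]

lemma monotone_extend (hU : IsLowerSet (U : Set α)) (hV : IsUpperSet (V : Set α))
    (hUV : Disjoint U V) (hf : ∀ a b : ↥(univ \ (U ∪ V)), (a : α) ≤ b → f a ≤ f b) :
    Monotone (extend U f) := by
  intro x y hxy
  have hxU : y ∈ U → x ∈ U := hU hxy
  have hyV : x ∈ V → y ∈ V := hV hxy
  have hVU : y ∈ V → y ∉ U := fun h h' => disjoint_left.1 hUV h' h
  simp only [extend, mem_sdiff, mem_univ, mem_union, true_and, not_or] at *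
  split_ifs <;> first
    | exact bot_le | exact le_top | tauto
    | exact Fin.succ_le_succ_iff.2 (Fin.castSucc_le_castSucc_iff.2 (hf _ _ hxy))

end Extend

variable [PartialOrder α]

noncomputable def framedMaps (N : ℕ) (U V : Finset α) : Finset (α → Fin (N + 3)) :=
  univ.filter fun F => Monotone F ∧ (∀ x, F x = ⊥ ↔ x ∈ U) ∧ ∀ x, F x = ⊤ ↔ x ∈ V

lemma Kpoly_eq_sum_framedMaps [DecidableEq α] {U V : Finset α} (hU : IsLowerSet (U : Set α))
    (hV : IsUpperSet (V : Set α)) (hUV : Disjoint U V) :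
    Kpoly (univ \ (U ∪ V)) N = ∑ F ∈ framedMaps N U V, ∏ x, weight N (F x) := by
  unfold Kpoly
  refine sum_bij (fun f _ => extend U f) ?_ ?_ ?_ fun f _ => prod_weight_extend.symm
  · intro f hf
    simp only [framedMaps, mem_filter, mem_univ, true_and] at hf ⊢
    exact ⟨monotone_extend hU hV hUV hf, extend_eq_bot_iff, extend_eq_top_iff hUV⟩
  · intro f _ g _ h
    funext x
    simpa [extend, x.2] using congrFun h x
  · intro F hF
    simp only [framedMaps, mem_filter, mem_univ, true_and] at hF
    obtain ⟨hmono, hbot, htop⟩ := hF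
    have hint (x : ↥(univ \ (U ∪ V))) : ∃ k : Fin (N + 1), k.castSucc.succ = F x := by
      have hx := x.2
      simp only [mem_sdiff, mem_univ, mem_union, true_and, not_or] at hx
      exact exists_castSucc_succ_eq (mt (hbot x).1 hx.1) (mt (htop x).1 hx.2)
    choose f hf using hint
    refine ⟨f, ?_, ?_⟩
    · simp only [mem_filter, mem_univ, true_and]
      intro a b hab
      simpa only [← hf, Fin.succ_le_succ_iff, Fin.castSucc_le_castSucc_iff] using hmono hab
    · funext x
      simp only [extend]
      split_ifs with hx hU'
      · exact hf ⟨x, hx⟩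
      · exact ((hbot x).2 hU').symm
      · exact ((htop x).2 (by simp_all)).symm

lemma linkedSwap_mem_framedMaps [DecidableEq α] {A B C D : Finset α}
    {p : (α → Fin (N + 3)) × (α → Fin (N + 3))}
    (hp : p ∈ framedMaps N A C ×ˢ framedMaps N B D) :
    linkedSwap ↑(A \ B ∪ D \ C) p ∈
      framedMaps N (A ∩ B) (C ∪ D) ×ˢ framedMaps N (A ∪ B) (C ∩ D) := by
  obtain ⟨F, G⟩ := p
  simp only [framedMaps, mem_product, mem_filter, mem_univ, true_and] at hp ⊢
  obtain ⟨⟨hF, hF₀, hF₁⟩, hG, hG₀, hG₁⟩ := hp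
  have hM : (↑(A \ B ∪ D \ C) : Set α) = mandatorySet F G := by
    ext x
    simp [mandatorySet, hF₀, hG₀, hF₁, hG₁]
  have hlt (m : α) (hm : m ∈ mandatorySet F G) : F m < G m := lt_of_mem_mandatorySet hm
  rw [hM]
  refine ⟨⟨monotone_linkedSwap_fst hF hG hlt, fun x => ?_, fun x => ?_⟩,
    monotone_linkedSwap_snd hF hG hlt, fun x => ?_, fun x => ?_⟩
  · rw [linkedSwap_fst_eq_bot hF hG, hF₀, hG₀, mem_inter]
  · rw [linkedSwap_fst_eq_top hF hG, hF₁, hG₁, mem_union]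
  · rw [linkedSwap_snd_eq_bot hF hG, hF₀, hG₀, mem_union]
  · rw [linkedSwap_snd_eq_top hF hG, hF₁, hG₁, mem_inter]

end Kpoly

end Fishburn

open Finset MvPolynomial Fishburn in
/-- **Generalized Lam–Pylyavskyy inequality for the polynomials `K_z`.** -/
theorem fishburn_Kpoly {α : Type*} [Fintype α] [PartialOrder α] [DecidableEq α]
    (N : ℕ) (A B C D : Finset α)
    (hA : ∀ x ∈ A, ∀ y, y ≤ x → y ∈ A)
    (hB : ∀ x ∈ B, ∀ y, y ≤ x → y ∈ B)
    (hC : ∀ x ∈ C, ∀ y, x ≤ y → y ∈ C)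
    (hD : ∀ x ∈ D, ∀ y, x ≤ y → y ∈ D)
    (hAC : A ∩ C = ∅) (hBD : B ∩ D = ∅) :
    ∀ d : Fin (N + 1) →₀ ℕ,
      0 ≤ MvPolynomial.coeff d
        (Kpoly (Finset.univ \ ((A ∩ B) ∪ (C ∪ D))) N *
            Kpoly (Finset.univ \ ((A ∪ B) ∪ (C ∩ D))) N -
          Kpoly ((Finset.univ \ A) \ C) N * Kpoly ((Finset.univ \ B) \ D) N) := by
  intro d
  have hA' : IsLowerSet (A : Set α) := fun _ _ hyx hx => hA _ hx _ hyx
  have hB' : IsLowerSet (B : Set α) := fun _ _ hyx hx => hB _ hx _ hyx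
  have hC' : IsUpperSet (C : Set α) := fun _ _ hxy hx => hC _ hx _ hxy
  have hD' : IsUpperSet (D : Set α) := fun _ _ hxy hx => hD _ hx _ hxy
  have hAC' : Disjoint A C := disjoint_iff_inter_eq_empty.2 hAC
  have hBD' : Disjoint B D := disjoint_iff_inter_eq_empty.2 hBD
  have hV : Kpoly (univ \ ((A ∩ B) ∪ (C ∪ D))) N =
      ∑ F ∈ framedMaps N (A ∩ B) (C ∪ D), ∏ x, weight N (F x) :=
    Kpoly_eq_sum_framedMaps (by push_cast; exact hA'.inter hB') (by push_cast; exact hC'.union hD')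
      (disjoint_union_right.2 ⟨hAC'.mono_left inter_subset_left, hBD'.mono_left inter_subset_right⟩)
  have hW : Kpoly (univ \ ((A ∪ B) ∪ (C ∩ D))) N =
      ∑ F ∈ framedMaps N (A ∪ B) (C ∩ D), ∏ x, weight N (F x) :=
    Kpoly_eq_sum_framedMaps (by push_cast; exact hA'.union hB') (by push_cast; exact hC'.inter hD')
      (disjoint_union_left.2
        ⟨hAC'.mono_right inter_subset_left, hBD'.mono_right inter_subset_right⟩)
  rw [coeff_sub, sub_nonneg, sdiff_sdiff_left, sdiff_sdiff_left, Finset.sup_eq_union,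
    Finset.sup_eq_union, Kpoly_eq_sum_framedMaps hA' hC' hAC', Kpoly_eq_sum_framedMaps hB' hD' hBD',
    hV, hW, sum_mul_sum, sum_mul_sum, ← sum_product', ← sum_product', coeff_sum, coeff_sum]
  exact sum_le_sum_of_injOn_s6 (linkedSwap ↑(A \ B ∪ D \ C))
    (linkedSwap_involutive _).injective.injOn (fun _ hp => linkedSwap_mem_framedMaps hp)
    (fun q _ => coeff_prod_weight_mul_prod_weight_nonneg q.1 q.2 d)
    (fun p _ => by rw [prod_mul_prod_linkedSwap])
end

section
/- Let P = (X, ≺) be a finite poset and let A, B ⊆ X be lower ideals. Then for every t ∈ ℕ, Ω(A∪B, t)·Ω(A∩B, t) ≥ Ω(A, t)·Ω(B, t), where Ω(S,t) is the number of order-preserving maps from the induced subposet on S to {0,…,t}. -/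
open Finset FinsetFamily

section MonotoneTopOutside

variable {α β : Type*}

def monotoneTopOutside [Preorder α] [Preorder β] [OrderTop β] (S : Set α) : Set (α → β) :=
  {f | Monotone f ∧ ∀ x ∉ S, f x = ⊤}

section Lattice

variable [Preorder α] [Lattice β] [OrderTop β] {A B : Set α} {f g : α → β}

lemma inf_mem_monotoneTopOutside_union (hf : f ∈ monotoneTopOutside A)
    (hg : g ∈ monotoneTopOutside B) : f ⊓ g ∈ monotoneTopOutside (A ∪ B) := by
  refine ⟨hf.1.inf hg.1, fun x hx => ?_⟩
  rw [Set.mem_union, not_or] at hx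
  simp [hf.2 x hx.1, hg.2 x hx.2]

lemma sup_mem_monotoneTopOutside_inter (hf : f ∈ monotoneTopOutside A)
    (hg : g ∈ monotoneTopOutside B) : f ⊔ g ∈ monotoneTopOutside (A ∩ B) := by
  refine ⟨hf.1.sup hg.1, fun x hx => ?_⟩
  rw [Set.mem_inter_iff, not_and_or] at hx
  rcases hx with hxA | hxB
  · simp [hf.2 x hxA]
  · simp [hg.2 x hxB]

end Lattice

lemma card_monotoneTopOutside_mul_le [Preorder α] [Fintype α] [DistribLattice β]
    [OrderTop β] [Fintype β] (A B : Set α) :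
    Nat.card (monotoneTopOutside A : Set (α → β)) * Nat.card (monotoneTopOutside B : Set (α → β))
      ≤ Nat.card (monotoneTopOutside (A ∪ B) : Set (α → β)) *
        Nat.card (monotoneTopOutside (A ∩ B) : Set (α → β)) := by
  classical
  simp only [Nat.card_eq_card_toFinset]
  set 𝒜 := (monotoneTopOutside A : Set (α → β)).toFinset
  set ℬ := (monotoneTopOutside B : Set (α → β)).toFinset
  calc #𝒜 * #ℬ ≤ #(𝒜 ⊼ ℬ) * #(𝒜 ⊻ ℬ) :=
        le_card_infs_mul_card_sups _ _
    _ ≤ _ := by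
      gcongr
      · intro h hh
        obtain ⟨f, hf, g, hg, rfl⟩ := mem_infs.1 hh
        exact Set.mem_toFinset.2 <|
          inf_mem_monotoneTopOutside_union (Set.mem_toFinset.1 hf) (Set.mem_toFinset.1 hg)
      · intro h hh
        obtain ⟨f, hf, g, hg, rfl⟩ := mem_sups.1 hh
        exact Set.mem_toFinset.2 <|
          sup_mem_monotoneTopOutside_inter (Set.mem_toFinset.1 hf) (Set.mem_toFinset.1 hg)

def IsLowerSet.monotoneEquivTopOutside [Preorder α] [Preorder β] [OrderTop β] {S : Set α}
    [DecidablePred (· ∈ S)] (hS : IsLowerSet S) :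
    {f : S → β // Monotone f} ≃ (monotoneTopOutside S : Set (α → β)) where
  toFun f := ⟨fun x => if h : x ∈ S then f.1 ⟨x, h⟩ else ⊤, fun x y hxy => by
      dsimp only
      by_cases hy : y ∈ S
      · rw [dif_pos (hS hxy hy), dif_pos hy]
        exact f.2 hxy
      · rw [dif_neg hy]
        exact le_top, fun x hx => dif_neg hx⟩
  invFun g := ⟨fun x => g.1 x, fun _ _ hxy => g.2.1 hxy⟩
  left_inv f := by ext x; simp
  right_inv g := by
    ext x
    by_cases hx : x ∈ S
    · simp [hx]
    · simp [hx, g.2.2 x hx]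

lemma orderPoly_eq_card_monotoneTopOutside [PartialOrder α] (S : Finset α)
    (hS : IsLowerSet (S : Set α)) (t : ℕ) :
    orderPoly S t = Nat.card (monotoneTopOutside S : Set (α → Fin (t + 1))) := by
  classical
  exact Nat.card_congr hS.monotoneEquivTopOutside

end MonotoneTopOutside

/-- Correlation inequality for order polynomials of lower ideals. -/
theorem orderPoly_ideal_correlation {α : Type*} [Fintype α] [PartialOrder α] [DecidableEq α]
    (A B : Finset α)
    (hA : ∀ x ∈ A, ∀ y, y ≤ x → y ∈ A)
    (hB : ∀ x ∈ B, ∀ y, y ≤ x → y ∈ B)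
    (t : ℕ) :
    orderPoly (A ∪ B) t * orderPoly (A ∩ B) t ≥ orderPoly A t * orderPoly B t := by
  have hA' : IsLowerSet (A : Set α) := fun x y hyx hx => hA x hx y hyx
  have hB' : IsLowerSet (B : Set α) := fun x y hyx hx => hB x hx y hyx
  rw [ge_iff_le, orderPoly_eq_card_monotoneTopOutside A hA',
    orderPoly_eq_card_monotoneTopOutside B hB',
    orderPoly_eq_card_monotoneTopOutside (A ∪ B) (by simpa using hA'.union hB'),
    orderPoly_eq_card_monotoneTopOutside (A ∩ B) (by simpa using hA'.inter hB'),
    coe_union, coe_inter]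
  exact card_monotoneTopOutside_mul_le _ _
end

section
/- Let P = (X, ≺) be a finite poset and let A, B ⊆ X be lower ideals; let q be a formal variable and t ∈ ℕ. Define Ω_q(S,t) := Σ_f q^{Σ_{x∈S} f(x)}, summed over order-preserving maps f : S → {0,…,t}. Then Ω_q(A∪B,t)·Ω_q(A∩B,t) − Ω_q(A,t)·Ω_q(B,t) is a polynomial in q with nonnegative coefficients. -/
open scoped Classical in
/-- `Ω_q(S,t) = Σ_f q^{Σ_{x∈S} f(x)}`, summed over order-preserving maps
`f : S → {0,…,t}`. -/
noncomputable def qOrderPoly {α : Type*} [Fintype α] [PartialOrder α]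
    (S : Finset α) (t : ℕ) : Polynomial ℤ :=
  ∑ f ∈ Finset.univ.filter
      (fun f : {x // x ∈ S} → Fin (t + 1) =>
        ∀ a b : {x // x ∈ S}, (a : α) ≤ (b : α) → f a ≤ f b),
    Polynomial.X ^ (∑ x : {x // x ∈ S}, (f x : ℕ))

/-!
An order-preserving `f : S → {0,…,t}` is the same as a lower set `I ⊆ S × {0,…,t-1}` of
`α × Fin t` whose row over `x` is `{i | i < t - f x}`, and `|f|` is the corank
`#(S × Fin t \ I)`.
The theorem is therefore the case `E = F = ∅` of an inequality between generating polynomials of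
intervals in the lattice of lower sets,
`P(E, A) · P(F, B) ≤ P(E ∪ F, A ∪ B) · P(E ∩ F, A ∩ B)` coefficientwise,
proved by induction on `#(A ∪ B) + #(A \ E) + #(B \ F)`. If `A ≠ B`, take a maximal element `m`
of `A ∪ B` lying in `A \ B` and split `P(E, A)` and `P(E ∪ F, A ∪ B)` according to whether the
lower set contains `m`; only the side of `A` splits. If `A = B` but `E ≠ F`, take `m ∈ E \ F`
minimal in `E ∆ F` and split `P(F, A)` and `P(E ∩ F, A)` in the same way.
-/

open Finset Polynomial
open scoped symmDiff

def CoeffLE (p q : ℤ[X]) : Prop := ∀ n, p.coeff n ≤ q.coeff n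

namespace CoeffLE

variable {p q r p' q' : ℤ[X]}

theorem refl (p : ℤ[X]) : CoeffLE p p := fun _ => le_rfl

theorem trans (h : CoeffLE p q) (h' : CoeffLE q r) : CoeffLE p r := fun n => (h n).trans (h' n)

theorem add (h : CoeffLE p q) (h' : CoeffLE p' q') : CoeffLE (p + p') (q + q') := fun n => by
  simpa only [coeff_add] using add_le_add (h n) (h' n)

theorem mul (hp : CoeffLE 0 p) (hp' : CoeffLE 0 p') (h : CoeffLE p q) (h' : CoeffLE p' q') :
    CoeffLE (p * p') (q * q') := fun n => by
  have nonneg (f : ℤ[X]) (hf : CoeffLE 0 f) k : 0 ≤ f.coeff k := by simpa using hf k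
  rw [coeff_mul, coeff_mul]
  exact sum_le_sum fun ij _ =>
    mul_le_mul (h _) (h' _) (nonneg p' hp' _) ((nonneg p hp _).trans (h _))

theorem X_pow_mul (k : ℕ) (h : CoeffLE p q) : CoeffLE (X ^ k * p) (X ^ k * q) := fun n => by
  simp only [coeff_X_pow_mul']
  split_ifs
  exacts [h _, le_rfl]

end CoeffLE

theorem Finset.card_erase_sdiff_le {γ : Type*} [DecidableEq γ] {s t u : Finset γ} {a : γ}
    (h : s.erase a ⊆ u) : #(t.erase a \ u) ≤ #(t \ s) :=
  card_le_card fun x hx => by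
    simp only [mem_sdiff, mem_erase] at hx ⊢
    exact ⟨hx.1.2, fun hxs => hx.2 (h (mem_erase.2 ⟨hx.1.1, hxs⟩))⟩

theorem Finset.card_erase_union_lt {γ : Type*} [DecidableEq γ] {s t : Finset γ} {a : γ}
    (hs : a ∈ s) (ht : a ∉ t) : #(s.erase a ∪ t) < #(s ∪ t) := by
  have : s.erase a ∪ t = (s ∪ t).erase a := by rw [erase_union_distrib, erase_eq_of_notMem ht]
  rw [this]
  exact card_erase_lt_of_mem (mem_union_left t hs)

section LowerSets

variable {β : Type*} [PartialOrder β]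

theorem IsLowerSet.finset_filter {A : Finset β} (hA : IsLowerSet (A : Set β)) {p : β → Prop}
    [DecidablePred p] (hp : IsLowerSet {x | p x}) : IsLowerSet (↑{x ∈ A | p x} : Set β) := by
  rw [coe_filter]
  exact hA.inter hp

variable [DecidableEq β] {E F A B I : Finset β} {m : β}

theorem IsLowerSet.erase_maximal (hI : IsLowerSet (I : Set β)) (hIA : I ⊆ A)
    (hm : Maximal (· ∈ A) m) : IsLowerSet (I.erase m : Set β) := by
  intro x y hyx hx
  simp only [coe_erase, Set.mem_sdiff, mem_coe, Set.mem_singleton_iff] at hx ⊢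
  refine ⟨hI hyx hx.1, fun hy => hx.2 ?_⟩
  subst hy
  exact le_antisymm (hm.2 (hIA hx.1) hyx) hyx

theorem IsLowerSet.insert_of_lt (hI : IsLowerSet (I : Set β)) (h : ∀ y < m, y ∈ I) :
    IsLowerSet ((insert m I : Finset β) : Set β) := by
  intro x y hyx hx
  simp only [coe_insert, Set.mem_insert_iff, mem_coe] at hx ⊢
  rcases hx with rfl | hx
  · exact hyx.eq_or_lt.imp id (h y)
  · exact Or.inr (hI hyx hx)

theorem exists_maximal_mem_symmDiff (hA : IsLowerSet (A : Set β)) (hB : IsLowerSet (B : Set β))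
    (h : A ≠ B) : ∃ m, Maximal (· ∈ A ∪ B) m ∧ m ∈ A ∆ B := by
  obtain ⟨x, hx⟩ := symmDiff_nonempty.2 h
  obtain ⟨m, hxm, hm⟩ := exists_le_maximal (A ∪ B) (symmDiff_subset_union hx)
  have hmAB : m ∈ A → m ∈ B → x ∈ A ∧ x ∈ B := fun hmA hmB =>
    ⟨hA hxm hmA, hB hxm hmB⟩
  have := mem_union.1 hm.1
  have := mem_symmDiff.1 hx
  exact ⟨m, hm, mem_symmDiff.2 (by tauto)⟩

theorem exists_minimal_mem_symmDiff (hE : IsLowerSet (E : Set β)) (hF : IsLowerSet (F : Set β))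
    (h : E ≠ F) : ∃ m ∈ E ∆ F, ∀ y < m, y ∈ E ∩ F := by
  obtain ⟨x, hx⟩ := symmDiff_nonempty.2 h
  obtain ⟨m, -, hm⟩ := exists_le_minimal (E ∆ F) hx
  refine ⟨m, hm.1, fun y hym => ?_⟩
  by_contra hy
  have hyEF : y ∈ E ∪ F := by
    rcases mem_union.1 (symmDiff_subset_union hm.1) with hmE | hmF
    exacts [mem_union_left _ (hE hym.le hmE), mem_union_right _ (hF hym.le hmF)]
  refine hm.not_lt (mem_symmDiff.2 ?_) hym
  simp only [mem_union, mem_inter] at hyEF hy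
  tauto

end LowerSets

section LowerInterval

open scoped Classical

variable {β : Type*} [PartialOrder β] [DecidableEq β] {E F A B I : Finset β} {m : β}

noncomputable def lowerSetsBetween (E A : Finset β) : Finset (Finset β) :=
  {I ∈ A.powerset | IsLowerSet (I : Set β) ∧ E ⊆ I}

theorem mem_lowerSetsBetween :
    I ∈ lowerSetsBetween E A ↔ IsLowerSet (I : Set β) ∧ E ⊆ I ∧ I ⊆ A := by
  simp only [lowerSetsBetween, mem_filter, mem_powerset]
  tauto

noncomputable def lowerIntervalPoly (E A : Finset β) : ℤ[X] :=
  ∑ I ∈ lowerSetsBetween E A, X ^ #(A \ I)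

theorem lowerIntervalPoly_nonneg (E A : Finset β) :
    CoeffLE 0 (lowerIntervalPoly E A) := fun n => by
  rw [coeff_zero, lowerIntervalPoly, finsetSum_coeff]
  exact sum_nonneg fun I _ => by rw [coeff_X_pow]; split_ifs <;> norm_num

theorem lowerIntervalPoly_le_of_subset (h : E ⊆ F) :
    CoeffLE (lowerIntervalPoly F A) (lowerIntervalPoly E A) := fun n => by
  simp only [lowerIntervalPoly, finsetSum_coeff, coeff_X_pow]
  refine sum_le_sum_of_subset_of_nonneg (fun I hI => ?_) fun _ _ _ => by split_ifs <;> norm_num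
  obtain ⟨hI, hFI, hIA⟩ := mem_lowerSetsBetween.1 hI
  exact mem_lowerSetsBetween.2 ⟨hI, h.trans hFI, hIA⟩

theorem lowerIntervalPoly_eq_zero (h : ¬ E ⊆ A) : lowerIntervalPoly E A = 0 :=
  sum_eq_zero fun I hI => by
    obtain ⟨-, hEI, hIA⟩ := mem_lowerSetsBetween.1 hI
    exact absurd (hEI.trans hIA) h

theorem lowerIntervalPoly_eq_of_maximal (hA : IsLowerSet (A : Set β)) (hm : Maximal (· ∈ A) m) :
    lowerIntervalPoly E A = X * lowerIntervalPoly E (A.erase m)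
      + lowerIntervalPoly (E.erase m ∪ {x ∈ A | x < m}) (A.erase m) := by
  rw [lowerIntervalPoly, ← sum_filter_not_add_sum_filter _ (m ∈ ·)]
  congr 1
  · rw [lowerIntervalPoly, mul_sum]
    refine sum_congr ?_ fun I hI => ?_
    · ext I
      simp only [mem_filter, mem_lowerSetsBetween, subset_erase]
      tauto
    · have hmI : m ∉ I := (subset_erase.1 (mem_lowerSetsBetween.1 hI).2.2).2
      rw [erase_sdiff_comm, card_erase_of_mem (mem_sdiff.2 ⟨hm.1, hmI⟩), ← pow_succ',
        Nat.sub_add_cancel (card_pos.2 ⟨m, mem_sdiff.2 ⟨hm.1, hmI⟩⟩)]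
  · refine sum_nbij' (·.erase m) (insert m) (fun I hI => ?_) (fun J hJ => ?_)
      (fun I hI => insert_erase (mem_filter.1 hI).2) (fun J hJ => ?_) (fun I hI => ?_)
    · obtain ⟨hI, hmI⟩ := mem_filter.1 hI
      obtain ⟨hI, hEI, hIA⟩ := mem_lowerSetsBetween.1 hI
      refine mem_lowerSetsBetween.2 ⟨hI.erase_maximal hIA hm,
        union_subset (erase_subset_erase _ hEI) fun x hx => ?_, erase_subset_erase _ hIA⟩
      obtain ⟨hxA, hxm⟩ := mem_filter.1 hx
      exact mem_erase.2 ⟨hxm.ne, hI hxm.le hmI⟩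
    · obtain ⟨hJ, hEJ, hJA⟩ := mem_lowerSetsBetween.1 hJ
      refine mem_filter.2 ⟨mem_lowerSetsBetween.2 ⟨hJ.insert_of_lt fun y hy => ?_, ?_, ?_⟩,
        mem_insert_self m J⟩
      · exact hEJ (mem_union_right _ (mem_filter.2 ⟨hA hy.le hm.1, hy⟩))
      · intro x hx
        by_cases hxm : x = m
        · exact hxm ▸ mem_insert_self m J
        · exact mem_insert_of_mem (hEJ (mem_union_left _ (mem_erase.2 ⟨hxm, hx⟩)))
      · exact insert_subset hm.1 (hJA.trans (erase_subset m A))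
    · exact erase_insert (subset_erase.1 (mem_lowerSetsBetween.1 hJ).2.2).2
    · have hmI : m ∈ I := (mem_filter.1 hI).2
      rw [erase_sdiff_comm, sdiff_erase hm.1, erase_insert fun h => (mem_sdiff.1 h).2 hmI]

theorem lowerIntervalPoly_eq_add_insert (m : β) :
    lowerIntervalPoly F A = X ^ #{x ∈ A | m ≤ x} * lowerIntervalPoly F {x ∈ A | ¬ m ≤ x}
      + lowerIntervalPoly (insert m F) A := by
  rw [lowerIntervalPoly, ← sum_filter_not_add_sum_filter _ (m ∈ ·)]
  congr 1
  · rw [lowerIntervalPoly, mul_sum]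
    refine sum_congr ?_ fun I hI => ?_
    · ext I
      simp only [mem_filter, mem_lowerSetsBetween]
      constructor
      · rintro ⟨⟨hI, hFI, hIA⟩, hmI⟩
        exact ⟨hI, hFI, fun x hx => mem_filter.2 ⟨hIA hx, fun hmx => hmI (hI hmx hx)⟩⟩
      · rintro ⟨hI, hFI, hIA⟩
        exact ⟨⟨hI, hFI, hIA.trans (filter_subset _ _)⟩,
          fun hmI => (mem_filter.1 (hIA hmI)).2 le_rfl⟩
    · have hIA := (mem_lowerSetsBetween.1 hI).2.2
      rw [← pow_add, ← card_filter_add_card_filter_not (s := A \ I) (m ≤ ·)]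
      congr 3 <;> ext x <;> simp only [mem_filter, mem_sdiff]
      · exact ⟨fun h => ⟨h.1.1, h.2⟩,
          fun h => ⟨⟨h.1, fun hx => (mem_filter.1 (hIA hx)).2 h.2⟩, h.2⟩⟩
      · tauto
  · refine sum_congr ?_ fun _ _ => rfl
    ext I
    simp only [mem_filter, mem_lowerSetsBetween, insert_subset_iff]
    tauto

def Correlated (E A F B : Finset β) : Prop :=
  CoeffLE (lowerIntervalPoly E A * lowerIntervalPoly F B)
    (lowerIntervalPoly (E ∪ F) (A ∪ B) * lowerIntervalPoly (E ∩ F) (A ∩ B))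

theorem Correlated.symm (h : Correlated E A F B) : Correlated F B E A := by
  rwa [Correlated, mul_comm, union_comm, union_comm B, inter_comm, inter_comm B]

theorem correlated_self : Correlated E A E A := by
  rw [Correlated, union_self, union_self, inter_self, inter_self]
  exact CoeffLE.refl _

theorem correlated_of_not_subset (h : ¬ E ⊆ A) : Correlated E A F B := by
  have := (CoeffLE.refl 0).mul (.refl 0) (lowerIntervalPoly_nonneg (E ∪ F) (A ∪ B))
    (lowerIntervalPoly_nonneg (E ∩ F) (A ∩ B))
  rw [mul_zero] at this
  rwa [Correlated, lowerIntervalPoly_eq_zero h, zero_mul]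

theorem Correlated.of_erase_maximal (hA : IsLowerSet (A : Set β)) (hB : IsLowerSet (B : Set β))
    (hm : Maximal (· ∈ A ∪ B) m) (hmB : m ∉ B) (hmF : m ∉ F)
    (h₁ : Correlated E (A.erase m) F B)
    (h₂ : Correlated (E.erase m ∪ {x ∈ A | x < m}) (A.erase m) F B) :
    Correlated E A F B := by
  have hmA : m ∈ A := (mem_union.1 hm.1).resolve_right hmB
  have hAB : IsLowerSet (↑(A ∪ B) : Set β) := by rw [coe_union]; exact hA.union hB
  have hUnion : A.erase m ∪ B = (A ∪ B).erase m := by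
    rw [erase_union_distrib, erase_eq_of_notMem hmB]
  have hInter : A.erase m ∩ B = A ∩ B := by
    rw [erase_inter, erase_eq_of_notMem fun h => hmB (mem_inter.1 h).2]
  have hFloor :
      E.erase m ∪ {x ∈ A | x < m} ∪ F = (E ∪ F).erase m ∪ {x ∈ A ∪ B | x < m} := by
    ext x
    have : x ∈ B → x < m → x ∈ A := fun _ hx => hA hx.le hmA
    have : x ∈ F → x ≠ m := fun hx h => hmF (h ▸ hx)
    simp only [mem_union, mem_erase, mem_filter]
    tauto
  have hSub : E ∩ F ⊆ (E.erase m ∪ {x ∈ A | x < m}) ∩ F := fun x hx => by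
    obtain ⟨hxE, hxF⟩ := mem_inter.1 hx
    exact mem_inter.2 ⟨mem_union_left _ (mem_erase.2 ⟨fun h => hmF (h ▸ hxF), hxE⟩), hxF⟩
  unfold Correlated at *
  rw [hUnion, hInter] at h₁ h₂
  rw [hFloor] at h₂
  rw [lowerIntervalPoly_eq_of_maximal hA ⟨hmA, fun x hx => hm.2 (mem_union_left _ hx)⟩,
    lowerIntervalPoly_eq_of_maximal hAB hm, add_mul, add_mul, mul_assoc, mul_assoc]
  refine .add (by simpa only [pow_one] using h₁.X_pow_mul 1) (h₂.trans ?_)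
  exact (lowerIntervalPoly_nonneg _ _).mul (lowerIntervalPoly_nonneg _ _) (.refl _)
    (lowerIntervalPoly_le_of_subset hSub)

theorem Correlated.of_insert (hmE : m ∈ E) (h₁ : Correlated E A F {x ∈ A | ¬ m ≤ x})
    (h₂ : Correlated E A (insert m F) A) : Correlated E A F A := by
  unfold Correlated at *
  rw [union_eq_left.2 (filter_subset _ _), inter_eq_right.2 (filter_subset _ _)] at h₁
  rw [union_insert, insert_eq_of_mem (mem_union_left _ hmE), inter_insert_of_mem hmE] at h₂
  rw [union_self, inter_self] at h₂ ⊢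
  rw [lowerIntervalPoly_eq_add_insert m (F := F), lowerIntervalPoly_eq_add_insert m (F := E ∩ F),
    mul_add, mul_add, mul_left_comm, mul_left_comm (lowerIntervalPoly (E ∪ F) A)]
  exact (h₁.X_pow_mul _).add h₂

theorem card_filter_not_le_sdiff_lt (h : m ∈ A \ F) : #({x ∈ A | ¬ m ≤ x} \ F) < #(A \ F) :=
  card_lt_card <| (ssubset_iff_of_subset (sdiff_subset_sdiff (filter_subset _ _) le_rfl)).2
    ⟨m, h, fun hm => (mem_filter.1 (mem_sdiff.1 hm).1).2 le_rfl⟩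

variable (β) in
def CorrelatedBelow (n : ℕ) : Prop :=
  ∀ ⦃E A F B : Finset β⦄, IsLowerSet (E : Set β) → IsLowerSet (A : Set β) →
    IsLowerSet (F : Set β) → IsLowerSet (B : Set β) → #(A ∪ B) + #(A \ E) + #(B \ F) < n →
    Correlated E A F B

namespace CorrelatedBelow

variable {n : ℕ}

theorem correlated_of_erase_maximal (ih : CorrelatedBelow β n)
    (hn : #(A ∪ B) + #(A \ E) + #(B \ F) ≤ n) (hE : IsLowerSet (E : Set β))
    (hA : IsLowerSet (A : Set β)) (hF : IsLowerSet (F : Set β)) (hB : IsLowerSet (B : Set β))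
    (hEA : E ⊆ A) (hFB : F ⊆ B) (hm : Maximal (· ∈ A ∪ B) m) (hmB : m ∉ B) :
    Correlated E A F B := by
  have hmA : m ∈ A := (mem_union.1 hm.1).resolve_right hmB
  have hmax : Maximal (· ∈ A) m := ⟨hmA, fun x hx => hm.2 (mem_union_left _ hx)⟩
  have hA' := hA.erase_maximal subset_rfl hmax
  have hE' : IsLowerSet (↑(E.erase m ∪ {x ∈ A | x < m}) : Set β) := by
    rw [coe_union]
    exact (hE.erase_maximal hEA hmax).union (hA.finset_filter (isLowerSet_Iio m))
  have := card_erase_union_lt hmA hmB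
  refine .of_erase_maximal hA hB hm hmB (fun h => hmB (hFB h)) (ih hE hA' hF hB ?_)
    (ih hE' hA' hF hB ?_)
  · have := card_erase_sdiff_le (t := A) (erase_subset m E)
    omega
  · have := card_erase_sdiff_le (t := A) (subset_union_left (s₁ := E.erase m)
      (s₂ := {x ∈ A | x < m}))
    omega

theorem correlated_of_insert (ih : CorrelatedBelow β n) (hn : #A + #(A \ E) + #(A \ F) ≤ n)
    (hE : IsLowerSet (E : Set β)) (hA : IsLowerSet (A : Set β)) (hF : IsLowerSet (F : Set β))
    (hEA : E ⊆ A) (hmE : m ∈ E) (hmF : m ∉ F) (hlt : ∀ y < m, y ∈ F) :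
    Correlated E A F A := by
  have hmAF : m ∈ A \ F := mem_sdiff.2 ⟨hEA hmE, hmF⟩
  refine .of_insert hmE (ih hE hA hF (hA.finset_filter (isUpperSet_Ici m).compl) ?_)
    (ih hE hA (hF.insert_of_lt hlt) hA ?_)
  · have := card_filter_not_le_sdiff_lt hmAF
    rw [union_eq_left.2 (filter_subset _ _)]
    omega
  · have := card_erase_lt_of_mem hmAF
    rw [sdiff_insert, union_self]
    omega

end CorrelatedBelow

theorem correlated_of_isLowerSet (hE : IsLowerSet (E : Set β)) (hA : IsLowerSet (A : Set β))
    (hF : IsLowerSet (F : Set β)) (hB : IsLowerSet (B : Set β)) : Correlated E A F B := by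
  induction hn : #(A ∪ B) + #(A \ E) + #(B \ F) using Nat.strong_induction_on
    generalizing E A F B with
  | _ n ih =>
    replace ih : CorrelatedBelow β n := fun E A F B hE hA hF hB h => ih _ h hE hA hF hB rfl
    by_cases hEA : E ⊆ A
    swap; · exact correlated_of_not_subset hEA
    by_cases hFB : F ⊆ B
    swap; · exact (correlated_of_not_subset hFB).symm
    by_cases hAB : A = B
    · subst hAB
      by_cases hEF : E = F
      · subst hEF
        exact correlated_self
      obtain ⟨m, hm, hlt⟩ := exists_minimal_mem_symmDiff hE hF hEF
      rw [union_self] at hn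
      rcases mem_symmDiff.1 hm with ⟨hmE, hmF⟩ | ⟨hmF, hmE⟩
      · exact ih.correlated_of_insert hn.le hE hA hF hEA hmE hmF
          fun y hy => (mem_inter.1 (hlt y hy)).2
      · exact (ih.correlated_of_insert (by omega) hF hA hE hFB hmF hmE
          fun y hy => (mem_inter.1 (hlt y hy)).1).symm
    · obtain ⟨m, hm, hmAB⟩ := exists_maximal_mem_symmDiff hA hB hAB
      rcases mem_symmDiff.1 hmAB with ⟨-, hmB⟩ | ⟨-, hmA⟩
      · exact ih.correlated_of_erase_maximal hn.le hE hA hF hB hEA hFB hm hmB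
      · exact (ih.correlated_of_erase_maximal (by rw [union_comm]; omega) hF hB hE hA hFB hEA
          (by rwa [union_comm]) hmA).symm

end LowerInterval

section OrderPolynomial

variable {α : Type*} [DecidableEq α] {S : Finset α} {t : ℕ}

def lowerSetOfMap (f : S → Fin (t + 1)) : Finset (α × Fin t) :=
  {p ∈ S ×ˢ univ | ∃ h : p.1 ∈ S, (p.2 : ℕ) < t - f ⟨p.1, h⟩}

def mapOfLowerSet (I : Finset (α × Fin t)) (x : S) : Fin (t + 1) :=
  ⟨t - #{i | (x.1, i) ∈ I}, Nat.lt_succ_of_le (Nat.sub_le _ _)⟩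

theorem lowerSetOfMap_subset (f : S → Fin (t + 1)) : lowerSetOfMap f ⊆ S ×ˢ univ :=
  filter_subset _ _

theorem card_row_lowerSetOfMap (f : S → Fin (t + 1)) (x : S) :
    #{i | (x.1, i) ∈ lowerSetOfMap f} = t - f x := by
  rw [filter_congr fun i _ => (by simp [lowerSetOfMap, x.2] :
    (x.1, i) ∈ lowerSetOfMap f ↔ (i : ℕ) < t - f x), Fin.card_filter_val_lt,
    min_eq_right (Nat.sub_le _ _)]

theorem mapOfLowerSet_lowerSetOfMap (f : S → Fin (t + 1)) :
    mapOfLowerSet (lowerSetOfMap f) = f := by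
  funext x
  have := (f x).is_le
  ext
  simp only [mapOfLowerSet, card_row_lowerSetOfMap]
  omega

theorem card_product_univ_sdiff (I : Finset (α × Fin t)) :
    #(S ×ˢ univ \ I) = ∑ x : S, (mapOfLowerSet I x : ℕ) := by
  rw [sdiff_eq_filter, card_filter, sum_product, ← sum_coe_sort S]
  refine sum_congr rfl fun x _ => ?_
  have := card_filter_add_card_filter_not (s := (univ : Finset (Fin t))) (fun i => (x.1, i) ∈ I)
  rw [card_univ, Fintype.card_fin] at this
  rw [← card_filter]
  simp only [mapOfLowerSet]
  omega

variable [PartialOrder α]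

theorem lowerSetOfMap_mapOfLowerSet {I : Finset (α × Fin t)}
    (hI : IsLowerSet (I : Set (α × Fin t))) (hIS : I ⊆ S ×ˢ univ) :
    lowerSetOfMap (mapOfLowerSet (S := S) I) = I := by
  ext ⟨x, i⟩
  have hrow := Fin.lt_card_filter_univ_iff_apply_of_imp (j := i) (fun j => (x, j) ∈ I)
    fun _ _ hji hi => hI (Prod.mk_le_mk.2 ⟨le_rfl, hji⟩) hi
  have := card_le_univ {j | (x, j) ∈ I}
  rw [Fintype.card_fin] at this
  simp only [lowerSetOfMap, mapOfLowerSet, mem_filter, mem_product, mem_univ, and_true]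
  constructor
  · rintro ⟨-, -, hi⟩
    exact hrow.1 (by omega)
  · intro hxi
    have hx := (mem_product.1 (hIS hxi)).1
    exact ⟨hx, hx, by have := hrow.2 hxi; omega⟩

theorem isLowerSet_lowerSetOfMap (hS : IsLowerSet (S : Set α)) {f : S → Fin (t + 1)}
    (hf : Monotone f) : IsLowerSet (lowerSetOfMap f : Set (α × Fin t)) := by
  rintro ⟨x, i⟩ ⟨y, j⟩ ⟨hyx, hji⟩ hxi
  simp only [lowerSetOfMap, coe_filter, mem_product, mem_univ, and_true] at hxi ⊢
  obtain ⟨-, hx, hi⟩ := hxi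
  have hy : y ∈ S := hS hyx hx
  have : (f ⟨y, hy⟩ : ℕ) ≤ f ⟨x, hx⟩ :=
    hf (show (⟨y, hy⟩ : S) ≤ ⟨x, hx⟩ from hyx)
  refine ⟨hy, hy, ?_⟩
  dsimp only at hi hji ⊢
  rw [Fin.le_def] at hji
  omega

theorem monotone_mapOfLowerSet {I : Finset (α × Fin t)}
    (hI : IsLowerSet (I : Set (α × Fin t))) :
    Monotone (mapOfLowerSet (S := S) I) := fun x y hxy => by
  have : #{i | (y.1, i) ∈ I} ≤ #{i | (x.1, i) ∈ I} :=
    card_le_card fun i hi => by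
      simp only [mem_filter, mem_univ, true_and] at hi ⊢
      exact hI (Prod.mk_le_mk.2 ⟨hxy, le_rfl⟩) hi
  simp only [mapOfLowerSet, Fin.mk_le_mk]
  omega

theorem qOrderPoly_eq_lowerIntervalPoly [Fintype α] (hS : IsLowerSet (S : Set α)) (t : ℕ) :
    qOrderPoly S t = lowerIntervalPoly ∅ (S ×ˢ (univ : Finset (Fin t))) := by
  rw [qOrderPoly, lowerIntervalPoly]
  symm
  refine sum_nbij' mapOfLowerSet lowerSetOfMap (fun I hI => ?_) (fun f hf => ?_)
    (fun I hI => ?_) (fun f _ => mapOfLowerSet_lowerSetOfMap f)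
    (fun I _ => by rw [card_product_univ_sdiff])
  · simp only [mem_filter, mem_univ, true_and]
    exact fun a b hab => monotone_mapOfLowerSet (mem_lowerSetsBetween.1 hI).1 hab
  · simp only [mem_filter, mem_univ, true_and] at hf
    exact mem_lowerSetsBetween.2 ⟨isLowerSet_lowerSetOfMap hS fun a b hab => hf a b hab,
      empty_subset _, lowerSetOfMap_subset f⟩
  · obtain ⟨hI, -, hIS⟩ := mem_lowerSetsBetween.1 hI
    exact lowerSetOfMap_mapOfLowerSet hI hIS

end OrderPolynomial

/-- `q`-correlation inequality for order polynomials of lower ideals. -/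
theorem qOrderPoly_ideal_correlation {α : Type*} [Fintype α] [PartialOrder α] [DecidableEq α]
    (A B : Finset α)
    (hA : ∀ x ∈ A, ∀ y, y ≤ x → y ∈ A)
    (hB : ∀ x ∈ B, ∀ y, y ≤ x → y ∈ B)
    (t : ℕ) :
    ∀ n : ℕ,
      0 ≤ (qOrderPoly (A ∪ B) t * qOrderPoly (A ∩ B) t
            - qOrderPoly A t * qOrderPoly B t).coeff n := by
  intro n
  have hA' : IsLowerSet (A : Set α) := fun x y hyx hx => hA x hx y hyx
  have hB' : IsLowerSet (B : Set α) := fun x y hyx hx => hB x hx y hyx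
  have key := correlated_of_isLowerSet (E := ∅) (F := ∅) (A := A ×ˢ (univ : Finset (Fin t)))
    (B := B ×ˢ univ) (by simpa using isLowerSet_empty) (by simpa using hA'.prod isLowerSet_univ)
    (by simpa using isLowerSet_empty) (by simpa using hB'.prod isLowerSet_univ) n
  rw [coeff_sub, sub_nonneg, qOrderPoly_eq_lowerIntervalPoly hA',
    qOrderPoly_eq_lowerIntervalPoly hB',
    qOrderPoly_eq_lowerIntervalPoly (by simpa using hA'.union hB'),
    qOrderPoly_eq_lowerIntervalPoly (by simpa using hA'.inter hB')]
  simpa only [union_product, inter_product, union_self, inter_self] using key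
end

section
/- Let P = (X, ≺) be a finite poset, t ∈ ℕ, z ∈ X, and 1 ≤ k ≤ t−1. Let Ω(P,t;z,k) be the number of order-preserving maps f : X → {0,…,t} with f(z) = k. Then Ω(P,t;z,k)² ≥ Ω(P,t;z,k−1)·Ω(P,t;z,k+1). -/
/-!
If `f` and `g` are order preserving with `f z = k - 1` and `g z = k + 1`, then so are the
midpoints `⌈(f + g) / 2⌉` and `⌊(f + g) / 2⌋`, and both take the value `k` at `z`. The theorem
is therefore an instance of a discrete midpoint four functions inequality on the box `[0, t]^X`:
if `F x * G y ≤ H ⌈(x + y) / 2⌉ * K ⌊(x + y) / 2⌋` for all `x, y`, then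
`(∑ F) * (∑ G) ≤ (∑ H) * (∑ K)`. Since division on `ℤ` rounds down, the two midpoints are written
`(x + y + 1) / 2` and `(x + y) / 2`.

That inequality tensorises coordinate by coordinate, so only dimension one needs an argument.
There both products are sorted by antidiagonals `a + b = s`. On one antidiagonal the terms
`x a = φ a * γ (s - a)` satisfy `x a * x (a + d + 1) ≤ w d * w (d + 1)`, where `w` lists the terms
`η u * κ (s - u)` by increasing distance of `u` from `s / 2`; peeling off whichever end of the
antidiagonal is small enough, or both ends at once, gives `∑ x ≤ ∑ w`.
-/

/-- `Ω(P,t;z,k)`: the number of order-preserving maps `f : α → {0,…,t}` with `f(z) = k`. -/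
noncomputable def orderPolyAt {α : Type*} [PartialOrder α] (t : ℕ) (z : α) (k : ℕ) : ℕ :=
  Nat.card {f : α → Fin (t + 1) //
    (∀ a b : α, a ≤ b → f a ≤ f b) ∧ (f z : ℕ) = k}

open Finset Fintype Function

theorem Nat.add_le_add_of_mul_le_mul {u v p q : ℕ} (h : u * v ≤ p * q) (hu : q < u) (hv : q < v) :
    u + v ≤ p + q := by
  obtain ⟨u, rfl⟩ := Nat.exists_eq_add_of_lt hu
  obtain ⟨v, rfl⟩ := Nat.exists_eq_add_of_lt hv
  nlinarith

theorem sum_range_le_sum_range_of_mul_le {x : ℤ → ℕ} {w : ℕ → ℕ} (h₀ : ∀ a, x a ≤ w 0)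
    (h₁ : ∀ a (d : ℕ), x a * x (a + d + 1) ≤ w d * w (d + 1)) :
    ∀ (n : ℕ) (a : ℤ), ∑ i ∈ range n, x (a + i) ≤ ∑ e ∈ range n, w e
  | 0, _ => by simp
  | 1, a => by simpa using h₀ a
  | d + 2, a => by
    have peel_left (k : ℕ) :
        ∑ i ∈ range (k + 1), x (a + i) = x a + ∑ i ∈ range k, x (a + 1 + i) := by
      rw [sum_range_succ', add_comm, Nat.cast_zero, add_zero]
      congr 1
      exact sum_congr rfl fun i _ => by push_cast; ring_nf
    have peel_right : ∑ i ∈ range (d + 2), x (a + i) =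
        ∑ i ∈ range (d + 1), x (a + i) + x (a + d + 1) := by
      rw [sum_range_succ]; push_cast; ring_nf
    have hw : ∑ e ∈ range (d + 2), w e = ∑ e ∈ range d, w e + (w d + w (d + 1)) := by
      rw [sum_range_succ, sum_range_succ, add_assoc]
    by_cases hl : x a ≤ w (d + 1)
    · rw [peel_left, sum_range_succ _ (d + 1)]
      linarith [sum_range_le_sum_range_of_mul_le h₀ h₁ (d + 1) (a + 1)]
    by_cases hr : x (a + d + 1) ≤ w (d + 1)
    · rw [peel_right, sum_range_succ _ (d + 1)]
      linarith [sum_range_le_sum_range_of_mul_le h₀ h₁ (d + 1) a]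
    have ends := Nat.add_le_add_of_mul_le_mul (h₁ a d) (by omega) (by omega)
    rw [peel_right, peel_left, hw]
    linarith [sum_range_le_sum_range_of_mul_le h₀ h₁ d (a + 1)]

/-- The integers by increasing distance from `s / 2`, ties broken upwards. -/
def nearHalf (s : ℤ) (e : ℕ) : ℤ := if (s + e) % 2 = 0 then (s - e) / 2 else (s + e + 1) / 2

theorem nearHalf_zero (s : ℤ) : nearHalf s 0 = (s + 1) / 2 := by
  unfold nearHalf; split_ifs <;> omega

theorem nearHalf_injective (s : ℤ) : Injective (nearHalf s) := by
  intro d e h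
  unfold nearHalf at h
  split_ifs at h <;> omega

theorem mul_nearHalf_succ (y : ℤ → ℕ) (s : ℤ) (d : ℕ) :
    y (nearHalf s d) * y (nearHalf s (d + 1)) = y ((s + d + 2) / 2) * y ((s - d) / 2) := by
  obtain ⟨h, h'⟩ | ⟨h, h'⟩ : nearHalf s d = (s + d + 2) / 2 ∧ nearHalf s (d + 1) = (s - d) / 2 ∨
      nearHalf s d = (s - d) / 2 ∧ nearHalf s (d + 1) = (s + d + 2) / 2 := by
    unfold nearHalf; push_cast; split_ifs <;> omega
  · rw [h, h']
  · rw [h, h', mul_comm]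

theorem sum_Icc_mul_sub_le_of_midpoint {m M : ℤ} {φ γ η κ : ℤ → ℕ} (hη : η.support ⊆ Set.Icc m M)
    (h : ∀ a b, φ a * γ b ≤ η ((a + b + 1) / 2) * κ ((a + b) / 2)) (s : ℤ) :
    ∑ a ∈ Icc m M, φ a * γ (s - a) ≤ ∑ u ∈ Icc m M, η u * κ (s - u) := by
  set y : ℤ → ℕ := fun u => η u * κ (s - u)
  have h₀ : ∀ a, φ a * γ (s - a) ≤ y (nearHalf s 0) := by
    intro a
    simpa [y, nearHalf_zero, show s - (s + 1) / 2 = s / 2 by omega] using h a (s - a)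
  have h₁ : ∀ a (d : ℕ), φ a * γ (s - a) * (φ (a + d + 1) * γ (s - (a + d + 1))) ≤
      y (nearHalf s d) * y (nearHalf s (d + 1)) := by
    intro a d
    -- exchanging the two `φ` factors gives pairs with sums `s + (d + 1)` and `s - (d + 1)`
    have hfar : φ (a + d + 1) * γ (s - a) ≤ η ((s + d + 2) / 2) * κ (s - (s - d) / 2) := by
      convert h (a + d + 1) (s - a) using 3 <;> omega
    have hnear : φ a * γ (s - (a + d + 1)) ≤ η ((s - d) / 2) * κ (s - (s + d + 2) / 2) := by
      convert h a (s - (a + d + 1)) using 3 <;> omega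
    rw [mul_nearHalf_succ]
    calc φ a * γ (s - a) * (φ (a + d + 1) * γ (s - (a + d + 1)))
        = φ (a + d + 1) * γ (s - a) * (φ a * γ (s - (a + d + 1))) := by ring
      _ ≤ _ := Nat.mul_le_mul hfar hnear
      _ = y ((s + d + 2) / 2) * y ((s - d) / 2) := by ring
  calc ∑ a ∈ Icc m M, φ a * γ (s - a)
      = ∑ i ∈ range (M + 1 - m).toNat, φ (m + i) * γ (s - (m + i)) := by
        rw [Int.Icc_eq_finset_map, sum_map]; rfl
    _ ≤ ∑ e ∈ range (M + 1 - m).toNat, y (nearHalf s e) :=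
        sum_range_le_sum_range_of_mul_le h₀ h₁ _ _
    _ = ∑ u ∈ (range (M + 1 - m).toNat).image (nearHalf s), y u :=
        (sum_image fun _ _ _ _ hde => nearHalf_injective s hde).symm
    _ ≤ ∑ u ∈ Icc m M, y u :=
        sum_le_sum_of_ne_zero fun u _ hu => by simpa using hη (left_ne_zero_of_mul hu)

theorem sum_Icc_sub_eq_sum_Icc {R : Type*} [AddCommMonoid R] {m M a : ℤ} {γ : ℤ → R}
    (hγ : γ.support ⊆ Set.Icc m M) (ha : a ∈ Icc m M) :
    ∑ s ∈ Icc (m + m) (M + M), γ (s - a) = ∑ b ∈ Icc m M, γ b := by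
  rw [mem_Icc] at ha
  have hshift : Icc (m + m) (M + M) = (Icc (m + m - a) (M + M - a)).map (addRightEmbedding a) := by
    simp
  rw [hshift, sum_map]
  simp only [addRightEmbedding_apply, add_sub_cancel_right]
  refine (sum_subset (Icc_subset_Icc (by linarith) (by linarith)) fun b _ hb => ?_).symm
  exact notMem_support.mp fun hb' => hb (by simpa using hγ hb')

theorem sum_mul_sum_eq_sum_sum_sub {R : Type*} [NonUnitalNonAssocSemiring R] {m M : ℤ}
    (φ γ : ℤ → R) (hγ : γ.support ⊆ Set.Icc m M) :
    (∑ a ∈ Icc m M, φ a) * ∑ b ∈ Icc m M, γ b =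
      ∑ s ∈ Icc (m + m) (M + M), ∑ a ∈ Icc m M, φ a * γ (s - a) := by
  rw [sum_comm, sum_mul]
  refine sum_congr rfl fun a ha => ?_
  rw [← mul_sum, sum_Icc_sub_eq_sum_Icc hγ ha]

theorem sum_mul_sum_le_of_midpoint {m M : ℤ} {φ γ η κ : ℤ → ℕ} (hγ : γ.support ⊆ Set.Icc m M)
    (hη : η.support ⊆ Set.Icc m M) (hκ : κ.support ⊆ Set.Icc m M)
    (h : ∀ a b, φ a * γ b ≤ η ((a + b + 1) / 2) * κ ((a + b) / 2)) :
    (∑ a ∈ Icc m M, φ a) * ∑ b ∈ Icc m M, γ b ≤ (∑ a ∈ Icc m M, η a) * ∑ b ∈ Icc m M, κ b := by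
  rw [sum_mul_sum_eq_sum_sum_sub φ γ hγ, sum_mul_sum_eq_sum_sum_sub η κ hκ]
  exact sum_le_sum fun s _ => sum_Icc_mul_sub_le_of_midpoint hη h s

theorem sum_piFinset_fin_succ {α R : Type*} [AddCommMonoid R] {n : ℕ} (s : Finset α)
    (f : (Fin (n + 1) → α) → R) :
    ∑ x ∈ piFinset fun _ => s, f x = ∑ x ∈ piFinset fun _ => s, ∑ a ∈ s, f (Fin.cons a x) := by
  rw [← sum_product_right']
  refine sum_nbij' (fun x => (x 0, Fin.tail x)) (fun p => Fin.cons p.1 p.2) ?_ ?_ ?_ ?_ ?_ <;>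
    simp [Fin.forall_fin_succ, Fin.tail]

theorem sum_piFinset_comp_equiv {ι κ α R : Type*} [Fintype ι] [Fintype κ] [DecidableEq ι]
    [DecidableEq κ] [AddCommMonoid R] (e : ι ≃ κ) (s : Finset α) (f : (ι → α) → R) :
    ∑ x ∈ piFinset fun _ => s, f x = ∑ y ∈ piFinset fun _ => s, f (y ∘ e) := by
  refine sum_nbij' (· ∘ e.symm) (· ∘ e) ?_ ?_ ?_ ?_ ?_ <;> simp [comp_def]
  · exact fun x hx i => hx _
  · exact fun x hx i => hx _

theorem cons_mem_univ_pi_Icc {m M : ℤ} {n : ℕ} {a : ℤ} {y : Fin n → ℤ} :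
    (Fin.cons a y : Fin (n + 1) → ℤ) ∈ Set.univ.pi (fun _ => Set.Icc m M) ↔
      a ∈ Set.Icc m M ∧ y ∈ Set.univ.pi fun _ => Set.Icc m M := by
  simp only [Set.mem_univ_pi, Fin.forall_fin_succ, Fin.cons_zero, Fin.cons_succ]

theorem support_sum_cons_subset {m M : ℤ} {n : ℕ} {G : (Fin (n + 1) → ℤ) → ℕ}
    (hG : G.support ⊆ Set.univ.pi fun _ => Set.Icc m M) :
    (support fun y => ∑ a ∈ Icc m M, G (Fin.cons a y)) ⊆ Set.univ.pi fun _ => Set.Icc m M := by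
  intro y hy
  obtain ⟨a, -, ha⟩ := exists_ne_zero_of_sum_ne_zero hy
  exact (cons_mem_univ_pi_Icc.mp (hG ha)).2

theorem support_cons_subset {m M : ℤ} {n : ℕ} {G : (Fin (n + 1) → ℤ) → ℕ}
    (hG : G.support ⊆ Set.univ.pi fun _ => Set.Icc m M) (y : Fin n → ℤ) :
    (support fun a => G (Fin.cons a y)) ⊆ Set.Icc m M := fun _ ha =>
  (cons_mem_univ_pi_Icc.mp (hG ha)).1

theorem cons_zipWith {α β γ : Type*} {n : ℕ} (g : α → β → γ) (a : α) (b : β) (x : Fin n → α)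
    (y : Fin n → β) :
    (fun i => g ((Fin.cons a x : Fin (n + 1) → α) i) ((Fin.cons b y : Fin (n + 1) → β) i)) =
      Fin.cons (g a b) fun i => g (x i) (y i) := by
  funext i
  refine Fin.cases ?_ (fun i => ?_) i <;> simp

theorem sum_mul_sum_le_of_midpoint_fin {m M : ℤ} {n : ℕ} {F G H K : (Fin n → ℤ) → ℕ}
    (hG : G.support ⊆ Set.univ.pi fun _ => Set.Icc m M)
    (hH : H.support ⊆ Set.univ.pi fun _ => Set.Icc m M)
    (hK : K.support ⊆ Set.univ.pi fun _ => Set.Icc m M)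
    (h : ∀ x y, F x * G y ≤ H (fun i => (x i + y i + 1) / 2) * K (fun i => (x i + y i) / 2)) :
    (∑ x ∈ piFinset fun _ => Icc m M, F x) * ∑ y ∈ piFinset fun _ => Icc m M, G y ≤
      (∑ x ∈ piFinset fun _ => Icc m M, H x) * ∑ y ∈ piFinset fun _ => Icc m M, K y := by
  induction n with
  | zero =>
    simp only [piFinset_of_isEmpty, univ_unique, sum_singleton]
    convert h default default
  | succ n ih =>
    simp only [sum_piFinset_fin_succ (n := n)]
    refine ih (support_sum_cons_subset hG) (support_sum_cons_subset hH)
      (support_sum_cons_subset hK) fun x y => ?_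
    refine sum_mul_sum_le_of_midpoint (support_cons_subset hG y) (support_cons_subset hH _)
      (support_cons_subset hK _) fun a b => ?_
    have := h (Fin.cons a x) (Fin.cons b y)
    rwa [cons_zipWith (fun u v => (u + v + 1) / 2), cons_zipWith (fun u v => (u + v) / 2)] at this

theorem sum_mul_sum_le_of_midpoint_pi {ι : Type*} [Fintype ι] [DecidableEq ι] {m M : ℤ}
    {F G H K : (ι → ℤ) → ℕ}
    (hG : G.support ⊆ Set.univ.pi fun _ => Set.Icc m M)
    (hH : H.support ⊆ Set.univ.pi fun _ => Set.Icc m M)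
    (hK : K.support ⊆ Set.univ.pi fun _ => Set.Icc m M)
    (h : ∀ x y, F x * G y ≤ H (fun i => (x i + y i + 1) / 2) * K (fun i => (x i + y i) / 2)) :
    (∑ x ∈ piFinset fun _ => Icc m M, F x) * ∑ y ∈ piFinset fun _ => Icc m M, G y ≤
      (∑ x ∈ piFinset fun _ => Icc m M, H x) * ∑ y ∈ piFinset fun _ => Icc m M, K y := by
  have e := Fintype.equivFin ι
  have comp_support {J : (ι → ℤ) → ℕ} (hJ : J.support ⊆ Set.univ.pi fun _ => Set.Icc m M) :
      (support fun y : Fin _ → ℤ => J (y ∘ e)) ⊆ Set.univ.pi fun _ => Set.Icc m M :=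
    fun y hy j => by simpa using hJ hy (e.symm j)
  simp only [sum_piFinset_comp_equiv e]
  exact sum_mul_sum_le_of_midpoint_fin (comp_support hG) (comp_support hH) (comp_support hK)
    fun x y => h (x ∘ e) (y ∘ e)

def orderLevel (α : Type*) [Preorder α] (t : ℕ) (z : α) (c : ℤ) : Set (α → ℤ) :=
  {x | Monotone x ∧ (∀ a, x a ∈ Set.Icc 0 (t : ℤ)) ∧ x z = c}

theorem support_indicator_orderLevel_subset {α M : Type*} [Preorder α] [Zero M] (t : ℕ) (z : α)
    (c : ℤ) (f : (α → ℤ) → M) :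
    ((orderLevel α t z c).indicator f).support ⊆ Set.univ.pi fun _ => Set.Icc 0 (t : ℤ) :=
  fun _ hx a _ => (Set.support_indicator_subset hx).2.1 a

theorem half_add_mem_orderLevel {α : Type*} [Preorder α] {t : ℕ} {z : α} {c r : ℤ}
    {x y : α → ℤ} (hx : x ∈ orderLevel α t z (c - 1)) (hy : y ∈ orderLevel α t z (c + 1))
    (hr₀ : 0 ≤ r) (hr₁ : r ≤ 1) :
    (fun a => (x a + y a + r) / 2) ∈ orderLevel α t z c := by
  obtain ⟨hxm, hxb, hxz⟩ := hx
  obtain ⟨hym, hyb, hyz⟩ := hy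
  refine ⟨fun a b hab => Int.ediv_le_ediv two_pos (by linarith [hxm hab, hym hab]),
    fun a => ?_, ?_⟩
  · have := hxb a; have := hyb a
    simp only [Set.mem_Icc] at *
    omega
  · simp only [hxz, hyz]
    omega

theorem indicator_orderLevel_mul_le {α : Type*} [Preorder α] (t : ℕ) (z : α) (c : ℤ)
    (x y : α → ℤ) :
    (orderLevel α t z (c - 1)).indicator 1 x * (orderLevel α t z (c + 1)).indicator 1 y ≤
      (orderLevel α t z c).indicator (1 : (α → ℤ) → ℕ) (fun a => (x a + y a + 1) / 2) *
        (orderLevel α t z c).indicator 1 (fun a => (x a + y a) / 2) := by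
  by_cases hx : x ∈ orderLevel α t z (c - 1)
  · by_cases hy : y ∈ orderLevel α t z (c + 1)
    · have hup := half_add_mem_orderLevel hx hy zero_le_one le_rfl
      have hdown : (fun a => (x a + y a) / 2) ∈ orderLevel α t z c := by
        simpa using half_add_mem_orderLevel hx hy le_rfl zero_le_one
      simp [hx, hy, hup, hdown]
    · simp [hy]
  · simp [hx]

theorem orderPolyAt_eq_sum_indicator {α : Type*} [Fintype α] [DecidableEq α] [PartialOrder α]
    (t : ℕ) (z : α) (k : ℕ) :
    orderPolyAt t z k =
      ∑ x ∈ piFinset fun _ => Icc (0 : ℤ) t, (orderLevel α t z k).indicator 1 x := by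
  classical
  rw [orderPolyAt, Nat.card_eq_fintype_card, Fintype.card_subtype]
  simp only [Set.indicator_apply, Pi.one_apply, sum_boole, Nat.cast_id]
  refine card_nbij' (fun f a => ((f a : ℕ) : ℤ)) (fun x a => Fin.ofNat (t + 1) (x a).toNat)
    ?_ ?_ ?_ ?_
  · intro f hf
    simp only [coe_filter, mem_univ, true_and, Set.mem_ofPred_eq] at hf
    have hb (a : α) : 0 ≤ ((f a : ℕ) : ℤ) ∧ ((f a : ℕ) : ℤ) ≤ t := by have := (f a).is_le; omega
    simp only [coe_filter, mem_piFinset, Set.mem_ofPred_eq, orderLevel, Set.mem_Icc, mem_Icc]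
    exact ⟨hb, fun a b hab => by simpa using hf.1 a b hab, hb, by rw [hf.2]⟩
  · intro x hx
    rw [mem_coe, mem_filter, mem_piFinset] at hx
    obtain ⟨hb, hm, -, hz⟩ := hx
    have hval (a : α) : (Fin.ofNat (t + 1) (x a).toNat : ℕ) = (x a).toNat := by
      rw [Fin.val_ofNat, Nat.mod_eq_of_lt]; have := mem_Icc.mp (hb a); omega
    simp only [coe_filter, mem_univ, true_and, Set.mem_ofPred_eq, Fin.le_def, hval]
    exact ⟨fun a b hab => by have := hm hab; omega, by omega⟩
  · simp [Set.LeftInvOn]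
  · intro x hx
    rw [mem_coe, mem_filter, mem_piFinset] at hx
    funext a
    have := mem_Icc.mp (hx.1 a)
    simp only [Fin.val_ofNat]
    rw [Nat.mod_eq_of_lt (by omega)]
    omega

theorem daykin_daykin_paterson_general {α : Type*} [Fintype α] [PartialOrder α]
    (t : ℕ) (z : α) (k : ℕ) (hk : 1 ≤ k) :
    orderPolyAt (α := α) t z k * orderPolyAt (α := α) t z k ≥
      orderPolyAt (α := α) t z (k - 1) * orderPolyAt (α := α) t z (k + 1) := by
  classical
  simp only [ge_iff_le, orderPolyAt_eq_sum_indicator, Nat.cast_sub hk, Nat.cast_add, Nat.cast_one]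
  exact sum_mul_sum_le_of_midpoint_pi (support_indicator_orderLevel_subset t z _ 1)
    (support_indicator_orderLevel_subset t z _ 1) (support_indicator_orderLevel_subset t z _ 1)
    (indicator_orderLevel_mul_le t z k)

/-- **Daykin–Daykin–Paterson inequality** (log-concavity in the value at `z`). -/
theorem daykin_daykin_paterson {α : Type*} [Fintype α] [PartialOrder α]
    (t : ℕ) (z : α) (k : ℕ) (hk : 1 ≤ k) (hk' : k ≤ t - 1) :
    orderPolyAt (α := α) t z k * orderPolyAt (α := α) t z k ≥
      orderPolyAt (α := α) t z (k - 1) * orderPolyAt (α := α) t z (k + 1) :=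
  daykin_daykin_paterson_general t z k hk
end

section
/- Let P = (X, ≺) be a finite poset with X = {x₁,…,x_n}, t ∈ ℕ, z ∈ X, k ≥ 0, and integers a, b ≥ 1 with k+a+b ≤ t. Define Ω_q(P,t;z,m) := Σ_f q₁^{f(x₁)}⋯q_n^{f(x_n)}, summed over order-preserving f : X → {0,…,t} with f(z) = m. Then Ω_q(P,t;z,k+a)·Ω_q(P,t;z,k+b) − Ω_q(P,t;z,k)·Ω_q(P,t;z,k+a+b) has all nonnegative coefficients as a polynomial in q₁,…,q_n. -/
/-!
The coefficient of `q^d` in `Ω_q(P,t;z,m₁) Ω_q(P,t;z,m₂)` counts the pairs `(f, g)` of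
order-preserving maps with `f z = m₁`, `g z = m₂` and `f + g = d`. The pairs with
`(f z, g z) = (k, k + a + b)` inject into those with `(f z, g z) = (k + a, k + b)`: on the smallest
region around `z` that has to be swapped for both maps to stay order-preserving, replace `(f, g)`
by `(g - b, f + b)`, and leave the pair unchanged elsewhere. On that region `f + b ≤ g`, so the
values stay in `{0,…,t}` and `f + g` is preserved; the new pair has the same region, so the swap is
an involution, hence injective.
-/

open scoped Classical in
/-- `Ω_q(P,t;z,m) = Σ_f Π_x q_x^{f(x)}`, summed over order-preserving maps
`f : α → {0,…,t}` with `f(z) = m`, with one variable `q_x` per element `x`. -/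
noncomputable def qOrderPolyAt {α : Type*} [Fintype α] [PartialOrder α]
    (t : ℕ) (z : α) (m : ℕ) : MvPolynomial α ℤ :=
  ∑ f ∈ Finset.univ.filter
      (fun f : α → Fin (t + 1) =>
        (∀ a b : α, a ≤ b → f a ≤ f b) ∧ (f z : ℕ) = m),
    ∏ x : α, MvPolynomial.X x ^ (f x : ℕ)

namespace DaykinDaykinPaterson

section Toggle

variable {α : Type*} [Preorder α] {b : ℕ} {z : α} {p : (α → ℕ) × (α → ℕ)}

/-- `w` is forced into the region when it is comparable to a point `u` of it and the swapped
values at `u` would break monotonicity against the unswapped values at `w`. -/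
inductive ToggleRegion (b : ℕ) (z : α) (p : (α → ℕ) × (α → ℕ)) : α → Prop
  | base : ToggleRegion b z p z
  | up {u w : α} : ToggleRegion b z p u → u ≤ w →
      (p.1 w + b < p.2 u ∨ p.2 w < p.1 u + b) → ToggleRegion b z p w
  | down {u w : α} : ToggleRegion b z p u → w ≤ u →
      (p.2 u < p.1 w + b ∨ p.1 u + b < p.2 w) → ToggleRegion b z p w

open Classical in
noncomputable def toggle (b : ℕ) (z : α) (p : (α → ℕ) × (α → ℕ)) : (α → ℕ) × (α → ℕ) :=
  (fun x => if ToggleRegion b z p x then p.2 x - b else p.1 x,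
   fun x => if ToggleRegion b z p x then p.1 x + b else p.2 x)

theorem toggle_apply_of_toggleRegion {x : α} (hx : ToggleRegion b z p x) :
    (toggle b z p).1 x = p.2 x - b ∧ (toggle b z p).2 x = p.1 x + b := by
  simp [toggle, hx]

theorem toggle_apply_of_not_toggleRegion {x : α} (hx : ¬ToggleRegion b z p x) :
    (toggle b z p).1 x = p.1 x ∧ (toggle b z p).2 x = p.2 x := by
  simp [toggle, hx]

theorem toggle_apply_self : (toggle b z p).1 z = p.2 z - b ∧ (toggle b z p).2 z = p.1 z + b :=
  toggle_apply_of_toggleRegion .base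

variable (hf : Monotone p.1) (hg : Monotone p.2)
include hf hg

theorem monotone_toggle : Monotone (toggle b z p).1 ∧ Monotone (toggle b z p).2 := by
  refine ⟨fun x y hxy => ?_, fun x y hxy => ?_⟩ <;>
  · have := hf hxy; have := hg hxy
    by_cases hx : ToggleRegion b z p x <;> by_cases hy : ToggleRegion b z p y <;>
      simp only [toggle, hx, hy, if_true, if_false]
    · omega
    · have : ¬(p.1 y + b < p.2 x ∨ p.2 y < p.1 x + b) := fun hc => hy (.up hx hxy hc)
      omega
    · have : ¬(p.2 y < p.1 x + b ∨ p.1 y + b < p.2 x) := fun hc => hx (.down hy hxy hc)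
      omega
    · omega

variable (hz : p.1 z + b ≤ p.2 z)
include hz

theorem add_le_of_toggleRegion {x : α} (hx : ToggleRegion b z p x) : p.1 x + b ≤ p.2 x := by
  induction hx with
  | base => exact hz
  | up _ hle _ _ | down _ hle _ _ => have := hf hle; have := hg hle; omega

theorem toggle_add_toggle (x : α) :
    (toggle b z p).1 x + (toggle b z p).2 x = p.1 x + p.2 x := by
  by_cases hx : ToggleRegion b z p x
  · have := add_le_of_toggleRegion hf hg hz hx
    have := toggle_apply_of_toggleRegion hx
    omega
  · have := toggle_apply_of_not_toggleRegion hx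
    omega

theorem toggle_le_max (x : α) :
    max ((toggle b z p).1 x) ((toggle b z p).2 x) ≤ max (p.1 x) (p.2 x) := by
  by_cases hx : ToggleRegion b z p x
  · have := add_le_of_toggleRegion hf hg hz hx
    have := toggle_apply_of_toggleRegion hx
    omega
  · have := toggle_apply_of_not_toggleRegion hx
    omega

theorem toggleRegion_toggle_iff {x : α} :
    ToggleRegion b z (toggle b z p) x ↔ ToggleRegion b z p x := by
  constructor <;> intro hx
  · induction hx with
    | base => exact .base
    | @up u w _ hle hc hu | @down u w _ hle hc hu =>
      by_contra hw
      have := hf hle; have := hg hle; have := add_le_of_toggleRegion hf hg hz hu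
      have := toggle_apply_of_toggleRegion (b := b) hu
      have := toggle_apply_of_not_toggleRegion hw
      omega
  · induction hx with
    | base => exact .base
    | @up u w hu hle hc ih =>
      have hw : ToggleRegion b z p w := .up hu hle hc
      have := hg hle; have := add_le_of_toggleRegion hf hg hz hu
      have := toggle_apply_of_toggleRegion hu; have := toggle_apply_of_toggleRegion hw
      exact .up ih hle (by omega)
    | @down u w hu hle hc ih =>
      have hw : ToggleRegion b z p w := .down hu hle hc
      have := hf hle; have := add_le_of_toggleRegion hf hg hz hu
      have := toggle_apply_of_toggleRegion hu; have := toggle_apply_of_toggleRegion hw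
      exact .down ih hle (by omega)

theorem toggle_toggle : toggle b z (toggle b z p) = p := by
  have hR {x : α} := toggleRegion_toggle_iff hf hg hz (x := x)
  have (x : α) : (toggle b z (toggle b z p)).1 x = p.1 x ∧
      (toggle b z (toggle b z p)).2 x = p.2 x := by
    by_cases hx : ToggleRegion b z p x
    · have := toggle_apply_of_toggleRegion (hR.2 hx); have := toggle_apply_of_toggleRegion hx
      have := add_le_of_toggleRegion hf hg hz hx
      omega
    · have := toggle_apply_of_not_toggleRegion (mt hR.1 hx)
      have := toggle_apply_of_not_toggleRegion hx
      omega
  exact Prod.ext (funext fun x => (this x).1) (funext fun x => (this x).2)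

end Toggle

theorem injOn_toggle {α : Type*} [Preorder α] (b : ℕ) (z : α) :
    Set.InjOn (toggle b z) {p | Monotone p.1 ∧ Monotone p.2 ∧ p.1 z + b ≤ p.2 z} :=
  Set.LeftInvOn.injOn fun _ hp => toggle_toggle hp.1 hp.2.1 hp.2.2

section MonotoneSplit

variable {α : Type*} [Preorder α]

structure IsMonotoneSplit (z : α) (m₁ m₂ : ℕ) (d : α → ℕ) (q : (α → ℕ) × (α → ℕ)) : Prop where
  monotone_fst : Monotone q.1
  monotone_snd : Monotone q.2
  fst_self : q.1 z = m₁
  snd_self : q.2 z = m₂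
  fst_add_snd : ∀ x, q.1 x + q.2 x = d x

variable {z : α} {k a b : ℕ} {d : α → ℕ} {q : (α → ℕ) × (α → ℕ)}

theorem IsMonotoneSplit.add_le (hq : IsMonotoneSplit z k (k + a + b) d q) : q.1 z + b ≤ q.2 z := by
  rw [hq.fst_self, hq.snd_self]; omega

theorem IsMonotoneSplit.toggle (hq : IsMonotoneSplit z k (k + a + b) d q) :
    IsMonotoneSplit z (k + a) (k + b) d (toggle b z q) := by
  have hself := toggle_apply_self (b := b) (z := z) (p := q)
  obtain ⟨hf, hg⟩ := monotone_toggle (b := b) (z := z) hq.monotone_fst hq.monotone_snd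
  refine ⟨hf, hg, ?_, ?_, fun x => ?_⟩
  · rw [hself.1, hq.snd_self]; omega
  · rw [hself.2, hq.fst_self]
  · rw [toggle_add_toggle hq.monotone_fst hq.monotone_snd hq.add_le, hq.fst_add_snd]

end MonotoneSplit

section Clamp

variable {α : Type*} {t : ℕ}

def natPair : (α → Fin (t + 1)) × (α → Fin (t + 1)) → (α → ℕ) × (α → ℕ) :=
  Prod.map (Fin.val ∘ ·) (Fin.val ∘ ·)

def clampPair (t : ℕ) (q : (α → ℕ) × (α → ℕ)) : (α → Fin (t + 1)) × (α → Fin (t + 1)) :=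
  (fun x => Fin.clamp (q.1 x) t, fun x => Fin.clamp (q.2 x) t)

theorem natPair_injective : Function.Injective (natPair (α := α) (t := t)) :=
  Fin.val_injective.comp_left.prodMap Fin.val_injective.comp_left

theorem natPair_clampPair {q : (α → ℕ) × (α → ℕ)} (h : ∀ x, max (q.1 x) (q.2 x) ≤ t) :
    natPair (clampPair t q) = q := by
  ext x <;> simp only [natPair, clampPair, Prod.map, Function.comp_apply, Fin.coe_clamp,
    min_eq_left_iff]
  exacts [le_of_max_le_left (h x), le_of_max_le_right (h x)]

theorem natPair_clampPair_toggle [Preorder α] {b : ℕ} {z : α}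
    {p : (α → Fin (t + 1)) × (α → Fin (t + 1))} (hf : Monotone (natPair p).1)
    (hg : Monotone (natPair p).2) (hz : (natPair p).1 z + b ≤ (natPair p).2 z) :
    natPair (clampPair t (toggle b z (natPair p))) = toggle b z (natPair p) :=
  natPair_clampPair fun x =>
    (toggle_le_max hf hg hz x).trans (max_le (p.1 x).is_le (p.2 x).is_le)

end Clamp

open MvPolynomial Finset

theorem coeff_prod_X_pow {σ R : Type*} [Fintype σ] [CommSemiring R] (e : σ → ℕ) (d : σ →₀ ℕ) :
    coeff d (∏ x, X x ^ e x : MvPolynomial σ R) = if ∀ x, e x = d x then 1 else 0 := by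
  classical
  have : (∏ x, X x ^ e x : MvPolynomial σ R) = monomial (Finsupp.equivFunOnFinite.symm e) 1 := by
    rw [← prod_X_pow_eq_monomial]
    exact (prod_subset (subset_univ _) (by simp +contextual)).symm
  simp only [this, coeff_monomial, Finsupp.ext_iff, Finsupp.coe_equivFunOnFinite_symm]

variable {α : Type*} [Fintype α] [PartialOrder α]

open Classical in
noncomputable def splitPairs (t : ℕ) (z : α) (m₁ m₂ : ℕ) (d : α → ℕ) :
    Finset ((α → Fin (t + 1)) × (α → Fin (t + 1))) :=
  univ.filter fun p => IsMonotoneSplit z m₁ m₂ d (natPair p)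

theorem mem_splitPairs {t : ℕ} {z : α} {m₁ m₂ : ℕ} {d : α → ℕ}
    {p : (α → Fin (t + 1)) × (α → Fin (t + 1))} :
    p ∈ splitPairs t z m₁ m₂ d ↔ IsMonotoneSplit z m₁ m₂ d (natPair p) := by
  simp [splitPairs]

theorem coeff_qOrderPolyAt_mul (t : ℕ) (z : α) (m₁ m₂ : ℕ) (d : α →₀ ℕ) :
    coeff d (qOrderPolyAt t z m₁ * qOrderPolyAt t z m₂) = #(splitPairs t z m₁ m₂ d) := by
  simp only [qOrderPolyAt, sum_mul_sum, ← sum_product', coeff_sum, ← prod_mul_distrib, ← pow_add,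
    coeff_prod_X_pow, sum_boole]
  congr 2
  ext p
  simp only [mem_splitPairs, mem_filter, mem_product, mem_univ, true_and]
  exact ⟨fun ⟨⟨⟨hf, hfz⟩, hg, hgz⟩, hd⟩ => ⟨fun _ _ => hf _ _, fun _ _ => hg _ _, hfz, hgz, hd⟩,
    fun h => ⟨⟨⟨fun x y => @h.1 x y, h.3⟩, fun x y => @h.2 x y, h.4⟩, h.5⟩⟩

theorem card_splitPairs_le (t : ℕ) (z : α) (k a b : ℕ) (d : α → ℕ) :
    #(splitPairs t z k (k + a + b) d) ≤ #(splitPairs t z (k + a) (k + b) d) := by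
  have hnat {p} (hp : IsMonotoneSplit z k (k + a + b) d (natPair (t := t) p)) :=
    natPair_clampPair_toggle hp.monotone_fst hp.monotone_snd hp.add_le
  refine card_le_card_of_injOn (fun p => clampPair t (toggle b z (natPair p)))
    (fun p hp => ?_) (fun p hp p' hp' h => ?_) <;>
    simp only [mem_coe, mem_splitPairs] at *
  · rw [hnat hp]
    exact hp.toggle
  · apply natPair_injective
    apply injOn_toggle b z ⟨hp.monotone_fst, hp.monotone_snd, hp.add_le⟩
      ⟨hp'.monotone_fst, hp'.monotone_snd, hp'.add_le⟩
    rw [← hnat hp, ← hnat hp', h]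

end DaykinDaykinPaterson

theorem multivariate_daykin_daykin_paterson_general {α : Type*} [Fintype α] [PartialOrder α]
    (t : ℕ) (z : α) (k a b : ℕ) :
    ∀ d : α →₀ ℕ,
      0 ≤ MvPolynomial.coeff d
        (qOrderPolyAt t z (k + a) * qOrderPolyAt t z (k + b)
          - qOrderPolyAt t z k * qOrderPolyAt t z (k + a + b)) := by
  intro d
  rw [MvPolynomial.coeff_sub, sub_nonneg, DaykinDaykinPaterson.coeff_qOrderPolyAt_mul,
    DaykinDaykinPaterson.coeff_qOrderPolyAt_mul]
  exact_mod_cast DaykinDaykinPaterson.card_splitPairs_le t z k a b d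

/-- **Multivariate Daykin–Daykin–Paterson inequality.** -/
theorem multivariate_daykin_daykin_paterson {α : Type*} [Fintype α] [PartialOrder α]
    (t : ℕ) (z : α) (k a b : ℕ) (ha : 1 ≤ a) (hb : 1 ≤ b) (h : k + a + b ≤ t) :
    ∀ d : α →₀ ℕ,
      0 ≤ MvPolynomial.coeff d
        (qOrderPolyAt t z (k + a) * qOrderPolyAt t z (k + b)
          - qOrderPolyAt t z k * qOrderPolyAt t z (k + a + b)) :=
  multivariate_daykin_daykin_paterson_general t z k a b
end
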